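/- arXiv:1701.02589 — 6 statements merged into one kernel-verified Lean document; each statement's English description precedes it below -/
import Mathlib

section
/- Every continuous topologically transitive map f on a compact interval [a,b] has a fixed point in the interior (a,b). -/
open Set Function Topology Filter

/-- Every continuous transitive map on a compact interval has a fixed point
in the interior of the interval. -/
theorem transitive_has_interior_fixed_point
    (a b : ℝ) (hab : a < b) (f : ℝ → ℝ)
    (hf : ContinuousOn f (Set.Icc a b)) (hmaps : Set.MapsTo f (Set.Icc a b) (Set.Icc a b))
    (htrans : ∀ U V : Set ℝ, IsOpen U → IsOpen V →
      (U ∩ Set.Icc a b).Nonempty → (V ∩ Set.Icc a b).Nonempty →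
      ∃ k : ℕ, 1 ≤ k ∧ ((f^[k] '' (U ∩ Set.Icc a b)) ∩ (V ∩ Set.Icc a b)).Nonempty) :
    ∃ z ∈ Set.Ioo a b, f z = z := by
  by_contra h
  push_neg at h
  set c := (a + b) / 2 with hc
  have hca : a < c := by simp only [hc]; linarith
  have hcb : c < b := by simp only [hc]; linarith
  have hcI : c ∈ Ioo a b := ⟨hca, hcb⟩
  have hIoosub : Ioo a b ⊆ Icc a b := Ioo_subset_Icc_self
  have hg : ContinuousOn (fun t => f t - t) (Icc a b) := hf.sub continuousOn_id
  -- if the sign of f x - x differs at two interior points, IVT gives a fixed point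
  have ivt : ∀ x ∈ Ioo a b, ∀ y ∈ Ioo a b, f x < x → y < f y → False := by
    intro x hx y hy hx' hy'
    have hsub : uIcc y x ⊆ Ioo a b := Set.ordConnected_Ioo.uIcc_subset hy hx
    have hcont : ContinuousOn (fun t => f t - t) (uIcc y x) :=
      hg.mono (hsub.trans hIoosub)
    have h0 : (0 : ℝ) ∈ uIcc ((fun t => f t - t) y) ((fun t => f t - t) x) := by
      simp only
      constructor
      · simp [min_le_iff]; right; linarith
      · simp [le_max_iff]; left; linarith
    obtain ⟨z, hz, hz0⟩ := intermediate_value_uIcc hcont h0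
    have : f z = z := by linarith [hz0, sub_eq_zero.mp hz0]
    exact h z (hsub hz) this
  have key : (∀ x ∈ Ioo a b, x < f x) ∨ (∀ x ∈ Ioo a b, f x < x) := by
    rcases lt_or_gt_of_ne (h c hcI) with hcase | hcase
    · right
      intro x hx
      rcases lt_or_gt_of_ne (h x hx) with h' | h'
      · exact h'
      · exact absurd (ivt c hcI x hx hcase h') (fun t => t)
    · left
      intro x hx
      rcases lt_or_gt_of_ne (h x hx) with h' | h'
      · exact absurd (ivt x hx c hcI h' hcase) (fun t => t)
      · exact h'
  have hbmem : b ∈ Icc a b := right_mem_Icc.2 hab.le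
  have hamem : a ∈ Icc a b := left_mem_Icc.2 hab.le
  rcases key with hpos | hneg
  · -- f x > x on the interior, so f b = b and [c,b] is forward invariant
    have hbne : (𝓝[Ioo a b] b).NeBot := by
      rw [← mem_closure_iff_nhdsWithin_neBot, closure_Ioo hab.ne]
      exact hbmem
    have hfb : f b = b := by
      have ht : Filter.Tendsto f (𝓝[Ioo a b] b) (𝓝 (f b)) :=
        (hf b hbmem).mono_left (nhdsWithin_mono _ hIoosub)
      have hid : Filter.Tendsto (fun x : ℝ => x) (𝓝[Ioo a b] b) (𝓝 b) :=
        Filter.tendsto_id.mono_right nhdsWithin_le_nhds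
      have hble : b ≤ f b := by
        refine le_of_tendsto_of_tendsto hid ht ?_
        filter_upwards [self_mem_nhdsWithin] with x hx
        exact (hpos x hx).le
      exact le_antisymm ((hmaps hbmem).2) hble
    have hinv : ∀ x ∈ Icc c b, f x ∈ Icc c b := by
      intro x hx
      rcases eq_or_lt_of_le hx.2 with heq | hlt
      · rw [heq, hfb]; exact ⟨hcb.le, le_rfl⟩
      · have hxI : x ∈ Ioo a b := ⟨lt_of_lt_of_le hca hx.1, hlt⟩
        exact ⟨le_of_lt (lt_of_le_of_lt hx.1 (hpos x hxI)),
          (hmaps (hIoosub hxI)).2⟩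
    have hiter : ∀ k : ℕ, ∀ x ∈ Icc c b, f^[k] x ∈ Icc c b := by
      intro k
      induction k with
      | zero => intro x hx; simpa using hx
      | succ n ih =>
        intro x hx
        rw [Function.iterate_succ_apply']
        exact hinv _ (ih x hx)
    obtain ⟨k, -, y, ⟨x, ⟨hxc, hxI⟩, rfl⟩, hyV, -⟩ :=
      htrans (Ioi c) (Iio c) isOpen_Ioi isOpen_Iio
        ⟨b, hcb, hbmem⟩ ⟨a, hca, hamem⟩
    have : f^[k] x ∈ Icc c b := hiter k x ⟨le_of_lt hxc, hxI.2⟩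
    exact absurd hyV (not_lt.2 this.1)
  · -- f x < x on the interior, so f a = a and [a,c] is forward invariant
    have hane : (𝓝[Ioo a b] a).NeBot := by
      rw [← mem_closure_iff_nhdsWithin_neBot, closure_Ioo hab.ne]
      exact hamem
    have hfa : f a = a := by
      have ht : Filter.Tendsto f (𝓝[Ioo a b] a) (𝓝 (f a)) :=
        (hf a hamem).mono_left (nhdsWithin_mono _ hIoosub)
      have hid : Filter.Tendsto (fun x : ℝ => x) (𝓝[Ioo a b] a) (𝓝 a) :=
        Filter.tendsto_id.mono_right nhdsWithin_le_nhds
      have hale : f a ≤ a := by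
        refine le_of_tendsto_of_tendsto ht hid ?_
        filter_upwards [self_mem_nhdsWithin] with x hx
        exact (hneg x hx).le
      exact le_antisymm hale ((hmaps hamem).1)
    have hinv : ∀ x ∈ Icc a c, f x ∈ Icc a c := by
      intro x hx
      rcases eq_or_lt_of_le hx.1 with heq | hlt
      · rw [← heq, hfa]; exact ⟨le_rfl, hca.le⟩
      · have hxI : x ∈ Ioo a b := ⟨hlt, lt_of_le_of_lt hx.2 hcb⟩
        exact ⟨(hmaps (hIoosub hxI)).1,
          le_of_lt (lt_of_lt_of_le (hneg x hxI) hx.2)⟩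
    have hiter : ∀ k : ℕ, ∀ x ∈ Icc a c, f^[k] x ∈ Icc a c := by
      intro k
      induction k with
      | zero => intro x hx; simpa using hx
      | succ n ih =>
        intro x hx
        rw [Function.iterate_succ_apply']
        exact hinv _ (ih x hx)
    obtain ⟨k, -, y, ⟨x, ⟨hxc, hxI⟩, rfl⟩, hyV, -⟩ :=
      htrans (Iio c) (Ioi c) isOpen_Iio isOpen_Ioi
        ⟨a, hca, hamem⟩ ⟨b, hcb, hbmem⟩
    have : f^[k] x ∈ Icc a c := hiter k x ⟨hxI.1, le_of_lt hxc⟩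
    exact absurd hyV (not_lt.2 this.2)
end

section
/- Let f : [a,b] → [a,b] be a continuous transitive map with a fixed point z and a point c ≠ z such that f(c) ≤ c < z or z < c ≤ f(c). Then f has periodic points of every period n ≥ 1. -/
open Set Function

lemma contOn_iter {f : ℝ → ℝ} {A : Set ℝ} (hf : ContinuousOn f A) (hm : Set.MapsTo f A A) :
    ∀ n : ℕ, ContinuousOn (f^[n]) A := by
  intro n
  induction n with
  | zero => simpa using continuousOn_id
  | succ k ih =>
      rw [Function.iterate_succ']
      exact ContinuousOn.comp hf ih (hm.iterate k)

lemma pullback {f : ℝ → ℝ} {p q u v α β : ℝ}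
    (hf : ContinuousOn f (Icc p q)) (huv : u ≤ v)
    (hα : α ∈ Icc p q) (hβ : β ∈ Icc p q) (hfα : f α = u) (hfβ : f β = v) :
    ∃ P Q : ℝ, P ≤ Q ∧ Icc P Q ⊆ Icc p q ∧ f '' Icc P Q = Icc u v := by
  rcases le_total α β with hab | hab
  · -- increasing orientation
    have hsub0 : Icc α β ⊆ Icc p q := Icc_subset_Icc hα.1 hβ.2
    set B : Set ℝ := Icc α β ∩ f ⁻¹' {v} with hBdef
    have hBclosed : IsClosed B :=
      (hf.mono hsub0).preimage_isClosed_of_isClosed isClosed_Icc isClosed_singleton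
    have hBne : B.Nonempty := ⟨β, ⟨⟨hab, le_rfl⟩, hfβ⟩⟩
    have hBbdd : BddBelow B := ⟨α, fun t ht => ht.1.1⟩
    set β' := sInf B with hβ'def
    have hβ'B : β' ∈ B := hBclosed.csInf_mem hBne hBbdd
    have hfβ' : f β' = v := hβ'B.2
    have hαβ' : α ≤ β' := hβ'B.1.1
    have hβ'β : β' ≤ β := hβ'B.1.2
    set A : Set ℝ := Icc α β' ∩ f ⁻¹' {u} with hAdef
    have hsub1 : Icc α β' ⊆ Icc p q := Icc_subset_Icc hα.1 (hβ'β.trans hβ.2)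
    have hAclosed : IsClosed A :=
      (hf.mono hsub1).preimage_isClosed_of_isClosed isClosed_Icc isClosed_singleton
    have hAne : A.Nonempty := ⟨α, ⟨⟨le_rfl, hαβ'⟩, hfα⟩⟩
    have hAbdd : BddAbove A := ⟨β', fun t ht => ht.1.2⟩
    set α' := sSup A with hα'def
    have hα'A : α' ∈ A := hAclosed.csSup_mem hAne hAbdd
    have hfα' : f α' = u := hα'A.2
    have hα'β' : α' ≤ β' := hα'A.1.2
    have hsub2 : Icc α' β' ⊆ Icc p q := fun t ht =>
      hsub1 ⟨hα'A.1.1.trans ht.1, ht.2⟩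
    refine ⟨α', β', hα'β', hsub2, ?_⟩
    apply Set.Subset.antisymm
    · rintro y ⟨t, ht, rfl⟩
      constructor
      · by_contra hlt
        push_neg at hlt
        have hcont : ContinuousOn f (Icc t β') := hf.mono (fun r hr => hsub2 ⟨ht.1.trans hr.1, hr.2⟩)
        have : u ∈ f '' Icc t β' := by
          apply intermediate_value_Icc ht.2 hcont
          exact ⟨le_of_lt hlt, by rw [hfβ']; exact huv⟩
        obtain ⟨r, hr, hfr⟩ := this
        have hrA : r ∈ A := ⟨⟨(hα'A.1.1.trans ht.1).trans hr.1, hr.2⟩, hfr⟩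
        have : r ≤ α' := le_csSup hAbdd hrA
        have hteq : t = α' := le_antisymm (by linarith [hr.1, ht.1]) ht.1
        rw [hteq, hfα'] at hlt
        exact lt_irrefl u hlt
      · by_contra hlt
        push_neg at hlt
        have hcont : ContinuousOn f (Icc α' t) := hf.mono (fun r hr => hsub2 ⟨hr.1, hr.2.trans ht.2⟩)
        have : v ∈ f '' Icc α' t := by
          apply intermediate_value_Icc ht.1 hcont
          exact ⟨by rw [hfα']; exact huv, le_of_lt hlt⟩
        obtain ⟨r, hr, hfr⟩ := this
        have hrB : r ∈ B := ⟨⟨hα'A.1.1.trans hr.1, (hr.2.trans ht.2).trans hβ'β⟩, hfr⟩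
        have : β' ≤ r := csInf_le hBbdd hrB
        have hteq : t = β' := le_antisymm ht.2 (by linarith [hr.2])
        rw [hteq, hfβ'] at hlt
        exact lt_irrefl v hlt
    · have hcont : ContinuousOn f (Icc α' β') := hf.mono hsub2
      have := intermediate_value_Icc hα'β' hcont
      rw [hfα', hfβ'] at this
      exact this
  · -- decreasing orientation
    have hsub0 : Icc β α ⊆ Icc p q := Icc_subset_Icc hβ.1 hα.2
    set A : Set ℝ := Icc β α ∩ f ⁻¹' {u} with hAdef
    have hAclosed : IsClosed A :=
      (hf.mono hsub0).preimage_isClosed_of_isClosed isClosed_Icc isClosed_singleton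
    have hAne : A.Nonempty := ⟨α, ⟨⟨hab, le_rfl⟩, hfα⟩⟩
    have hAbdd : BddBelow A := ⟨β, fun t ht => ht.1.1⟩
    set α' := sInf A with hα'def
    have hα'A : α' ∈ A := hAclosed.csInf_mem hAne hAbdd
    have hfα' : f α' = u := hα'A.2
    have hβα' : β ≤ α' := hα'A.1.1
    have hα'α : α' ≤ α := hα'A.1.2
    set B : Set ℝ := Icc β α' ∩ f ⁻¹' {v} with hBdef
    have hsub1 : Icc β α' ⊆ Icc p q := Icc_subset_Icc hβ.1 (hα'α.trans hα.2)
    have hBclosed : IsClosed B :=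
      (hf.mono hsub1).preimage_isClosed_of_isClosed isClosed_Icc isClosed_singleton
    have hBne : B.Nonempty := ⟨β, ⟨⟨le_rfl, hβα'⟩, hfβ⟩⟩
    have hBbdd : BddAbove B := ⟨α', fun t ht => ht.1.2⟩
    set β' := sSup B with hβ'def
    have hβ'B : β' ∈ B := hBclosed.csSup_mem hBne hBbdd
    have hfβ' : f β' = v := hβ'B.2
    have hβ'α' : β' ≤ α' := hβ'B.1.2
    have hsub2 : Icc β' α' ⊆ Icc p q := fun t ht =>
      hsub1 ⟨hβ'B.1.1.trans ht.1, ht.2⟩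
    refine ⟨β', α', hβ'α', hsub2, ?_⟩
    apply Set.Subset.antisymm
    · rintro y ⟨t, ht, rfl⟩
      constructor
      · by_contra hlt
        push_neg at hlt
        have hcont : ContinuousOn f (Icc β' t) := hf.mono (fun r hr => hsub2 ⟨hr.1, hr.2.trans ht.2⟩)
        have : u ∈ f '' Icc β' t := by
          apply intermediate_value_Icc' ht.1 hcont
          exact ⟨le_of_lt hlt, by rw [hfβ']; exact huv⟩
        obtain ⟨r, hr, hfr⟩ := this
        have hrA : r ∈ A := ⟨⟨hβ'B.1.1.trans hr.1, (hr.2.trans ht.2).trans hα'α⟩, hfr⟩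
        have : α' ≤ r := csInf_le hAbdd hrA
        have hteq : t = α' := le_antisymm ht.2 (by linarith [hr.2])
        rw [hteq, hfα'] at hlt
        exact lt_irrefl u hlt
      · by_contra hlt
        push_neg at hlt
        have hcont : ContinuousOn f (Icc t α') := hf.mono (fun r hr => hsub2 ⟨ht.1.trans hr.1, hr.2⟩)
        have : v ∈ f '' Icc t α' := by
          apply intermediate_value_Icc' ht.2 hcont
          exact ⟨by rw [hfα']; exact huv, le_of_lt hlt⟩
        obtain ⟨r, hr, hfr⟩ := this
        have hrB : r ∈ B := ⟨⟨hβ'B.1.1.trans (ht.1.trans hr.1), hr.2⟩, hfr⟩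
        have : r ≤ β' := le_csSup hBbdd hrB
        have hteq : t = β' := le_antisymm (by linarith [hr.1]) ht.1
        rw [hteq, hfβ'] at hlt
        exact lt_irrefl v hlt
    · have hcont : ContinuousOn f (Icc β' α') := hf.mono hsub2
      have := intermediate_value_Icc' hβ'α' hcont
      rw [hfα', hfβ'] at this
      exact this
lemma fold (a b : ℝ) (f : ℝ → ℝ)
    (hf : ContinuousOn f (Set.Icc a b)) (hmaps : Set.MapsTo f (Set.Icc a b) (Set.Icc a b))
    (x s d : ℝ) (hax : a ≤ x) (hdb : d ≤ b) (hxs : x < s) (hsd : s < d)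
    (h1 : f x ≤ s) (h2 : d ≤ f s) (h3 : f d ≤ x) :
    ∀ n : ℕ, 2 ≤ n → ∃ p ∈ Set.Icc a b, f^[n] p = p ∧ ∀ i : ℕ, 0 < i → i < n → f^[i] p ≠ p := by
  intro n hn
  have hsubJ : Icc s d ⊆ Icc a b := Icc_subset_Icc (hax.trans hxs.le) hdb
  have hsubI : Icc x s ⊆ Icc a b := Icc_subset_Icc hax (hsd.le.trans hdb)
  have hfJ : ContinuousOn f (Icc s d) := hf.mono hsubJ
  have hfI : ContinuousOn f (Icc x s) := hf.mono hsubI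
  have preJ : ∀ y, x ≤ y → y ≤ d → ∃ t ∈ Icc s d, f t = y := by
    intro y hy1 hy2
    have : y ∈ f '' Icc s d := by
      apply intermediate_value_Icc' hsd.le hfJ
      exact ⟨h3.trans hy1, hy2.trans h2⟩
    obtain ⟨t, ht, hft⟩ := this
    exact ⟨t, ht, hft⟩
  have preI : ∀ y, s ≤ y → y ≤ d → ∃ t ∈ Icc x s, f t = y := by
    intro y hy1 hy2
    have : y ∈ f '' Icc x s := by
      apply intermediate_value_Icc hxs.le hfI
      exact ⟨h1.trans hy1, hy2.trans h2⟩
    obtain ⟨t, ht, hft⟩ := this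
    exact ⟨t, ht, hft⟩
  have chain : ∀ m : ℕ, ∃ P Q : ℝ, P ≤ Q ∧ Icc P Q ⊆ Icc s d ∧
      (∀ k, k ≤ m → f^[k] '' Icc P Q ⊆ Icc s d) ∧ f^[m+1] '' Icc P Q = Icc x s := by
    intro m
    induction m with
    | zero =>
        obtain ⟨αt, hαt, hfαt⟩ := preJ x le_rfl (by linarith)
        obtain ⟨βt, hβt, hfβt⟩ := preJ s hxs.le (by linarith)
        obtain ⟨P, Q, hPQ, hsub, himg⟩ := pullback hfJ hxs.le hαt hβt hfαt hfβt
        refine ⟨P, Q, hPQ, hsub, ?_, ?_⟩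
        · intro k hk
          have : k = 0 := Nat.le_zero.mp hk
          subst this
          simpa using hsub
        · simpa using himg
    | succ m ih =>
        obtain ⟨P, Q, hPQ, hsub, hks, himg⟩ := ih
        have hPmem : P ∈ Icc s d := hsub ⟨le_rfl, hPQ⟩
        have hQmem : Q ∈ Icc s d := hsub ⟨hPQ, le_rfl⟩
        obtain ⟨αt, hαt, hfαt⟩ := preJ P (hxs.le.trans hPmem.1) hPmem.2
        obtain ⟨βt, hβt, hfβt⟩ := preJ Q (hxs.le.trans hQmem.1) hQmem.2
        obtain ⟨P', Q', hPQ', hsub', himg'⟩ := pullback hfJ hPQ hαt hβt hfαt hfβt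
        refine ⟨P', Q', hPQ', hsub', ?_, ?_⟩
        · intro k hk
          cases k with
          | zero => simpa using hsub'
          | succ j =>
              have hj : j ≤ m := Nat.succ_le_succ_iff.mp hk
              rw [Function.iterate_succ, Set.image_comp, himg']
              exact hks j hj
        · rw [Function.iterate_succ, Set.image_comp, himg']
          exact himg
  obtain ⟨P, Q, hPQ, hsubC, hks, himgI⟩ := chain (n - 2)
  have hPmem : P ∈ Icc s d := hsubC ⟨le_rfl, hPQ⟩
  have hQmem : Q ∈ Icc s d := hsubC ⟨hPQ, le_rfl⟩
  obtain ⟨αt, hαt, hfαt⟩ := preI P hPmem.1 hPmem.2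
  obtain ⟨βt, hβt, hfβt⟩ := preI Q hQmem.1 hQmem.2
  obtain ⟨P₀, Q₀, hPQ₀, hsub₀, himg₀⟩ := pullback hfI hPQ hαt hβt hfαt hfβt
  have hC₀J : ∀ k, 1 ≤ k → k ≤ n - 1 → f^[k] '' Icc P₀ Q₀ ⊆ Icc s d := by
    intro k hk1 hk2
    obtain ⟨j, rfl⟩ : ∃ j, k = j + 1 := ⟨k - 1, by omega⟩
    rw [Function.iterate_succ, Set.image_comp, himg₀]
    exact hks j (by omega)
  have hC₀n : f^[n] '' Icc P₀ Q₀ = Icc x s := by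
    have hneq : n = (n - 2) + 1 + 1 := by omega
    rw [hneq, Function.iterate_succ, Set.image_comp, himg₀]
    exact himgI
  have hgc : ContinuousOn (f^[n]) (Icc a b) := contOn_iter hf hmaps n
  have hsubC₀ : Icc P₀ Q₀ ⊆ Icc a b := fun t ht => hsubI (hsub₀ ht)
  have hP₀img : P₀ ∈ f^[n] '' Icc P₀ Q₀ := by
    rw [hC₀n]; exact hsub₀ ⟨le_rfl, hPQ₀⟩
  have hQ₀img : Q₀ ∈ f^[n] '' Icc P₀ Q₀ := by
    rw [hC₀n]; exact hsub₀ ⟨hPQ₀, le_rfl⟩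
  obtain ⟨A0, hA0, hgA0⟩ := hP₀img
  obtain ⟨B0, hB0, hgB0⟩ := hQ₀img
  have huIcc : uIcc A0 B0 ⊆ Icc P₀ Q₀ := by
    rw [Set.uIcc_eq_union]
    rintro t (ht | ht)
    · exact ⟨hA0.1.trans ht.1, ht.2.trans hB0.2⟩
    · exact ⟨hB0.1.trans ht.1, ht.2.trans hA0.2⟩
  have hcontg : ContinuousOn (fun t => f^[n] t - t) (uIcc A0 B0) :=
    (hgc.mono (huIcc.trans hsubC₀)).sub continuousOn_id
  have h0mem : (0:ℝ) ∈ uIcc (f^[n] A0 - A0) (f^[n] B0 - B0) := by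
    rw [hgA0, hgB0, Set.mem_uIcc]
    left
    constructor
    · linarith [hA0.1]
    · linarith [hB0.2]
  obtain ⟨p, hpmem, hp⟩ := intermediate_value_uIcc hcontg h0mem
  have hfp : f^[n] p = p := by
    have : f^[n] p - p = 0 := hp
    linarith
  have hpC₀ : p ∈ Icc P₀ Q₀ := huIcc hpmem
  refine ⟨p, hsubC₀ hpC₀, hfp, ?_⟩
  intro i hi0 hin hfi
  have hpI : p ∈ Icc x s := hsub₀ hpC₀
  have hiJ : f^[i] p ∈ Icc s d := (hC₀J i hi0 (by omega)) ⟨p, hpC₀, rfl⟩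
  rw [hfi] at hiJ
  have hps : p = s := le_antisymm hpI.2 hiJ.1
  have h1J : f^[1] p ∈ Icc s d := (hC₀J 1 le_rfl (by omega)) ⟨p, hpC₀, rfl⟩
  rw [Function.iterate_one] at h1J
  have hfs_eq : f s = d := by
    apply le_antisymm _ h2
    rw [← hps]
    exact h1J.2
  rcases Nat.lt_or_ge i 2 with hi2 | hi2
  · have : i = 1 := by omega
    subst this
    rw [Function.iterate_one, hps, hfs_eq] at hfi
    linarith
  · have h2J : f^[2] p ∈ Icc s d := (hC₀J 2 (by omega) (by omega)) ⟨p, hpC₀, rfl⟩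
    have h2eq : f^[2] p = f (f p) := by
      rw [Function.iterate_succ_apply', Function.iterate_one]
    rw [h2eq, hps, hfs_eq] at h2J
    linarith [h2J.1, h3]
section transHelpers

variable (a b : ℝ) (f : ℝ → ℝ)
variable (htrans : ∀ U V : Set ℝ, IsOpen U → IsOpen V →
      (U ∩ Set.Icc a b).Nonempty → (V ∩ Set.Icc a b).Nonempty →
      ∃ k : ℕ, 1 ≤ k ∧ ((f^[k] '' (U ∩ Set.Icc a b)) ∩ (V ∩ Set.Icc a b)).Nonempty)

include htrans

lemma notinv_half (p τ : ℝ) (hap : a ≤ p) (hτb : τ ≤ b) (hpτ : p < τ)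
    (hside : a < p ∨ τ < b)
    (hmapsto : ∀ y, y ∈ Ico p τ → f y ∈ Ico p τ) : False := by
  have hUIcc : Ioo p τ ∩ Icc a b = Ioo p τ :=
    inter_eq_left.mpr (fun t ht => ⟨hap.trans ht.1.le, ht.2.le.trans hτb⟩)
  have hiter : ∀ k : ℕ, f^[k] '' Ioo p τ ⊆ Ico p τ := by
    intro k
    induction k with
    | zero => simpa using Ioo_subset_Ico_self
    | succ j ih =>
        rw [Function.iterate_succ', Set.image_comp]
        rintro y ⟨t, ht, rfl⟩
        exact hmapsto t (ih ht)
  rcases hside with hside | hside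
  · obtain ⟨k, hk1, ⟨y, hy1, hy2⟩⟩ := htrans (Ioo p τ) (Ioo a p) isOpen_Ioo isOpen_Ioo
      (by rw [hUIcc]; exact ⟨(p+τ)/2, by constructor <;> linarith⟩)
      ⟨(a+p)/2, ⟨by constructor <;> linarith, by constructor <;> linarith⟩⟩
    rw [hUIcc] at hy1
    exact absurd (hiter k hy1).1 (not_le.mpr hy2.1.2)
  · obtain ⟨k, hk1, ⟨y, hy1, hy2⟩⟩ := htrans (Ioo p τ) (Ioo τ b) isOpen_Ioo isOpen_Ioo
      (by rw [hUIcc]; exact ⟨(p+τ)/2, by constructor <;> linarith⟩)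
      ⟨(τ+b)/2, ⟨by constructor <;> linarith, by constructor <;> linarith⟩⟩
    rw [hUIcc] at hy1
    exact absurd (hiter k hy1).2 (not_lt.mpr hy2.1.1.le)

lemma notinv_closed (p q : ℝ) (hap : a ≤ p) (hqb : q ≤ b) (hpq : p < q)
    (hside : a < p ∨ q < b)
    (hmapsto : Set.MapsTo f (Icc p q) (Icc p q)) : False := by
  have hUIcc : Ioo p q ∩ Icc a b = Ioo p q :=
    inter_eq_left.mpr (fun t ht => ⟨hap.trans ht.1.le, ht.2.le.trans hqb⟩)
  have hiter : ∀ k : ℕ, f^[k] '' Ioo p q ⊆ Icc p q := by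
    intro k
    induction k with
    | zero => simpa using Ioo_subset_Icc_self
    | succ j ih =>
        rw [Function.iterate_succ', Set.image_comp]
        rintro y ⟨t, ht, rfl⟩
        exact hmapsto (ih ht)
  rcases hside with hside | hside
  · obtain ⟨k, hk1, ⟨y, hy1, hy2⟩⟩ := htrans (Ioo p q) (Ioo a p) isOpen_Ioo isOpen_Ioo
      (by rw [hUIcc]; exact ⟨(p+q)/2, by constructor <;> linarith⟩)
      ⟨(a+p)/2, ⟨by constructor <;> linarith, by constructor <;> linarith⟩⟩
    rw [hUIcc] at hy1
    exact absurd (hiter k hy1).1 (not_le.mpr hy2.1.2)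
  · obtain ⟨k, hk1, ⟨y, hy1, hy2⟩⟩ := htrans (Ioo p q) (Ioo q b) isOpen_Ioo isOpen_Ioo
      (by rw [hUIcc]; exact ⟨(p+q)/2, by constructor <;> linarith⟩)
      ⟨(q+b)/2, ⟨by constructor <;> linarith, by constructor <;> linarith⟩⟩
    rw [hUIcc] at hy1
    exact absurd (hiter k hy1).2 (not_le.mpr hy2.1.1)

lemma not_id_on (p q : ℝ) (hap : a ≤ p) (hqb : q ≤ b) (hpq : p < q)
    (hid : ∀ t, t ∈ Ioo p q → f t = t) : False := by
  set m := (p+q)/2 with hm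
  have hpm : p < m := by rw [hm]; linarith
  have hmq : m < q := by rw [hm]; linarith
  have hUIcc : Ioo p m ∩ Icc a b = Ioo p m :=
    inter_eq_left.mpr (fun t ht => ⟨hap.trans ht.1.le, (ht.2.le.trans hmq.le).trans hqb⟩)
  have hiter : ∀ k : ℕ, ∀ t ∈ Ioo p m, f^[k] t = t := by
    intro k
    induction k with
    | zero => intro t _; simp
    | succ j ih =>
        intro t ht
        rw [Function.iterate_succ_apply', ih t ht]
        exact hid t ⟨ht.1, ht.2.trans hmq⟩
  obtain ⟨k, hk1, ⟨y, hy1, hy2⟩⟩ := htrans (Ioo p m) (Ioo m q) isOpen_Ioo isOpen_Ioo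
    (by rw [hUIcc]; exact ⟨(p+m)/2, by constructor <;> linarith⟩)
    ⟨(m+q)/2, ⟨by constructor <;> linarith, by constructor <;> linarith⟩⟩
  rw [hUIcc] at hy1
  obtain ⟨t, ht, rfl⟩ := hy1
  rw [hiter k t ht] at hy2
  exact absurd ht.2 (not_lt.mpr hy2.1.1.le)

end transHelpers
lemma core (a b : ℝ) (hab : a < b) (f : ℝ → ℝ)
    (hf : ContinuousOn f (Set.Icc a b)) (hmaps : Set.MapsTo f (Set.Icc a b) (Set.Icc a b))
    (htrans : ∀ U V : Set ℝ, IsOpen U → IsOpen V →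
      (U ∩ Set.Icc a b).Nonempty → (V ∩ Set.Icc a b).Nonempty →
      ∃ k : ℕ, 1 ≤ k ∧ ((f^[k] '' (U ∩ Set.Icc a b)) ∩ (V ∩ Set.Icc a b)).Nonempty)
    (w c' : ℝ) (haw : a ≤ w) (hwc : w < c') (hcb : c' ≤ b)
    (hfw : f w = w) (hpos : ∀ t, t ∈ Set.Ioc w c' → t < f t) :
    ∀ n : ℕ, 2 ≤ n → ∃ p ∈ Set.Icc a b, f^[n] p = p ∧ ∀ i : ℕ, 0 < i → i < n → f^[i] p ≠ p := by
  intro n hn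
  rcases eq_or_lt_of_le haw with rfl | haw'
  · -- w = a : left endpoint fixed
    have hfa : f a = a := hfw
    have anchor : ∀ c₀ : ℝ, f a < c₀ → ∃ δ : ℝ, 0 < δ ∧ δ ≤ b - a ∧
        ∀ t ∈ Icc a (a+δ), f t < c₀ := by
      intro c₀ hc₀
      have hcw : ContinuousWithinAt f (Icc a b) a := hf.continuousWithinAt (left_mem_Icc.mpr hab.le)
      have hev : {t | f t < c₀} ∈ nhdsWithin a (Icc a b) := hcw.eventually_lt_const hc₀
      obtain ⟨ε, hε, hball⟩ := Metric.mem_nhdsWithin_iff.mp hev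
      refine ⟨min (ε/2) (b - a), lt_min (by linarith) (by linarith), min_le_right _ _, ?_⟩
      intro t ht
      have ht1 : a ≤ t := ht.1
      have ht2 : t ≤ a + min (ε/2) (b - a) := ht.2
      have htb : t ≤ b := by
        have := min_le_right (ε/2) (b - a); linarith
      apply hball
      refine ⟨?_, ⟨ht1, htb⟩⟩
      rw [Metric.mem_ball, Real.dist_eq]
      rw [abs_lt]
      have := min_le_left (ε/2) (b - a)
      constructor <;> linarith
    obtain ⟨δ₂', hδ₂'pos, hδ₂'le, hδ₂'⟩ := anchor c' (by rw [hfa]; exact hwc)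
    set δ₂ := min δ₂' ((c' - a)/2) with hδ₂def
    have hδ₂pos : 0 < δ₂ := lt_min hδ₂'pos (by linarith)
    have hδ₂c : a + δ₂ < c' := by
      have := min_le_right δ₂' ((c' - a)/2); linarith
    have hδ₂prop : ∀ t ∈ Icc a (a+δ₂), f t < c' := by
      intro t ht
      have := min_le_left δ₂' ((c' - a)/2)
      exact hδ₂' t ⟨ht.1, by linarith [ht.2]⟩
    obtain ⟨δ₁', hδ₁'pos, hδ₁'le, hδ₁'⟩ := anchor (a + δ₂) (by rw [hfa]; linarith)
    set δ₁ := min δ₁' δ₂ with hδ₁def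
    have hδ₁pos : 0 < δ₁ := lt_min hδ₁'pos hδ₂pos
    have hδ₁le : δ₁ ≤ δ₂ := min_le_right _ _
    have hδ₁prop : ∀ t ∈ Icc a (a+δ₁), f t < a + δ₂ := by
      intro t ht
      have := min_le_left δ₁' δ₂
      exact hδ₁' t ⟨ht.1, by linarith [ht.2]⟩
    set ℓ := a + δ₁ with hℓdef
    have haℓ : a < ℓ := by rw [hℓdef]; linarith
    have hℓδ₂ : ℓ ≤ a + δ₂ := by rw [hℓdef]; linarith
    have hℓc : ℓ < c' := lt_of_le_of_lt hℓδ₂ hδ₂c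
    -- dips below ℓ, located in [c', b]
    have hdip : ∃ y ∈ Icc c' b, f y ≤ ℓ := by
      by_contra hno
      push_neg at hno
      apply notinv_closed a b f htrans ℓ b haℓ.le le_rfl (hℓc.trans_le hcb) (Or.inl haℓ)
      intro y hy
      refine ⟨?_, (hmaps ⟨haℓ.le.trans hy.1, hy.2⟩).2⟩
      by_cases hyc : y ≤ c'
      · exact hy.1.trans (hpos y ⟨haℓ.trans_le hy.1, hyc⟩).le
      · push_neg at hyc
        exact (hno y ⟨hyc.le, hy.2⟩).le
    -- first dip
    set D := Icc c' b ∩ f ⁻¹' (Iic ℓ) with hDdef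
    have hDclosed : IsClosed D :=
      (hf.mono (Icc_subset_Icc (haℓ.le.trans hℓc.le) le_rfl)).preimage_isClosed_of_isClosed
        isClosed_Icc isClosed_Iic
    have hDne : D.Nonempty := by
      obtain ⟨y, hy, hfy⟩ := hdip; exact ⟨y, hy, hfy⟩
    have hDbdd : BddBelow D := ⟨c', fun t ht => ht.1.1⟩
    set d := sInf D with hddef
    have hdD : d ∈ D := hDclosed.csInf_mem hDne hDbdd
    have hfd : f d ≤ ℓ := hdD.2
    have hdb : d ≤ b := hdD.1.2
    have hdc : c' < d := by
      rcases eq_or_lt_of_le hdD.1.1 with heq | h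
      · exfalso
        have := hpos c' ⟨hwc, le_rfl⟩
        rw [heq] at this
        linarith
      · exact h
    have hlow : ∀ y ∈ Ico ℓ d, ℓ ≤ f y := by
      intro y hy
      by_cases hyc : y ≤ c'
      · exact hy.1.trans (hpos y ⟨haℓ.trans_le hy.1, hyc⟩).le
      · push_neg at hyc
        by_contra hlt
        push_neg at hlt
        have hyD : y ∈ D := ⟨⟨hyc.le, hy.2.le.trans hdb⟩, hlt.le⟩
        exact absurd (csInf_le hDbdd hyD) (not_le.mpr hy.2)
    -- escape above d
    have hs : ∃ s ∈ Ico ℓ d, d ≤ f s := by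
      by_contra hno
      push_neg at hno
      apply notinv_half a b f htrans ℓ d haℓ.le hdb (hℓc.trans hdc) (Or.inl haℓ)
      intro y hy
      exact ⟨hlow y hy, hno y hy⟩
    obtain ⟨s, hsmem, hfs⟩ := hs
    have hsδ : a + δ₂ < s := by
      by_contra hle
      push_neg at hle
      have := hδ₂prop s ⟨haℓ.le.trans hsmem.1, hle⟩
      linarith
    set x := f d with hxdef
    have hdmem : d ∈ Icc a b := ⟨haℓ.le.trans (hℓc.le.trans hdc.le), hdb⟩
    have hxmem : x ∈ Icc a b := hmaps hdmem
    have hfx : f x < a + δ₂ := by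
      apply hδ₁prop
      exact ⟨hxmem.1, by rw [hℓdef] at hfd; exact hfd⟩
    exact fold a b f hf hmaps x s d hxmem.1 hdb
      (by linarith [hfd, hℓδ₂]) hsmem.2
      (le_of_lt (lt_trans hfx hsδ)) hfs le_rfl n hn
  · -- a < w
    have hwb : w < b := hwc.trans_le hcb
    have hdip : ∃ y ∈ Icc c' b, f y ≤ w := by
      by_contra hno
      push_neg at hno
      apply notinv_closed a b f htrans w b haw le_rfl hwb (Or.inl haw')
      intro y hy
      refine ⟨?_, (hmaps ⟨haw.trans hy.1, hy.2⟩).2⟩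
      rcases eq_or_lt_of_le hy.1 with heq | h
      · rw [← heq, hfw]
      · by_cases hyc : y ≤ c'
        · exact (hpos y ⟨h, hyc⟩).le.trans' h.le
        · push_neg at hyc
          exact (hno y ⟨hyc.le, hy.2⟩).le
    set D := Icc c' b ∩ f ⁻¹' (Iic w) with hDdef
    have hDclosed : IsClosed D :=
      (hf.mono (Icc_subset_Icc (haw.trans hwc.le) le_rfl)).preimage_isClosed_of_isClosed
        isClosed_Icc isClosed_Iic
    have hDne : D.Nonempty := by
      obtain ⟨y, hy, hfy⟩ := hdip; exact ⟨y, hy, hfy⟩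
    have hDbdd : BddBelow D := ⟨c', fun t ht => ht.1.1⟩
    set d := sInf D with hddef
    have hdD : d ∈ D := hDclosed.csInf_mem hDne hDbdd
    have hfd : f d ≤ w := hdD.2
    have hdb : d ≤ b := hdD.1.2
    have hdc : c' < d := by
      rcases eq_or_lt_of_le hdD.1.1 with heq | h
      · exfalso
        have := hpos c' ⟨hwc, le_rfl⟩
        rw [heq] at this
        linarith
      · exact h
    have hlow : ∀ y ∈ Ico w d, w ≤ f y := by
      intro y hy
      rcases eq_or_lt_of_le hy.1 with heq | h
      · rw [← heq, hfw]
      · by_cases hyc : y ≤ c'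
        · exact h.le.trans (hpos y ⟨h, hyc⟩).le
        · push_neg at hyc
          by_contra hlt
          push_neg at hlt
          have hyD : y ∈ D := ⟨⟨hyc.le, hy.2.le.trans hdb⟩, hlt.le⟩
          exact absurd (csInf_le hDbdd hyD) (not_le.mpr hy.2)
    have hs : ∃ s ∈ Ico w d, d ≤ f s := by
      by_contra hno
      push_neg at hno
      apply notinv_half a b f htrans w d haw hdb (hwc.trans hdc) (Or.inl haw')
      intro y hy
      exact ⟨hlow y hy, hno y hy⟩
    obtain ⟨s, hsmem, hfs⟩ := hs
    have hsw : w < s := by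
      rcases eq_or_lt_of_le hsmem.1 with heq | h
      · exfalso; rw [← heq, hfw] at hfs; linarith [hwc.trans hdc]
      · exact h
    have hx : ∃ t ∈ Ioo w s, f t ≤ s := by
      by_cases hex : ∃ t ∈ Ioo w s, f t ≤ s
      · exact hex
      · exfalso
        push_neg at hex
        set x₁ := (w + s)/2 with hx₁def
        have hx₁mem : x₁ ∈ Ioo w s := ⟨by rw [hx₁def]; linarith, by rw [hx₁def]; linarith⟩
        have hsub : Icc w x₁ ⊆ Icc a b :=
          Icc_subset_Icc haw (by linarith [hx₁mem.2, hsmem.2.le.trans hdb])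
        have : s ∈ f '' Icc w x₁ := by
          apply intermediate_value_Icc hx₁mem.1.le (hf.mono hsub)
          exact ⟨by rw [hfw]; exact hsw.le, (hex x₁ hx₁mem).le⟩
        obtain ⟨ξ, hξ, hfξ⟩ := this
        have hξw : w < ξ := by
          rcases eq_or_lt_of_le hξ.1 with heq | h
          · exfalso; rw [← heq, hfw] at hfξ; exact absurd hfξ (ne_of_lt hsw)
          · exact h
        have hξs : ξ ∈ Ioo w s := ⟨hξw, lt_of_le_of_lt hξ.2 hx₁mem.2⟩
        have := hex ξ hξs
        rw [hfξ] at this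
        exact lt_irrefl s this
    obtain ⟨x, hxmem, hfx⟩ := hx
    exact fold a b f hf hmaps x s d (haw.trans hxmem.1.le) hdb hxmem.2 hsmem.2
      hfx hfs (hfd.trans hxmem.1.le) n hn
lemma iter_neg (f : ℝ → ℝ) : ∀ (k : ℕ) (t : ℝ), (fun u => -f (-u))^[k] (-t) = - f^[k] t := by
  intro k
  induction k with
  | zero => intro t; simp
  | succ j ih =>
      intro t
      rw [Function.iterate_succ_apply, Function.iterate_succ_apply]
      simp only [neg_neg]
      exact ih (f t)

lemma mirror_core (a b : ℝ) (hab : a < b) (f : ℝ → ℝ)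
    (hf : ContinuousOn f (Set.Icc a b)) (hmaps : Set.MapsTo f (Set.Icc a b) (Set.Icc a b))
    (htrans : ∀ U V : Set ℝ, IsOpen U → IsOpen V →
      (U ∩ Set.Icc a b).Nonempty → (V ∩ Set.Icc a b).Nonempty →
      ∃ k : ℕ, 1 ≤ k ∧ ((f^[k] '' (U ∩ Set.Icc a b)) ∩ (V ∩ Set.Icc a b)).Nonempty)
    (w c' : ℝ) (hac : a ≤ c') (hcw : c' < w) (hwb : w ≤ b)
    (hfw : f w = w) (hneg : ∀ t, t ∈ Set.Ico c' w → f t < t) :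
    ∀ n : ℕ, 2 ≤ n → ∃ p ∈ Set.Icc a b, f^[n] p = p ∧ ∀ i : ℕ, 0 < i → i < n → f^[i] p ≠ p := by
  intro n hn
  set g : ℝ → ℝ := fun u => -f (-u) with hgdef
  have hmem : ∀ t, t ∈ Icc (-b) (-a) → -t ∈ Icc a b := by
    intro t ht
    exact ⟨by linarith [ht.2], by linarith [ht.1]⟩
  have hnegc : ContinuousOn (fun t : ℝ => f (-t)) (Icc (-b) (-a)) :=
    ContinuousOn.comp hf continuous_neg.continuousOn (fun t ht => hmem t ht)
  have hgc : ContinuousOn g (Icc (-b) (-a)) := hnegc.neg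
  have hgm : Set.MapsTo g (Icc (-b) (-a)) (Icc (-b) (-a)) := by
    intro t ht
    have h2 := hmaps (hmem t ht)
    exact ⟨by simp only [hgdef]; linarith [h2.2], by simp only [hgdef]; linarith [h2.1]⟩
  have hgt : ∀ U V : Set ℝ, IsOpen U → IsOpen V →
      (U ∩ Set.Icc (-b) (-a)).Nonempty → (V ∩ Set.Icc (-b) (-a)).Nonempty →
      ∃ k : ℕ, 1 ≤ k ∧ ((g^[k] '' (U ∩ Set.Icc (-b) (-a))) ∩ (V ∩ Set.Icc (-b) (-a))).Nonempty := by
    intro U V hU hV hUne hVne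
    set U' : Set ℝ := (fun t : ℝ => -t) ⁻¹' U with hU'def
    set V' : Set ℝ := (fun t : ℝ => -t) ⁻¹' V with hV'def
    have hU'o : IsOpen U' := hU.preimage continuous_neg
    have hV'o : IsOpen V' := hV.preimage continuous_neg
    have hU'ne : (U' ∩ Icc a b).Nonempty := by
      obtain ⟨t, ht1, ht2⟩ := hUne
      refine ⟨-t, ?_, hmem t ht2⟩
      simp only [hU'def, mem_preimage, neg_neg]
      exact ht1
    have hV'ne : (V' ∩ Icc a b).Nonempty := by
      obtain ⟨t, ht1, ht2⟩ := hVne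
      refine ⟨-t, ?_, hmem t ht2⟩
      simp only [hV'def, mem_preimage, neg_neg]
      exact ht1
    obtain ⟨k, hk, ⟨y, ⟨t, ht, rfl⟩, hy2⟩⟩ := htrans U' V' hU'o hV'o hU'ne hV'ne
    refine ⟨k, hk, ⟨-f^[k] t, ⟨-t, ⟨ht.1, ⟨by linarith [ht.2.2], by linarith [ht.2.1]⟩⟩, ?_⟩,
      hy2.1, ⟨by linarith [hy2.2.2], by linarith [hy2.2.1]⟩⟩⟩
    exact iter_neg f k t
  have hcore := core (-b) (-a) (by linarith) g hgc hgm hgt (-w) (-c')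
    (by linarith) (by linarith) (by linarith)
    (by simp only [hgdef, neg_neg]; rw [hfw])
    ?_ n hn
  · obtain ⟨p', hp'mem, hp'fix, hp'ex⟩ := hcore
    refine ⟨-p', ⟨by linarith [hp'mem.2], by linarith [hp'mem.1]⟩, ?_, ?_⟩
    · have h := iter_neg f n (-p')
      rw [neg_neg] at h
      rw [hp'fix] at h
      linarith
    · intro i hi0 hin hcon
      apply hp'ex i hi0 hin
      have h := iter_neg f i (-p')
      rw [neg_neg] at h
      rw [hcon] at h
      rw [h]
      simp
  · intro t ht
    have h1 : c' ≤ -t := by linarith [ht.2]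
    have h2 : -t < w := by linarith [ht.1]
    have h3 := hneg (-t) ⟨h1, h2⟩
    simp only [hgdef]
    linarith

lemma pos_on_Ioc (a b : ℝ) (f : ℝ → ℝ) (hf : ContinuousOn f (Set.Icc a b))
    (w v : ℝ) (haw : a ≤ w) (hvb : v ≤ b) (hwv : w < v)
    (hnf : ∀ t, t ∈ Ioc w v → f t ≠ t) (hv : v < f v) :
    ∀ t ∈ Ioc w v, t < f t := by
  intro t ht
  by_contra hle
  push_neg at hle
  have hlt : f t < t := lt_of_le_of_ne hle (hnf t ht)
  have hsub : Icc t v ⊆ Icc a b := Icc_subset_Icc (haw.trans ht.1.le) hvb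
  have hcont : ContinuousOn (fun r => f r - r) (Icc t v) := (hf.mono hsub).sub continuousOn_id
  have h0 : (0:ℝ) ∈ Icc (f t - t) (f v - v) := ⟨by linarith, by linarith⟩
  obtain ⟨r, hr, hfr⟩ := intermediate_value_Icc ht.2 hcont h0
  have hreq : f r = r := by
    have : f r - r = 0 := hfr
    linarith
  exact hnf r ⟨ht.1.trans_le hr.1, hr.2⟩ hreq

lemma neg_on_Ico (a b : ℝ) (f : ℝ → ℝ) (hf : ContinuousOn f (Set.Icc a b))
    (u w : ℝ) (hau : a ≤ u) (hwb : w ≤ b) (huw : u < w)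
    (hnf : ∀ t, t ∈ Ico u w → f t ≠ t) (hu : f u < u) :
    ∀ t ∈ Ico u w, f t < t := by
  intro t ht
  by_contra hle
  push_neg at hle
  have hlt : t < f t := lt_of_le_of_ne hle (fun h => hnf t ht h.symm)
  have hsub : Icc u t ⊆ Icc a b := Icc_subset_Icc hau (ht.2.le.trans hwb)
  have hcont : ContinuousOn (fun r => f r - r) (Icc u t) := (hf.mono hsub).sub continuousOn_id
  have h0 : (0:ℝ) ∈ Icc (f u - u) (f t - t) := ⟨by linarith, by linarith⟩
  obtain ⟨r, hr, hfr⟩ := intermediate_value_Icc ht.1 hcont h0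
  have hreq : f r = r := by
    have : f r - r = 0 := hfr
    linarith
  exact hnf r ⟨hr.1, hr.2.trans_lt ht.2⟩ hreq

lemma sup_fixed (a b : ℝ) (f : ℝ → ℝ) (hf : ContinuousOn f (Set.Icc a b))
    (l u : ℝ) (hal : a ≤ l) (hub : u ≤ b) (hlu : l ≤ u) (hl : f l = l) :
    ∃ w, l ≤ w ∧ w ≤ u ∧ f w = w ∧ ∀ t, t ∈ Ioc w u → f t ≠ t := by
  set F : Set ℝ := Icc l u ∩ (fun t => f t - t) ⁻¹' {0} with hFdef
  have hFclosed : IsClosed F :=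
    ((hf.mono (Icc_subset_Icc hal hub)).sub continuousOn_id).preimage_isClosed_of_isClosed
      isClosed_Icc isClosed_singleton
  have hFne : F.Nonempty := ⟨l, ⟨le_rfl, hlu⟩, by simp [hl]⟩
  have hFbdd : BddAbove F := ⟨u, fun t ht => ht.1.2⟩
  set w := sSup F with hwdef
  have hwF : w ∈ F := hFclosed.csSup_mem hFne hFbdd
  have hfweq : f w = w := by
    have : f w - w = 0 := hwF.2
    linarith
  refine ⟨w, hwF.1.1, hwF.1.2, hfweq, ?_⟩
  intro t ht hteq
  have htF : t ∈ F := ⟨⟨hwF.1.1.trans ht.1.le, ht.2⟩, by simp [hteq]⟩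
  exact absurd (le_csSup hFbdd htF) (not_le.mpr ht.1)

lemma inf_fixed (a b : ℝ) (f : ℝ → ℝ) (hf : ContinuousOn f (Set.Icc a b))
    (l u : ℝ) (hal : a ≤ l) (hub : u ≤ b) (hlu : l ≤ u) (hu : f u = u) :
    ∃ w, l ≤ w ∧ w ≤ u ∧ f w = w ∧ ∀ t, t ∈ Ico l w → f t ≠ t := by
  set F : Set ℝ := Icc l u ∩ (fun t => f t - t) ⁻¹' {0} with hFdef
  have hFclosed : IsClosed F :=
    ((hf.mono (Icc_subset_Icc hal hub)).sub continuousOn_id).preimage_isClosed_of_isClosed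
      isClosed_Icc isClosed_singleton
  have hFne : F.Nonempty := ⟨u, ⟨hlu, le_rfl⟩, by simp [hu]⟩
  have hFbdd : BddBelow F := ⟨l, fun t ht => ht.1.1⟩
  set w := sInf F with hwdef
  have hwF : w ∈ F := hFclosed.csInf_mem hFne hFbdd
  have hfweq : f w = w := by
    have : f w - w = 0 := hwF.2
    linarith
  refine ⟨w, hwF.1.1, hwF.1.2, hfweq, ?_⟩
  intro t ht hteq
  have htF : t ∈ F := ⟨⟨ht.1, ht.2.le.trans hwF.1.2⟩, by simp [hteq]⟩
  exact absurd (csInf_le hFbdd htF) (not_le.mpr ht.2)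
/-- A continuous transitive map on `[a,b]` with a fixed point `z` and a point
`c ≠ z` moved away from `z` has periodic points of all periods. -/
theorem transitive_moving_away_all_periods
    (a b : ℝ) (hab : a < b) (f : ℝ → ℝ)
    (hf : ContinuousOn f (Set.Icc a b)) (hmaps : Set.MapsTo f (Set.Icc a b) (Set.Icc a b))
    (htrans : ∀ U V : Set ℝ, IsOpen U → IsOpen V →
      (U ∩ Set.Icc a b).Nonempty → (V ∩ Set.Icc a b).Nonempty →
      ∃ k : ℕ, 1 ≤ k ∧ ((f^[k] '' (U ∩ Set.Icc a b)) ∩ (V ∩ Set.Icc a b)).Nonempty)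
    (z : ℝ) (hz : z ∈ Set.Icc a b) (hfz : f z = z)
    (c : ℝ) (hc : c ∈ Set.Icc a b) (hcz : c ≠ z)
    (hmove : (f c ≤ c ∧ c < z) ∨ (z < c ∧ c ≤ f c)) :
    ∀ n : ℕ, 1 ≤ n → ∃ p ∈ Set.Icc a b,
      f^[n] p = p ∧ ∀ i : ℕ, 0 < i → i < n → f^[i] p ≠ p := by
  intro n hn
  rcases eq_or_lt_of_le hn with heq | hn2
  · refine ⟨z, hz, ?_, ?_⟩
    · rw [← heq, Function.iterate_one]
      exact hfz
    · intro i hi0 hi1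
      exfalso
      omega
  · have hn2' : 2 ≤ n := hn2
    rcases hmove with ⟨hfc, hczlt⟩ | ⟨hzc, hcf⟩
    · -- case L : f c ≤ c < z
      rcases lt_or_eq_of_le hfc with hlt | heqc
      · obtain ⟨w, hcw, hwz, hfw, hnf⟩ := inf_fixed a b f hf c z hc.1 hz.2 hczlt.le hfz
        have hcw' : c < w := by
          rcases eq_or_lt_of_le hcw with h | h
          · exfalso; rw [← h] at hfw; linarith
          · exact h
        exact mirror_core a b hab f hf hmaps htrans w c hc.1 hcw' (hwz.trans hz.2) hfw
          (neg_on_Ico a b f hf c w hc.1 (hwz.trans hz.2) hcw' hnf hlt) n hn2'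
      · have hprobe : ∃ x₀ ∈ Ioo c z, f x₀ ≠ x₀ := by
          by_contra hno
          push_neg at hno
          exact not_id_on a b f htrans c z hc.1 hz.2 hczlt hno
        obtain ⟨x₀, hx₀, hne⟩ := hprobe
        rcases lt_or_gt_of_ne hne with hlt | hgt
        · obtain ⟨w, hxw, hwz, hfw, hnf⟩ :=
            inf_fixed a b f hf x₀ z (hc.1.trans hx₀.1.le) hz.2 hx₀.2.le hfz
          have hxw' : x₀ < w := by
            rcases eq_or_lt_of_le hxw with h | h
            · exfalso; rw [← h] at hfw; linarith
            · exact h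
          exact mirror_core a b hab f hf hmaps htrans w x₀ (hc.1.trans hx₀.1.le) hxw'
            (hwz.trans hz.2) hfw
            (neg_on_Ico a b f hf x₀ w (hc.1.trans hx₀.1.le) (hwz.trans hz.2) hxw' hnf hlt) n hn2'
        · obtain ⟨w, hcw, hwx, hfw, hnf⟩ :=
            sup_fixed a b f hf c x₀ hc.1 (hx₀.2.le.trans hz.2) hx₀.1.le heqc
          have hwx' : w < x₀ := by
            rcases eq_or_lt_of_le hwx with h | h
            · exfalso; rw [h] at hfw; linarith
            · exact h
          exact core a b hab f hf hmaps htrans w x₀ (hc.1.trans hcw) hwx'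
            (hx₀.2.le.trans hz.2) hfw
            (pos_on_Ioc a b f hf w x₀ (hc.1.trans hcw) (hx₀.2.le.trans hz.2) hwx' hnf hgt) n hn2'
    · -- case R : z < c ≤ f c
      rcases lt_or_eq_of_le hcf with hlt | heqc
      · obtain ⟨w, hzw, hwc, hfw, hnf⟩ := sup_fixed a b f hf z c hz.1 hc.2 hzc.le hfz
        have hwc' : w < c := by
          rcases eq_or_lt_of_le hwc with h | h
          · exfalso; rw [h] at hfw; linarith
          · exact h
        exact core a b hab f hf hmaps htrans w c (hz.1.trans hzw) hwc' hc.2 hfw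
          (pos_on_Ioc a b f hf w c (hz.1.trans hzw) hc.2 hwc' hnf hlt) n hn2'
      · have hprobe : ∃ x₀ ∈ Ioo z c, f x₀ ≠ x₀ := by
          by_contra hno
          push_neg at hno
          exact not_id_on a b f htrans z c hz.1 hc.2 hzc hno
        obtain ⟨x₀, hx₀, hne⟩ := hprobe
        rcases lt_or_gt_of_ne hne with hlt | hgt
        · obtain ⟨w, hxw, hwc, hfw, hnf⟩ :=
            inf_fixed a b f hf x₀ c (hz.1.trans hx₀.1.le) hc.2 hx₀.2.le heqc.symm
          have hxw' : x₀ < w := by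
            rcases eq_or_lt_of_le hxw with h | h
            · exfalso; rw [← h] at hfw; linarith
            · exact h
          exact mirror_core a b hab f hf hmaps htrans w x₀ (hz.1.trans hx₀.1.le) hxw'
            (hwc.trans hc.2) hfw
            (neg_on_Ico a b f hf x₀ w (hz.1.trans hx₀.1.le) (hwc.trans hc.2) hxw' hnf hlt) n hn2'
        · obtain ⟨w, hzw, hwx, hfw, hnf⟩ :=
            sup_fixed a b f hf z x₀ hz.1 (hx₀.2.le.trans hc.2) hx₀.1.le hfz
          have hwx' : w < x₀ := by
            rcases eq_or_lt_of_le hwx with h | h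
            · exfalso; rw [h] at hfw; linarith
            · exact h
          exact core a b hab f hf hmaps htrans w x₀ (hz.1.trans hzw) hwx'
            (hx₀.2.le.trans hc.2) hfw
            (pos_on_Ioc a b f hf w x₀ (hz.1.trans hzw) (hx₀.2.le.trans hc.2) hwx' hnf hgt) n hn2'
end

section
/- Let f : [a,b] → [a,b] be continuous and transitive, with fixed point z in (a,b), and suppose there is a point c ≠ z such that both c and f(c) lie strictly on the same side of z. Then for every nonempty open interval V in [a,b], the union ⋃_{i≥0} f^i(V) contains the open interval (a,b); in particular there exists j ≥ 0 with z ∈ f^j(V). -/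
open Set Function

private lemma contOn_iter_s5 {a b : ℝ} {f : ℝ → ℝ} (hf : ContinuousOn f (Set.Icc a b))
    (hm : Set.MapsTo f (Set.Icc a b) (Set.Icc a b)) (k : ℕ) :
    ContinuousOn (f^[k]) (Set.Icc a b) := by
  induction k with
  | zero => simpa using continuousOn_id
  | succ n ih =>
    rw [Function.iterate_succ]
    exact ih.comp hf hm

private lemma hit_ge {a b : ℝ} {f : ℝ → ℝ} (hf : ContinuousOn f (Set.Icc a b))
    (hm : Set.MapsTo f (Set.Icc a b) (Set.Icc a b))
    (htrans : ∀ U V : Set ℝ, IsOpen U → IsOpen V →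
      (U ∩ Set.Icc a b).Nonempty → (V ∩ Set.Icc a b).Nonempty →
      ∃ k : ℕ, 1 ≤ k ∧ ((f^[k] '' (U ∩ Set.Icc a b)) ∩ (V ∩ Set.Icc a b)).Nonempty)
    (U V : Set ℝ) (hU : IsOpen U) (hV : IsOpen V)
    (hUne : (U ∩ Set.Icc a b).Nonempty) (hVne : (V ∩ Set.Icc a b).Nonempty) (N : ℕ) :
    ∃ k, N ≤ k ∧ ((f^[k] '' (U ∩ Set.Icc a b)) ∩ (V ∩ Set.Icc a b)).Nonempty := by
  induction N with
  | zero =>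
    obtain ⟨k, _, hk⟩ := htrans U V hU hV hUne hVne
    exact ⟨k, Nat.zero_le _, hk⟩
  | succ N ih =>
    obtain ⟨k, hkN, y, ⟨x, hxU, rfl⟩, hyV, hyI⟩ := ih
    obtain ⟨O, hO, hOeq⟩ := (continuousOn_iff'.mp (contOn_iter_s5 hf hm k)) V hV
    have hx' : x ∈ (U ∩ O) ∩ Set.Icc a b := by
      have hmem : x ∈ f^[k] ⁻¹' V ∩ Set.Icc a b := ⟨hyV, hxU.2⟩
      rw [hOeq] at hmem
      exact ⟨⟨hxU.1, hmem.1⟩, hmem.2⟩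
    obtain ⟨k₂, hk₂1, w, ⟨q, hqU, rfl⟩, hwUO, hwI⟩ :=
      htrans U (U ∩ O) hU (hU.inter hO) hUne ⟨x, hx'⟩
    refine ⟨k + k₂, by omega, f^[k + k₂] q, ⟨q, hqU, rfl⟩, ?_, (hm.iterate (k + k₂)) hqU.2⟩
    have hw' : f^[k₂] q ∈ f^[k] ⁻¹' V ∩ Set.Icc a b := by
      rw [hOeq]; exact ⟨hwUO.2, hwI⟩
    have heq : f^[k + k₂] q = f^[k] (f^[k₂] q) := Function.iterate_add_apply f k k₂ q
    rw [heq]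
    exact hw'.1


private lemma reaches_z
    (a b : ℝ) (hab : a < b) (f : ℝ → ℝ)
    (hf : ContinuousOn f (Set.Icc a b)) (hmaps : Set.MapsTo f (Set.Icc a b) (Set.Icc a b))
    (htrans : ∀ U V : Set ℝ, IsOpen U → IsOpen V →
      (U ∩ Set.Icc a b).Nonempty → (V ∩ Set.Icc a b).Nonempty →
      ∃ k : ℕ, 1 ≤ k ∧ ((f^[k] '' (U ∩ Set.Icc a b)) ∩ (V ∩ Set.Icc a b)).Nonempty)
    (z : ℝ) (hz : z ∈ Set.Ioo a b) (hfz : f z = z)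
    (c : ℝ) (hc : c ∈ Set.Icc a b)
    (hside : (z < c ∧ z < f c) ∨ (c < z ∧ f c < z))
    (u v : ℝ) (huv : u < v) (hsub : Set.Ioo u v ⊆ Set.Icc a b) :
    ∃ m : ℕ, z ∈ f^[m] '' (Set.Ioo u v) := by
  by_contra hcon
  push_neg at hcon
  have haz : a < z := hz.1
  have hzb : z < b := hz.2
  have hzI : z ∈ Set.Icc a b := ⟨le_of_lt haz, le_of_lt hzb⟩
  have haI : a ∈ Set.Icc a b := ⟨le_refl a, le_of_lt hab⟩
  have hbI : b ∈ Set.Icc a b := ⟨le_of_lt hab, le_refl b⟩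
  have hIuv : Set.Ioo u v ∩ Set.Icc a b = Set.Ioo u v := Set.inter_eq_left.mpr hsub
  have hUne : (Set.Ioo u v ∩ Set.Icc a b).Nonempty := by
    rw [hIuv]; exact Set.nonempty_Ioo.mpr huv
  set J : ℕ → Set ℝ := fun t => f^[t] '' (Set.Ioo u v) with hJdef
  have hJne : ∀ t, (J t).Nonempty := fun t => (Set.nonempty_Ioo.mpr huv).image _
  have hJI : ∀ t, J t ⊆ Set.Icc a b := fun t =>
    (Set.image_mono hsub).trans ((hmaps.iterate t).image_subset)
  have hJcon : ∀ t, IsPreconnected (J t) := fun t =>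
    isPreconnected_Ioo.image _ ((contOn_iter_s5 hf hmaps t).mono hsub)
  have hJsucc : ∀ t, f '' J t = J (t + 1) := by
    intro t
    show f '' (f^[t] '' _) = f^[t + 1] '' _
    rw [Function.iterate_succ', Set.image_comp]
  have hJadd : ∀ s t, J (s + t) = f^[s] '' J t := by
    intro s t
    show f^[s + t] '' _ = f^[s] '' (f^[t] '' _)
    rw [Function.iterate_add, Set.image_comp]
  -- return time
  obtain ⟨k, hk1, hret⟩ := htrans (Set.Ioo u v) (Set.Ioo u v) isOpen_Ioo isOpen_Ioo hUne hUne
  have hkpos : 0 < k := hk1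
  rw [hIuv] at hret
  have hchain : ∀ m : ℕ, (J ((m + 1) * k) ∩ J (m * k)).Nonempty := by
    intro m
    induction m with
    | zero =>
      have h0 : J 0 = Set.Ioo u v := by simp [hJdef]
      have h1 : (1 : ℕ) * k = k := one_mul k
      rw [h1, Nat.zero_mul, h0]
      exact hret
    | succ m ih =>
      have h1 : (m + 2) * k = k + (m + 1) * k := by ring
      have h2 : (m + 1) * k = k + m * k := by ring
      obtain ⟨x, hx⟩ := ih
      refine ⟨f^[k] x, ?_, ?_⟩
      · rw [h1, hJadd]; exact ⟨x, hx.1, rfl⟩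
      · rw [h2, hJadd]; exact ⟨x, hx.2, rfl⟩
  have hchainr : ∀ r m : ℕ, (J ((m + 1) * k + r) ∩ J (m * k + r)).Nonempty := by
    intro r m
    obtain ⟨x, hx⟩ := hchain m
    refine ⟨f^[r] x, ?_, ?_⟩
    · have h1 : (m + 1) * k + r = r + (m + 1) * k := by ring
      rw [h1, hJadd]; exact ⟨x, hx.1, rfl⟩
    · have h2 : m * k + r = r + m * k := by ring
      rw [h2, hJadd]; exact ⟨x, hx.2, rfl⟩
  set N : ℕ → Set ℝ := fun r => ⋃ m : ℕ, J (m * k + r) with hNdef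
  have hJsubN : ∀ m r : ℕ, J (m * k + r) ⊆ N r := fun m r =>
    Set.subset_iUnion (fun m : ℕ => J (m * k + r)) m
  have hNne : ∀ r, (N r).Nonempty := fun r => (hJne (0 * k + r)).mono (hJsubN 0 r)
  have hNI : ∀ r, N r ⊆ Set.Icc a b := fun r => Set.iUnion_subset fun m => hJI _
  have hNz : ∀ r, z ∉ N r := by
    intro r hzN
    obtain ⟨m, hm⟩ := Set.mem_iUnion.mp hzN
    exact hcon _ hm
  have hNcon : ∀ r, IsPreconnected (N r) := by
    intro r
    set P : ℕ → Set ℝ := fun m => ⋃ i ∈ Set.Iic m, J (i * k + r) with hPdef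
    have hIicsucc : ∀ m : ℕ, Set.Iic (m + 1) = insert (m + 1) (Set.Iic m) := by
      intro m
      ext i
      simp only [Set.mem_Iic, Set.mem_insert_iff]
      omega
    have hPsucc : ∀ m, P (m + 1) = J ((m + 1) * k + r) ∪ P m := by
      intro m
      rw [hPdef]
      simp only
      rw [hIicsucc, Set.biUnion_insert]
    have hJP : ∀ m i, i ≤ m → J (i * k + r) ⊆ P m := by
      intro m i him
      show J (i * k + r) ⊆ ⋃ j ∈ Set.Iic m, J (j * k + r)
      exact Set.subset_biUnion_of_mem (u := fun j => J (j * k + r)) (Set.mem_Iic.mpr him)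
    have hPcon : ∀ m, IsPreconnected (P m) := by
      intro m
      induction m with
      | zero =>
        have : P 0 = J (0 * k + r) := by
          rw [hPdef]; simp
        rw [this]; exact hJcon _
      | succ m ih =>
        obtain ⟨x, hx1, hx2⟩ := hchainr r m
        rw [hPsucc]
        exact IsPreconnected.union x hx1 (hJP m m le_rfl hx2) (hJcon _) ih
    obtain ⟨x₀, hx₀⟩ := hJne (0 * k + r)
    have hNP : N r = ⋃₀ Set.range P := by
      rw [Set.sUnion_range]
      apply Set.Subset.antisymm
      · exact Set.iUnion_subset fun m => (hJP m m le_rfl).trans (Set.subset_iUnion P m)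
      · apply Set.iUnion_subset
        intro m
        rw [hPdef]
        apply Set.iUnion₂_subset
        intro i _
        exact hJsubN i r
    rw [hNP]
    apply isPreconnected_sUnion x₀
    · rintro s ⟨m, rfl⟩
      exact hJP m 0 (Nat.zero_le m) hx₀
    · rintro s ⟨m, rfl⟩
      exact hPcon m
  have hNside : ∀ r, N r ⊆ Set.Iio z ∨ N r ⊆ Set.Ioi z := by
    intro r
    by_contra hcon2
    rcases not_or.mp hcon2 with ⟨h1, h2⟩
    obtain ⟨p, hpN, hp⟩ := Set.not_subset.mp h1
    obtain ⟨q, hqN, hq⟩ := Set.not_subset.mp h2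
    simp only [Set.mem_Iio, not_lt] at hp
    simp only [Set.mem_Ioi, not_lt] at hq
    exact hNz r ((hNcon r).Icc_subset hqN hpN ⟨hq, hp⟩)
  have hNmap : ∀ r, f '' N r ⊆ N (r + 1) := by
    intro r
    rw [hNdef]
    simp only
    rw [Set.image_iUnion]
    apply Set.iUnion_subset
    intro m
    rw [hJsucc (m * k + r)]
    have : m * k + r + 1 = m * k + (r + 1) := by ring
    rw [this]
    exact hJsubN m (r + 1)
  have hmod : ∀ t, J t ⊆ N (t % k) := by
    intro t x hx
    have heq : t / k * k + t % k = t := by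
      rw [mul_comm]; exact Nat.div_add_mod t k
    exact Set.mem_iUnion.mpr ⟨t / k, by rw [heq]; exact hx⟩
  have hclose : ∀ x ∈ Set.Icc a b, x ∈ closure (⋃ r ∈ Set.Iio k, N r) := by
    intro x hxI
    rw [Metric.mem_closure_iff]
    intro ε hε
    obtain ⟨k₁, hk₁, y, ⟨w, hwm, rfl⟩, hyB, hyI⟩ :=
      htrans (Set.Ioo u v) (Metric.ball x ε) isOpen_Ioo Metric.isOpen_ball hUne
        ⟨x, Metric.mem_ball_self hε, hxI⟩
    refine ⟨f^[k₁] w, ?_, ?_⟩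
    · have h1 : f^[k₁] w ∈ J k₁ := ⟨w, hwm.1, rfl⟩
      exact Set.mem_biUnion (Nat.mod_lt k₁ hkpos) (hmod k₁ h1)
    · rw [dist_comm]
      exact Metric.mem_ball.mp hyB
  have htouch_exists : ∃ r, z ∈ closure (N r) := by
    have h1 := hclose z hzI
    rw [(Set.finite_Iio k).closure_biUnion] at h1
    obtain ⟨r, _, hr⟩ := Set.mem_iUnion₂.mp h1
    exact ⟨r, hr⟩
  have hprop : ∀ r, z ∈ closure (N r) → z ∈ closure (N (r + 1)) := by
    intro r hr
    have hcw : ContinuousWithinAt f (N r) z := (hf z hzI).mono (hNI r)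
    have h1 := hcw.mem_closure_image hr
    rw [hfz] at h1
    exact closure_mono (hNmap r) h1
  have hNshift : ∀ r m, N (r + m * k) ⊆ N r := by
    intro r m
    apply Set.iUnion_subset
    intro i
    have heq : i * k + (r + m * k) = (i + m) * k + r := by ring
    rw [heq]
    exact hJsubN (i + m) r
  have htouch : ∀ r, z ∈ closure (N r) := by
    obtain ⟨r₀, hr₀⟩ := htouch_exists
    have hstep : ∀ d, z ∈ closure (N (r₀ + d)) := by
      intro d
      induction d with
      | zero => simpa using hr₀
      | succ d ih =>
        have : r₀ + (d + 1) = (r₀ + d) + 1 := by ring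
        rw [this]
        exact hprop _ ih
    intro r
    have hle : r₀ ≤ r + r₀ * k := by
      calc r₀ ≤ r₀ * k := Nat.le_mul_of_pos_right r₀ hkpos
      _ ≤ r + r₀ * k := Nat.le_add_left _ _
    have heq : r₀ + (r + r₀ * k - r₀) = r + r₀ * k := by omega
    have h1 := hstep (r + r₀ * k - r₀)
    rw [heq] at h1
    exact closure_mono (hNshift r r₀) h1
  -- one-sided sets covering (z,b) and (a,z)
  have hIoozbI : Set.Ioo z b ⊆ Set.Icc a b := fun y hy =>
    ⟨le_of_lt (lt_trans haz hy.1), le_of_lt hy.2⟩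
  have hIooazI : Set.Ioo a z ⊆ Set.Icc a b := fun y hy =>
    ⟨le_of_lt hy.1, le_of_lt (lt_trans hy.2 hzb)⟩
  rcases hside with ⟨hzc, hzfc⟩ | ⟨hcz2, hfcz⟩
  · -- right case : z < c, z < f c
    -- find r₁ with b ∈ closure (N r₁)
    have h1b := hclose b hbI
    rw [(Set.finite_Iio k).closure_biUnion] at h1b
    obtain ⟨r₁, hr₁k, hbr₁⟩ := Set.mem_iUnion₂.mp h1b
    have hR : N r₁ ⊆ Set.Ioi z := by
      rcases hNside r₁ with h | h
      · exfalso
        have : b ∈ closure (Set.Iio z) := closure_mono h hbr₁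
        rw [closure_Iio] at this
        exact absurd this (not_le.mpr hzb)
      · exact h
    have hIoozbN : Set.Ioo z b ⊆ N r₁ := by
      intro y hy
      have hzcl := htouch r₁
      obtain ⟨p, hpN, hpd⟩ := Metric.mem_closure_iff.mp hzcl (y - z) (by linarith [hy.1])
      obtain ⟨q, hqN, hqd⟩ := Metric.mem_closure_iff.mp hbr₁ (b - y) (by linarith [hy.2])
      have hpz : z < p := hR hpN
      have hpy : p < y := by
        have : |z - p| < y - z := hpd
        have h2 : p - z < y - z := by
          have := abs_lt.mp this
          linarith [this.1]
        linarith
      have hqy : y < q := by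
        have : |b - q| < b - y := hqd
        have := abs_lt.mp this
        linarith [this.1]
      exact (hNcon r₁).Icc_subset hpN hqN ⟨le_of_lt hpy, le_of_lt hqy⟩
    -- find x₁ ∈ Ioo z b with z < f x₁
    obtain ⟨x₁, hx₁Ioo, hx₁f⟩ : ∃ x₁ ∈ Set.Ioo z b, z < f x₁ := by
      rcases lt_or_eq_of_le hc.2 with hcb | hcb
      · exact ⟨c, ⟨hzc, hcb⟩, hzfc⟩
      · -- c = b
        have hne : (nhdsWithin c (Set.Ioo z c)).NeBot := by
          rw [← mem_closure_iff_nhdsWithin_neBot, closure_Ioo (ne_of_lt hzc)]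
          exact ⟨le_of_lt hzc, le_refl c⟩
        have ht : Filter.Tendsto f (nhdsWithin c (Set.Ioo z c)) (nhds (f c)) :=
          (hf c hc).mono (fun y hy => ⟨le_of_lt (lt_trans haz hy.1), le_of_lt (lt_of_lt_of_le hy.2 hc.2)⟩)
        have hev : ∀ᶠ y in nhdsWithin c (Set.Ioo z c), z < f y :=
          ht (Ioi_mem_nhds hzfc)
        have hev2 : ∀ᶠ y in nhdsWithin c (Set.Ioo z c), y ∈ Set.Ioo z c :=
          self_mem_nhdsWithin
        obtain ⟨y, hy1, hy2⟩ := (hev2.and hev).exists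
        rw [hcb] at hy1
        exact ⟨y, hy1, hy2⟩
    have hx₁N : x₁ ∈ N r₁ := hIoozbN hx₁Ioo
    have hfx₁ : f x₁ ∈ N (r₁ + 1) := hNmap r₁ ⟨x₁, hx₁N, rfl⟩
    have hR2 : N (r₁ + 1) ⊆ Set.Ioi z := by
      rcases hNside (r₁ + 1) with h | h
      · exact absurd (h hfx₁) (not_lt.mpr (le_of_lt hx₁f))
      · exact h
    have hmapsIoo : Set.MapsTo f (Set.Ioo z b) (Set.Icc z b) := by
      intro y hy
      have h1 : f y ∈ N (r₁ + 1) := hNmap r₁ ⟨y, hIoozbN hy, rfl⟩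
      exact ⟨le_of_lt (hR2 h1), (hNI _ h1).2⟩
    have hmapsIcc : Set.MapsTo f (Set.Icc z b) (Set.Icc z b) := by
      intro y hy
      rcases lt_or_eq_of_le hy.1 with h1 | h1
      · rcases lt_or_eq_of_le hy.2 with h2 | h2
        · exact hmapsIoo ⟨h1, h2⟩
        · -- y = b
          subst h2
          have hbcl : f y ∈ closure (f '' Set.Ioo z y) :=
            ContinuousWithinAt.mem_closure_image ((hf y hbI).mono hIoozbI)
              (by rw [closure_Ioo (ne_of_lt hzb)]; exact ⟨le_of_lt hzb, le_refl y⟩)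
          exact ((closure_mono hmapsIoo.image_subset).trans isClosed_Icc.closure_eq.subset) hbcl
      · rw [← h1, hfz]
        exact ⟨le_refl z, le_of_lt hzb⟩
    obtain ⟨k₃, _, y₃, ⟨w, hw, rfl⟩, hy₃V, _⟩ :=
      htrans (Set.Ioo z b) (Set.Ioo (a - 1) z) isOpen_Ioo isOpen_Ioo
        ⟨x₁, hx₁Ioo, hIoozbI hx₁Ioo⟩ ⟨a, ⟨by linarith, haz⟩, haI⟩
    have hwIcc : w ∈ Set.Icc z b := ⟨le_of_lt hw.1.1, le_of_lt hw.1.2⟩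
    have : f^[k₃] w ∈ Set.Icc z b := (hmapsIcc.iterate k₃) hwIcc
    exact absurd hy₃V.2 (not_lt.mpr this.1)
  · -- left case : c < z, f c < z
    have h1a := hclose a haI
    rw [(Set.finite_Iio k).closure_biUnion] at h1a
    obtain ⟨r₂, hr₂k, har₂⟩ := Set.mem_iUnion₂.mp h1a
    have hL : N r₂ ⊆ Set.Iio z := by
      rcases hNside r₂ with h | h
      · exact h
      · exfalso
        have : a ∈ closure (Set.Ioi z) := closure_mono h har₂
        rw [closure_Ioi] at this
        exact absurd this (not_le.mpr haz)
    have hIooazN : Set.Ioo a z ⊆ N r₂ := by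
      intro y hy
      have hzcl := htouch r₂
      obtain ⟨q, hqN, hqd⟩ := Metric.mem_closure_iff.mp hzcl (z - y) (by linarith [hy.2])
      obtain ⟨p, hpN, hpd⟩ := Metric.mem_closure_iff.mp har₂ (y - a) (by linarith [hy.1])
      have hqz : q < z := hL hqN
      have hqy : y < q := by
        have := abs_lt.mp hqd
        linarith [this.2]
      have hpy : p < y := by
        have := abs_lt.mp hpd
        linarith [this.2]
      exact (hNcon r₂).Icc_subset hpN hqN ⟨le_of_lt hpy, le_of_lt hqy⟩
    obtain ⟨x₁, hx₁Ioo, hx₁f⟩ : ∃ x₁ ∈ Set.Ioo a z, f x₁ < z := by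
      rcases lt_or_eq_of_le hc.1 with hca | hca
      · exact ⟨c, ⟨hca, hcz2⟩, hfcz⟩
      · -- a = c
        have hne : (nhdsWithin c (Set.Ioo c z)).NeBot := by
          rw [← mem_closure_iff_nhdsWithin_neBot, closure_Ioo (ne_of_lt hcz2)]
          exact ⟨le_refl c, le_of_lt hcz2⟩
        have ht : Filter.Tendsto f (nhdsWithin c (Set.Ioo c z)) (nhds (f c)) :=
          (hf c hc).mono (fun y hy => ⟨le_of_lt (lt_of_le_of_lt hc.1 hy.1), le_of_lt (lt_trans hy.2 hzb)⟩)
        have hev : ∀ᶠ y in nhdsWithin c (Set.Ioo c z), f y < z :=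
          ht (Iio_mem_nhds hfcz)
        have hev2 : ∀ᶠ y in nhdsWithin c (Set.Ioo c z), y ∈ Set.Ioo c z :=
          self_mem_nhdsWithin
        obtain ⟨y, hy1, hy2⟩ := (hev2.and hev).exists
        rw [← hca] at hy1
        exact ⟨y, hy1, hy2⟩
    have hx₁N : x₁ ∈ N r₂ := hIooazN hx₁Ioo
    have hfx₁ : f x₁ ∈ N (r₂ + 1) := hNmap r₂ ⟨x₁, hx₁N, rfl⟩
    have hL2 : N (r₂ + 1) ⊆ Set.Iio z := by
      rcases hNside (r₂ + 1) with h | h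
      · exact h
      · exact absurd (h hfx₁) (not_lt.mpr (le_of_lt hx₁f))
    have hmapsIoo : Set.MapsTo f (Set.Ioo a z) (Set.Icc a z) := by
      intro y hy
      have h1 : f y ∈ N (r₂ + 1) := hNmap r₂ ⟨y, hIooazN hy, rfl⟩
      exact ⟨(hNI _ h1).1, le_of_lt (hL2 h1)⟩
    have hmapsIcc : Set.MapsTo f (Set.Icc a z) (Set.Icc a z) := by
      intro y hy
      rcases lt_or_eq_of_le hy.1 with h1 | h1
      · rcases lt_or_eq_of_le hy.2 with h2 | h2
        · exact hmapsIoo ⟨h1, h2⟩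
        · rw [h2, hfz]
          exact ⟨le_of_lt haz, le_refl z⟩
      · -- a = y
        have hbcl : f y ∈ closure (f '' Set.Ioo y z) := by
          apply ContinuousWithinAt.mem_closure_image ((hf y (by rw [← h1]; exact haI)).mono ?_)
          · rw [closure_Ioo (by rw [← h1]; exact ne_of_lt haz)]
            exact ⟨le_refl y, by rw [← h1]; exact le_of_lt haz⟩
          · rw [← h1]; exact hIooazI
        have h4 : f '' Set.Ioo y z ⊆ Set.Icc a z := by
          rw [← h1]
          exact hmapsIoo.image_subset
        exact ((closure_mono h4).trans isClosed_Icc.closure_eq.subset) hbcl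
    obtain ⟨k₃, _, y₃, ⟨w, hw, rfl⟩, hy₃V, _⟩ :=
      htrans (Set.Ioo a z) (Set.Ioo z (b + 1)) isOpen_Ioo isOpen_Ioo
        ⟨x₁, hx₁Ioo, hIooazI hx₁Ioo⟩ ⟨b, ⟨hzb, by linarith⟩, hbI⟩
    have hwIcc : w ∈ Set.Icc a z := ⟨le_of_lt hw.1.1, le_of_lt hw.1.2⟩
    have : f^[k₃] w ∈ Set.Icc a z := (hmapsIcc.iterate k₃) hwIcc
    exact absurd hy₃V.1 (not_lt.mpr this.2)

/-- If a continuous transitive map on `[a,b]` has an interior fixed point `z`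
and some point `c ≠ z` with both `c` and `f c` strictly on the same side of `z`,
then for every nonempty relatively open set `V` in `[a,b]`, the union of all
forward images of `V` contains `(a,b)`; in particular some image contains `z`. -/
theorem union_of_images_contains_interior
    (a b : ℝ) (hab : a < b) (f : ℝ → ℝ)
    (hf : ContinuousOn f (Set.Icc a b)) (hmaps : Set.MapsTo f (Set.Icc a b) (Set.Icc a b))
    (htrans : ∀ U V : Set ℝ, IsOpen U → IsOpen V →
      (U ∩ Set.Icc a b).Nonempty → (V ∩ Set.Icc a b).Nonempty →
      ∃ k : ℕ, 1 ≤ k ∧ ((f^[k] '' (U ∩ Set.Icc a b)) ∩ (V ∩ Set.Icc a b)).Nonempty)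
    (z : ℝ) (hz : z ∈ Set.Ioo a b) (hfz : f z = z)
    (c : ℝ) (hc : c ∈ Set.Icc a b) (hcz : c ≠ z)
    (hside : (z < c ∧ z < f c) ∨ (c < z ∧ f c < z)) :
    ∀ V : Set ℝ, (∃ O : Set ℝ, IsOpen O ∧ V = O ∩ Set.Icc a b) → V.Nonempty →
      (Set.Ioo a b ⊆ ⋃ i : ℕ, f^[i] '' V) ∧ ∃ j : ℕ, z ∈ f^[j] '' V := by
  intro V hVopen hVne
  obtain ⟨O, hO, rfl⟩ := hVopen
  obtain ⟨x, hxO, hxI⟩ := hVne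
  obtain ⟨u, v, huv, hsubO, hsubI⟩ :
      ∃ u v : ℝ, u < v ∧ Set.Ioo u v ⊆ O ∧ Set.Ioo u v ⊆ Set.Icc a b := by
    obtain ⟨ε, hε, hball⟩ := Metric.isOpen_iff.mp hO x hxO
    rcases lt_or_eq_of_le hxI.2 with hxb | hxb
    · refine ⟨x, min b (x + ε), lt_min hxb (by linarith), ?_, ?_⟩
      · intro y hy
        apply hball
        rw [Real.ball_eq_Ioo]
        exact ⟨by linarith [hy.1], lt_of_lt_of_le hy.2 (min_le_right _ _)⟩
      · intro y hy
        exact ⟨le_trans hxI.1 (le_of_lt hy.1),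
          le_of_lt (lt_of_lt_of_le hy.2 (min_le_left _ _))⟩
    · refine ⟨max a (x - ε), x, max_lt (by rw [hxb]; exact hab) (by linarith), ?_, ?_⟩
      · intro y hy
        apply hball
        rw [Real.ball_eq_Ioo]
        exact ⟨lt_of_le_of_lt (le_max_right _ _) hy.1, by linarith [hy.2]⟩
      · intro y hy
        exact ⟨le_of_lt (lt_of_le_of_lt (le_max_left _ _) hy.1),
          le_of_lt (lt_of_lt_of_le hy.2 hxI.2)⟩
  obtain ⟨n₀, hn₀⟩ := reaches_z a b hab f hf hmaps htrans z hz hfz c hc hside u v huv hsubI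
  have hsubV : Set.Ioo u v ⊆ O ∩ Set.Icc a b := fun y hy => ⟨hsubO hy, hsubI hy⟩
  have hIuv : Set.Ioo u v ∩ Set.Icc a b = Set.Ioo u v := Set.inter_eq_left.mpr hsubI
  have hJz : ∀ d, z ∈ f^[n₀ + d] '' Set.Ioo u v := by
    intro d
    induction d with
    | zero => simpa using hn₀
    | succ d ih =>
      have heq : n₀ + (d + 1) = (n₀ + d) + 1 := rfl
      rw [heq, Function.iterate_succ', Set.image_comp]
      exact ⟨z, ih, hfz⟩
  have hCcon : IsPreconnected (⋃ d : ℕ, f^[n₀ + d] '' Set.Ioo u v) := by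
    rw [← Set.sUnion_range]
    apply isPreconnected_sUnion z
    · rintro s ⟨d, rfl⟩; exact hJz d
    · rintro s ⟨d, rfl⟩
      exact isPreconnected_Ioo.image _ ((contOn_iter_s5 hf hmaps _).mono hsubI)
  have hCmem : ∀ x' ∈ Set.Ioo a b, x' ∈ ⋃ d : ℕ, f^[n₀ + d] '' Set.Ioo u v := by
    intro x' hx'
    have hUne : (Set.Ioo u v ∩ Set.Icc a b).Nonempty := by
      rw [hIuv]; exact Set.nonempty_Ioo.mpr huv
    obtain ⟨k₁, hk₁, y₁, ⟨w₁, hw₁, rfl⟩, hy₁V, _⟩ :=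
      hit_ge hf hmaps htrans (Set.Ioo u v) (Set.Ioo x' (b + 1)) isOpen_Ioo isOpen_Ioo hUne
        ⟨b, ⟨hx'.2, by linarith⟩, ⟨le_of_lt hab, le_refl b⟩⟩ n₀
    obtain ⟨k₂, hk₂, y₂, ⟨w₂, hw₂, rfl⟩, hy₂V, _⟩ :=
      hit_ge hf hmaps htrans (Set.Ioo u v) (Set.Ioo (a - 1) x') isOpen_Ioo isOpen_Ioo hUne
        ⟨a, ⟨by linarith, hx'.1⟩, ⟨le_refl a, le_of_lt hab⟩⟩ n₀
    have hp : f^[k₁] w₁ ∈ ⋃ d : ℕ, f^[n₀ + d] '' Set.Ioo u v := by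
      apply Set.mem_iUnion.mpr
      refine ⟨k₁ - n₀, ?_⟩
      have heq : n₀ + (k₁ - n₀) = k₁ := by omega
      rw [heq]
      exact ⟨w₁, hw₁.1, rfl⟩
    have hq : f^[k₂] w₂ ∈ ⋃ d : ℕ, f^[n₀ + d] '' Set.Ioo u v := by
      apply Set.mem_iUnion.mpr
      refine ⟨k₂ - n₀, ?_⟩
      have heq : n₀ + (k₂ - n₀) = k₂ := by omega
      rw [heq]
      exact ⟨w₂, hw₂.1, rfl⟩
    exact hCcon.Icc_subset hq hp ⟨le_of_lt hy₂V.2, le_of_lt hy₁V.1⟩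
  constructor
  · intro x' hx'
    obtain ⟨d, hd⟩ := Set.mem_iUnion.mp (hCmem x' hx')
    exact Set.mem_iUnion.mpr ⟨n₀ + d, Set.image_mono hsubV hd⟩
  · exact ⟨n₀, Set.image_mono hsubV hn₀⟩
end

section
/- Let f : ℝ → ℝ (or any interval I → I) be continuous, let J ⊆ I be an interval containing a fixed point z of f and a periodic point q of f of least period m ≥ 3. If for some 0 ≤ k ≤ m−1 both f^k(q) and f^{k+1}(q) lie on the same side of z, then f^n(J) contains the entire orbit {q, f(q), ..., f^{m−1}(q)} for all n ≥ 2m−2. -/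
open Set Function

private lemma orbit_core (x : ℕ → ℝ) (z : ℝ) (m : ℕ) (R : ℕ → ℝ → Prop)
    (hm : 3 ≤ m)
    (hxm : ∀ i, x (i + m) = x i)
    (hz : ∀ i, x i ≠ z)
    (hne : ∀ i j, i < m → j < m → x i = x j → i = j)
    (hR0 : ∀ v, (z ≤ v ∧ v ≤ x 0) ∨ (x 0 ≤ v ∧ v ≤ z) → R 0 v)
    (hstep : ∀ n i v, R n (x i) →
      ((z ≤ v ∧ v ≤ x (i+1)) ∨ (x (i+1) ≤ v ∧ v ≤ z)) → R (n+1) v)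
    (hsame : ∃ k, k ≤ m - 1 ∧ ((x k < z ∧ x (k+1) < z) ∨ (z < x k ∧ z < x (k+1)))) :
    ∀ T, 2*m - 2 ≤ T → ∀ j, j < m → R T (x j) := by
  -- basic path machinery
  have hsigma : ∀ n i, R n (x i) → R (n+1) (x (i+1)) := by
    intro n i h
    rcases le_total z (x (i+1)) with hle | hle
    · exact hstep n i _ h (Or.inl ⟨hle, le_refl _⟩)
    · exact hstep n i _ h (Or.inr ⟨le_refl _, hle⟩)
  have hpath : ∀ t n i, R n (x i) → R (n + t) (x (i + t)) := by
    intro t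
    induction t with
    | zero => intro n i h; simpa using h
    | succ t ih =>
        intro n i h
        have h2 := hsigma (n + t) (i + t) (ih n i h)
        have e1 : n + (t+1) = n + t + 1 := by omega
        have e2 : i + (t+1) = i + t + 1 := by omega
        rw [e1, e2]; exact h2
  have hRx : ∀ t, R t (x t) := by
    intro t
    have h0 : R 0 (x 0) := by
      rcases le_total z (x 0) with hle | hle
      · exact hR0 _ (Or.inl ⟨hle, le_refl _⟩)
      · exact hR0 _ (Or.inr ⟨le_refl _, hle⟩)
    simpa using hpath t 0 0 h0
  by_cases hSL : ∃ c, c < m ∧ ((z ≤ x c ∧ x c ≤ x (c+1)) ∨ (x (c+1) ≤ x c ∧ x c ≤ z))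
  · -- CASE 1 : self-loop at c
    obtain ⟨c, hcm, hloop⟩ := hSL
    have hloopstep : ∀ n, R n (x c) → R (n+1) (x c) := fun n h => hstep n c _ h hloop
    have hloopt : ∀ t n, R n (x c) → R (n + t) (x c) := by
      intro t
      induction t with
      | zero => intro n h; simpa using h
      | succ t ih =>
          intro n h
          have h2 := hloopstep (n + t) (ih n h)
          have e : n + (t+1) = n + t + 1 := by omega
          rw [e]; exact h2
    intro T hT j hj
    rcases le_or_gt c j with hcj | hcj
    · have h1 : R (c + (T - j)) (x c) := hloopt (T - j) c (hRx c)
      have h2 := hpath (j - c) _ _ h1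
      have e1 : c + (j - c) = j := by omega
      have e2 : c + (T - j) + (j - c) = T := by omega
      rw [e1, e2] at h2; exact h2
    · have h1 : R (c + (T - (j + m))) (x c) := hloopt _ c (hRx c)
      have h2 := hpath (j + m - c) _ _ h1
      have e1 : c + (j + m - c) = j + m := by omega
      have e2 : c + (T - (j + m)) + (j + m - c) = T := by omega
      rw [e1, e2, hxm j] at h2; exact h2
  · -- CASE 2 : no self-loop
    have hSL' : ∀ c, c < m → ¬((z ≤ x c ∧ x c ≤ x (c+1)) ∨ (x (c+1) ≤ x c ∧ x c ≤ z)) :=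
      fun c hc h => hSL ⟨c, hc, h⟩
    have hside : ∀ i, x i < z ∨ z < x i := fun i => (hz i).lt_or_gt
    have hmpos : 0 < m := by omega
    -- x is m-periodic, value at i equals value at i % m
    have hmulm : ∀ r t, x (r + m * t) = x r := by
      intro r t
      induction t with
      | zero => simp
      | succ t ih =>
          have e : r + m * (t+1) = (r + m * t) + m := by ring
          rw [e, hxm, ih]
    have hmod : ∀ i, x (i % m) = x i := by
      intro i
      have h := hmulm (i % m) (i / m)
      rw [Nat.mod_add_div] at h
      exact h.symm
    -- two-sidedness
    have hP : ∃ i, i < m ∧ z < x i := by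
      by_contra hno
      push_neg at hno
      obtain ⟨a, hamem, hamin⟩ := Finset.exists_min_image (Finset.range m) x
        ⟨0, Finset.mem_range.2 hmpos⟩
      have ham : a < m := Finset.mem_range.1 hamem
      obtain ⟨c, hcm2, hceq⟩ : ∃ c, c < m ∧ x (c + 1) = x a := by
        rcases Nat.eq_zero_or_pos a with ha0 | hapos
        · refine ⟨m - 1, by omega, ?_⟩
          rw [show m - 1 + 1 = 0 + m by omega, hxm, ha0]
        · exact ⟨a - 1, by omega, by rw [show a - 1 + 1 = a by omega]⟩
      refine hSL' c hcm2 (Or.inr ⟨?_, ?_⟩)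
      · rw [hceq]; exact hamin c (Finset.mem_range.2 hcm2)
      · have := hno c hcm2
        rcases hside c with h | h
        · exact le_of_lt h
        · exact absurd h (not_lt.2 this)
    have hQ : ∃ i, i < m ∧ x i < z := by
      by_contra hno
      push_neg at hno
      obtain ⟨a, hamem, hamax⟩ := Finset.exists_max_image (Finset.range m) x
        ⟨0, Finset.mem_range.2 hmpos⟩
      have ham : a < m := Finset.mem_range.1 hamem
      obtain ⟨c, hcm2, hceq⟩ : ∃ c, c < m ∧ x (c + 1) = x a := by
        rcases Nat.eq_zero_or_pos a with ha0 | hapos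
        · refine ⟨m - 1, by omega, ?_⟩
          rw [show m - 1 + 1 = 0 + m by omega, hxm, ha0]
        · exact ⟨a - 1, by omega, by rw [show a - 1 + 1 = a by omega]⟩
      refine hSL' c hcm2 (Or.inl ⟨?_, ?_⟩)
      · rcases hside c with h | h
        · exact absurd h (not_lt.2 (hno c hcm2))
        · exact le_of_lt h
      · rw [hceq]; exact hamax c (Finset.mem_range.2 hcm2)
    -- closest points on each side
    obtain ⟨i₀, hi₀m, hi₀⟩ := hP
    obtain ⟨i₁, hi₁m, hi₁⟩ := hQ
    obtain ⟨cp, hcpmem, hcpmin⟩ := Finset.exists_min_image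
      ((Finset.range m).filter (fun i => z < x i)) x
      ⟨i₀, Finset.mem_filter.2 ⟨Finset.mem_range.2 hi₀m, hi₀⟩⟩
    obtain ⟨cq, hcqmem, hcqmax⟩ := Finset.exists_max_image
      ((Finset.range m).filter (fun i => x i < z)) x
      ⟨i₁, Finset.mem_filter.2 ⟨Finset.mem_range.2 hi₁m, hi₁⟩⟩
    have hcpm : cp < m := Finset.mem_range.1 (Finset.mem_filter.1 hcpmem).1
    have hcpz : z < x cp := (Finset.mem_filter.1 hcpmem).2
    have hcqm : cq < m := Finset.mem_range.1 (Finset.mem_filter.1 hcqmem).1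
    have hcqz : x cq < z := (Finset.mem_filter.1 hcqmem).2
    have hcpmin' : ∀ i, i < m → z < x i → x cp ≤ x i := by
      intro i him hiz
      exact hcpmin i (Finset.mem_filter.2 ⟨Finset.mem_range.2 him, hiz⟩)
    have hcqmax' : ∀ i, i < m → x i < z → x i ≤ x cq := by
      intro i him hiz
      exact hcqmax i (Finset.mem_filter.2 ⟨Finset.mem_range.2 him, hiz⟩)
    -- general-index versions
    have hcpminG : ∀ i, z < x i → x cp ≤ x i := by
      intro i hiz
      have h1 : z < x (i % m) := by rw [hmod]; exact hiz
      have := hcpmin' (i % m) (Nat.mod_lt _ hmpos) h1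
      rwa [hmod] at this
    have hcqmaxG : ∀ i, x i < z → x i ≤ x cq := by
      intro i hiz
      have h1 : x (i % m) < z := by rw [hmod]; exact hiz
      have := hcqmax' (i % m) (Nat.mod_lt _ hmpos) h1
      rwa [hmod] at this
    -- crossing
    have hcp1 : x (cp + 1) < z := by
      rcases hside (cp + 1) with h | h
      · exact h
      · exact absurd (Or.inl ⟨le_of_lt hcpz, hcpminG (cp+1) h⟩) (hSL' cp hcpm)
    have hcq1 : z < x (cq + 1) := by
      rcases hside (cq + 1) with h | h
      · exact absurd (Or.inr ⟨hcqmaxG (cq+1) h, le_of_lt hcqz⟩) (hSL' cq hcqm)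
      · exact h
    -- bounce steps
    have hbpq : ∀ n, R n (x cp) → R (n+1) (x cq) := by
      intro n h
      exact hstep n cp _ h (Or.inr ⟨hcqmaxG (cp+1) hcp1, le_of_lt hcqz⟩)
    have hbqp : ∀ n, R n (x cq) → R (n+1) (x cp) := by
      intro n h
      exact hstep n cq _ h (Or.inl ⟨le_of_lt hcpz, hcpminG (cq+1) hcq1⟩)
    have hbU : ∀ u, (u = cp ∨ u = cq) → ∀ s n, R n (x u) → R (n + 2*s) (x u) := by
      intro u hu s
      induction s with
      | zero => intro n h; simpa using h
      | succ s ih =>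
          intro n h
          have h1 := ih n h
          have h2 : R (n + 2*s + 1 + 1) (x u) := by
            rcases hu with rfl | rfl
            · exact hbqp _ (hbpq _ h1)
            · exact hbpq _ (hbqp _ h1)
          have e : n + 2*(s+1) = n + 2*s + 1 + 1 := by omega
          rw [e]; exact h2
    -- ROUTE RA : when u ≤ j and T ≡ j (mod 2), T ≥ j
    have routeRA : ∀ u, (u = cp ∨ u = cq) → ∀ T j, u ≤ j → j ≤ T → (T + j) % 2 = 0 →
        R T (x j) := by
      intro u hu T j huj hjT hparity
      have h1 : R (u + 2 * ((T - j)/2)) (x u) := hbU u hu _ u (hRx u)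
      have h2 := hpath (j - u) _ _ h1
      have e1 : u + (j - u) = j := by omega
      have e2 : u + 2 * ((T - j)/2) + (j - u) = T := by omega
      rw [e1, e2] at h2; exact h2
    -- ROUTE RB : T ≡ j + m (mod 2), T ≥ j + m
    have routeRB : ∀ T j, j + m ≤ T → (T + j + m) % 2 = 0 → R T (x j) := by
      intro T j hjT hparity
      have h1 : R (cp + 2 * ((T - (j+m))/2)) (x cp) := hbU cp (Or.inl rfl) _ cp (hRx cp)
      have h2 := hpath (j + m - cp) _ _ h1
      have e1 : cp + (j + m - cp) = j + m := by omega
      have e2 : cp + 2 * ((T - (j+m))/2) + (j + m - cp) = T := by omega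
      rw [e1, e2, hxm j] at h2; exact h2
    -- start possibility at the closest point on the side of x 0
    have hstart0 : ∀ u, (u = cp ∨ u = cq) → ((z < x 0 ∧ u = cp) ∨ (x 0 < z ∧ u = cq)) →
        R 0 (x u) := by
      intro u hu hcase
      rcases hcase with ⟨h0, rfl⟩ | ⟨h0, rfl⟩
      · exact hR0 _ (Or.inl ⟨le_of_lt hcpz, hcpminG 0 h0⟩)
      · exact hR0 _ (Or.inr ⟨hcqmaxG 0 h0, le_of_lt hcqz⟩)
    -- ROUTE RC : start at u (closest on x0's side), length (j + w*m - u) + 2s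
    have routeRC : ∀ u, (u = cp ∨ u = cq) → R 0 (x u) → ∀ (w : ℕ) T j, 1 ≤ w → u ≤ j + w*m →
        (j + w*m - u) ≤ T → (T + (j + w*m - u)) % 2 = 0 → R T (x j) := by
      intro u hu h0 w T j hw huw hlen hparity
      have h1 : R (0 + 2 * ((T - (j + w*m - u))/2)) (x u) := hbU u hu _ 0 h0
      have h2 := hpath (j + w*m - u) _ _ h1
      have e1 : u + (j + w*m - u) = j + w*m := by omega
      have e2 : 0 + 2 * ((T - (j + w*m - u))/2) + (j + w*m - u) = T := by omega
      rw [e1, e2] at h2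
      have e3 : x (j + w*m) = x j := by
        have : j + w*m = j + m*w := by ring
        rw [this, hmulm]
      rw [e3] at h2; exact h2
    -- the same-side pair, case A (since no self-loop)
    obtain ⟨k, hk, hkside⟩ := hsame
    have hkm : k < m := by omega
    have hcaseA : (z ≤ x (k+1) ∧ x (k+1) ≤ x k) ∨ (x k ≤ x (k+1) ∧ x (k+1) ≤ z) := by
      rcases hkside with ⟨h1, h2⟩ | ⟨h1, h2⟩
      · right
        refine ⟨?_, le_of_lt h2⟩
        by_contra hlt
        push_neg at hlt
        exact hSL' k hkm (Or.inr ⟨le_of_lt hlt, le_of_lt h1⟩)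
      · left
        refine ⟨le_of_lt h2, ?_⟩
        by_contra hlt
        push_neg at hlt
        exact hSL' k hkm (Or.inl ⟨le_of_lt h1, le_of_lt hlt⟩)
    have hkne : x (k+1) ≠ x k := by
      intro heq
      have h1 : x ((k+1) % m) = x k := by rw [hmod]; exact heq
      have h2 := hne ((k+1) % m) k (Nat.mod_lt _ hmpos) hkm h1
      rcases Nat.lt_or_ge (k+1) m with hlt | hge
      · rw [Nat.mod_eq_of_lt hlt] at h2; omega
      · have hkm1 : k + 1 = m := by omega
        rw [hkm1, Nat.mod_self] at h2; omega
    obtain ⟨k', hk'1, hk'm, hk'or, hk'eq, hk'eq1⟩ :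
        ∃ k', 1 ≤ k' ∧ k' ≤ m ∧ (k' = k ∨ k' = m) ∧ x k' = x k ∧ x (k'+1) = x (k+1) := by
      rcases Nat.eq_zero_or_pos k with hk0 | hkpos
      · refine ⟨m, by omega, le_refl m, Or.inr rfl, ?_, ?_⟩
        · rw [hk0, show m = 0 + m by omega, hxm]
        · rw [hk0, show m + 1 = 1 + m by omega, hxm]
      · exact ⟨k, hkpos, by omega, Or.inl rfl, rfl, rfl⟩
    have hskip : ∀ n, R n (x (k' - 1)) → R (n+1) (x (k'+1)) := by
      intro n h
      have e : k' - 1 + 1 = k' := by omega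
      refine hstep n (k'-1) _ h ?_
      rw [e, hk'eq, hk'eq1]
      exact hcaseA
    -- RD routes (skip-based, used when m is even)
    have routeRDa : ∀ u, (u = cp ∨ u = cq) → ∀ T j, u ≤ k' - 1 → k' + 1 ≤ j + m →
        j + m - 1 ≤ T → (T + (j + m - 1)) % 2 = 0 → R T (x j) := by
      intro u hu T j huk hk'j hTlen hpar
      set s := (T - (j + m - 1))/2 with hs
      have h1 : R (u + 2*s) (x u) := hbU u hu s u (hRx u)
      have h2 := hpath (k' - 1 - u) _ _ h1
      have e1 : u + (k' - 1 - u) = k' - 1 := by omega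
      rw [e1] at h2
      have h3 := hskip _ h2
      have h4 := hpath (j + m - (k'+1)) _ _ h3
      have e2 : k' + 1 + (j + m - (k'+1)) = j + m := by omega
      have e3 : u + 2*s + (k'-1-u) + 1 + (j + m - (k'+1)) = T := by omega
      rw [e2, e3, hxm j] at h4
      exact h4
    have routeRDb : ∀ T j, k' + 1 ≤ cp → j + m - 1 ≤ T → (T + (j + m - 1)) % 2 = 0 →
        R T (x j) := by
      intro T j hkcp hTlen hpar
      set s := (T - (j + m - 1))/2 with hs
      have h1 : R (k'-1) (x (k'-1)) := hRx (k'-1)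
      have h2 := hskip _ h1
      have h3 := hpath (cp - (k'+1)) _ _ h2
      have e1 : k' + 1 + (cp - (k'+1)) = cp := by omega
      rw [e1] at h3
      have h4 := hbU cp (Or.inl rfl) s _ h3
      have h5 := hpath (j + m - cp) _ _ h4
      have e2 : cp + (j + m - cp) = j + m := by omega
      have e3 : k' - 1 + 1 + (cp - (k'+1)) + 2*s + (j + m - cp) = T := by omega
      rw [e2, e3, hxm j] at h5
      exact h5
    have routeRDc : ∀ T, k' = m → 2*m - 1 ≤ T → (T + (2*m - 1)) % 2 = 0 → R T (x 0) := by
      intro T hk'm2 hTlen hpar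
      set s := (T - (2*m - 1))/2 with hs
      have h1 : R (cp + 2*s) (x cp) := hbU cp (Or.inl rfl) s cp (hRx cp)
      have h2 := hpath (k' - 1 - cp) _ _ h1
      have e1 : cp + (k' - 1 - cp) = k' - 1 := by omega
      rw [e1] at h2
      have h3 := hskip _ h2
      have h4 := hpath (2*m - (k'+1)) _ _ h3
      have e2 : k' + 1 + (2*m - (k'+1)) = 0 + m * 2 := by omega
      have e3 : cp + 2*s + (k'-1-cp) + 1 + (2*m - (k'+1)) = T := by omega
      rw [e2, e3, hmulm 0 2] at h4
      exact h4
    -- final dispatch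
    intro T hT j hj
    rcases Nat.even_or_odd m with hmE | hmO
    · -- m even
      obtain ⟨mh, hmh⟩ := hmE
      rcases Nat.even_or_odd (T + j) with hpE | hpO
      · obtain ⟨ch, hch⟩ := hpE
        by_cases hmin : cp ≤ j ∨ cq ≤ j
        · rcases hmin with h | h
          · exact routeRA cp (Or.inl rfl) T j h (by omega) (by omega)
          · exact routeRA cq (Or.inr rfl) T j h (by omega) (by omega)
        · push_neg at hmin
          obtain ⟨h1, h2⟩ := hmin
          exact routeRB T j (by omega) (by omega)
      · obtain ⟨ch, hch⟩ := hpO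
        by_cases hu : cp ≤ k' - 1 ∨ cq ≤ k' - 1
        · by_cases hjk : k' = m ∧ j = 0
          · obtain ⟨hk'm2, hj0⟩ := hjk
            rw [hj0]
            rw [hj0] at hch
            exact routeRDc T hk'm2 (by omega) (by omega)
          · have hk'j : k' + 1 ≤ j + m := by
              by_cases hk'm2 : k' = m
              · have : j ≠ 0 := fun h => hjk ⟨hk'm2, h⟩
                omega
              · omega
            rcases hu with h | h
            · exact routeRDa cp (Or.inl rfl) T j h hk'j (by omega) (by omega)
            · exact routeRDa cq (Or.inr rfl) T j h hk'j (by omega) (by omega)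
        · push_neg at hu
          obtain ⟨h1, h2⟩ := hu
          have hkcp : k' + 1 ≤ cp := by
            have hk'' : k' ≤ cp := by omega
            have hk'm2 : k' < m := by omega
            have hkk' : k' = k := by
              rcases hk'or with h | h
              · exact h
              · omega
            have hcpnek : cp ≠ k' := by
              rw [hkk']
              intro hcpe
              rcases hkside with ⟨hs1, hs2⟩ | ⟨hs1, hs2⟩
              · rw [hcpe] at hcpz
                exact absurd hcpz (not_lt.2 (le_of_lt hs1))
              · rcases hcaseA with ⟨ha1, ha2⟩ | ⟨ha1, ha2⟩
                · have hlt : x (k+1) < x k := lt_of_le_of_ne ha2 hkne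
                  have hle : x cp ≤ x (k+1) := hcpminG (k+1) hs2
                  rw [hcpe] at hle
                  exact absurd hle (not_le.2 hlt)
                · exact absurd hs2 (not_lt.2 ha2)
            omega
          exact routeRDb T j hkcp (by omega) (by omega)
    · -- m odd
      obtain ⟨mh, hmh⟩ := hmO
      by_cases hmin : cp ≤ j ∨ cq ≤ j
      · rcases Nat.even_or_odd (T + j) with hpE | hpO
        · obtain ⟨ch, hch⟩ := hpE
          rcases hmin with h | h
          · exact routeRA cp (Or.inl rfl) T j h (by omega) (by omega)
          · exact routeRA cq (Or.inr rfl) T j h (by omega) (by omega)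
        · obtain ⟨ch, hch⟩ := hpO
          exact routeRB T j (by omega) (by omega)
      · push_neg at hmin
        obtain ⟨h1, h2⟩ := hmin
        rcases hside 0 with h0 | h0
        · have h0R : R 0 (x cq) := hR0 _ (Or.inr ⟨hcqmaxG 0 h0, le_of_lt hcqz⟩)
          rcases Nat.even_or_odd (T + (j + 1*m - cq)) with hpE | hpO
          · obtain ⟨ch, hch⟩ := hpE
            exact routeRC cq (Or.inr rfl) h0R 1 T j (by omega) (by omega) (by omega) (by omega)
          · obtain ⟨ch, hch⟩ := hpO
            exact routeRC cq (Or.inr rfl) h0R 2 T j (by omega) (by omega) (by omega) (by omega)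
        · have h0R : R 0 (x cp) := hR0 _ (Or.inl ⟨le_of_lt hcpz, hcpminG 0 h0⟩)
          rcases Nat.even_or_odd (T + (j + 1*m - cp)) with hpE | hpO
          · obtain ⟨ch, hch⟩ := hpE
            exact routeRC cp (Or.inl rfl) h0R 1 T j (by omega) (by omega) (by omega) (by omega)
          · obtain ⟨ch, hch⟩ := hpO
            exact routeRC cp (Or.inl rfl) h0R 2 T j (by omega) (by omega) (by omega) (by omega)


/-- If an interval `J` contains a fixed point `z` of a continuous `f : ℝ → ℝ` and a
periodic point `q` of least period `m ≥ 3`, and for some `0 ≤ k ≤ m-1` both `f^[k] q`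
and `f^[k+1] q` lie on the same side of `z`, then `f^[n] '' J` contains the whole
orbit of `q` for all `n ≥ 2m - 2`. -/
theorem image_contains_orbit
    (f : ℝ → ℝ) (hf : Continuous f)
    (J : Set ℝ) (hJ : J.OrdConnected)
    (z : ℝ) (hzJ : z ∈ J) (hfz : f z = z)
    (q : ℝ) (hqJ : q ∈ J)
    (m : ℕ) (hm : 3 ≤ m)
    (hper : f^[m] q = q) (hleast : ∀ i : ℕ, 0 < i → i < m → f^[i] q ≠ q)
    (hsame : ∃ k : ℕ, k ≤ m - 1 ∧
      ((f^[k] q < z ∧ f^[k + 1] q < z) ∨ (z < f^[k] q ∧ z < f^[k + 1] q))) :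
    ∀ n : ℕ, 2 * m - 2 ≤ n → ∀ i : ℕ, f^[i] q ∈ f^[n] '' J := by
  have hmpos : 0 < m := by omega
  -- orbit function
  set x : ℕ → ℝ := fun i => f^[i] q with hxdef
  have hxm : ∀ i, x (i + m) = x i := by
    intro i
    show f^[i + m] q = f^[i] q
    rw [Function.iterate_add_apply, hper]
  have hmulm : ∀ r t, x (r + m * t) = x r := by
    intro r t
    induction t with
    | zero => simp
    | succ t ih =>
        have e : r + m * (t+1) = (r + m * t) + m := by ring
        rw [e, hxm, ih]
  have hmod : ∀ i, x (i % m) = x i := by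
    intro i
    have h := hmulm (i % m) (i / m)
    rw [Nat.mod_add_div] at h
    exact h.symm
  -- x i never equals z
  have hzx : ∀ i, x i ≠ z := by
    intro i hiz
    have h1 : x (i % m) = z := by rw [hmod]; exact hiz
    have h2 : q = z := by
      have h3 : f^[m - i % m] (f^[i % m] q) = f^[m - i % m] z := by
        rw [show f^[i % m] q = z from h1]
      rw [← Function.iterate_add_apply, Function.iterate_fixed hfz] at h3
      have e : m - i % m + i % m = m := by
        have := Nat.mod_lt i hmpos
        omega
      rw [e, hper] at h3
      exact h3
    have h4 : f^[1] q = q := by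
      simp only [Function.iterate_one]
      rw [h2, hfz, ← h2]
    exact hleast 1 one_pos (by omega) h4
  -- distinctness of the first m orbit points
  have hne : ∀ i j, i < m → j < m → x i = x j → i = j := by
    have key : ∀ i j, i < j → j < m → x i = x j → False := by
      intro i j hij hjm heq
      have h1 : f^[m - j] (f^[i] q) = f^[m - j] (f^[j] q) := by
        rw [show f^[i] q = f^[j] q from heq]
      rw [← Function.iterate_add_apply, ← Function.iterate_add_apply] at h1
      have e : m - j + j = m := by omega
      rw [e, hper] at h1
      exact hleast (m - j + i) (by omega) (by omega) h1
    intro i j him hjm heq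
    rcases lt_trichotomy i j with h | h | h
    · exact absurd heq (fun heq => key i j h hjm heq)
    · exact h
    · exact absurd heq.symm (fun heq => key j i h him heq)
  -- properties of the images K n = f^[n] '' J
  have hzK : ∀ n, z ∈ f^[n] '' J := fun n => ⟨z, hzJ, Function.iterate_fixed hfz n⟩
  have hKconn : ∀ n, OrdConnected (f^[n] '' J) := by
    intro n
    exact ((hJ.isPreconnected).image _ ((hf.iterate n).continuousOn)).ordConnected
  -- apply the core lemma
  have hcore := orbit_core x z m (fun n v => v ∈ f^[n] '' J) hm hxm hzx hne
    (by
      intro v hv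
      simp only [Function.iterate_zero, Set.image_id]
      rcases hv with ⟨hv1, hv2⟩ | ⟨hv1, hv2⟩
      · exact hJ.out hzJ hqJ ⟨hv1, hv2⟩
      · exact hJ.out hqJ hzJ ⟨hv1, hv2⟩)
    (by
      intro n i v hxi hbtw
      have himg : x (i+1) ∈ f^[n+1] '' J := by
        obtain ⟨w, hw, hwx⟩ := hxi
        refine ⟨w, hw, ?_⟩
        rw [Function.iterate_succ_apply', hwx]
        exact (Function.iterate_succ_apply' f i q).symm
      have hzi : z ∈ f^[n+1] '' J := hzK _
      have hconn := hKconn (n+1)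
      rcases hbtw with ⟨h1, h2⟩ | ⟨h1, h2⟩
      · exact hconn.out hzi himg ⟨h1, h2⟩
      · exact hconn.out himg hzi ⟨h1, h2⟩)
    hsame
  intro n hn i
  have h1 := hcore n hn (i % m) (Nat.mod_lt _ hmpos)
  show x i ∈ f^[n] '' J
  rw [← hmod i]
  exact h1
end

section
/- Let f be a continuous map on a compact interval I = [a,b] whose periodic points are dense in I. If K is a proper closed subinterval of I with f^s(K) ⊆ K for some positive integer s, then f²(K) = K. -/
open Set Function

/-- Periodic points of `f` inside `Icc a b`. -/
private def PerPts (f : ℝ → ℝ) (a b : ℝ) : Set ℝ :=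
  {p | p ∈ Set.Icc a b ∧ ∃ n : ℕ, 1 ≤ n ∧ f^[n] p = p}

/-- The "next" relation for an injective labelling `cc`. -/
private def NxtP {t : ℕ} (cc : ZMod t → ℝ) (u v : ZMod t) : Prop :=
  cc u < cc v ∧ ∀ k, ¬(cc u < cc k ∧ cc k < cc v)

/-- Iterates are continuous on the invariant interval. -/
private lemma iterContOn {f : ℝ → ℝ} {a b : ℝ} (hf : ContinuousOn f (Set.Icc a b))
    (hmaps : Set.MapsTo f (Set.Icc a b) (Set.Icc a b)) (n : ℕ) :
    ContinuousOn f^[n] (Set.Icc a b) := by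
  induction n with
  | zero => simpa using continuousOn_id
  | succ n ih =>
    have : f^[n + 1] = f^[n] ∘ f := Function.iterate_succ f n
    rw [this]
    exact ih.comp hf hmaps

/-- If some iterate maps `K` into itself, it maps `K` onto itself
(by density of periodic points). -/
private lemma claimC {f : ℝ → ℝ} {a b c d : ℝ} (hf : ContinuousOn f (Set.Icc a b))
    (hmaps : Set.MapsTo f (Set.Icc a b) (Set.Icc a b))
    (hdense : ∀ O : Set ℝ, IsOpen O → (O ∩ Set.Icc a b).Nonempty →
      ∃ p ∈ O ∩ Set.Icc a b, ∃ n : ℕ, 1 ≤ n ∧ f^[n] p = p)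
    (hcd : c < d) (hKsub : Set.Icc c d ⊆ Set.Icc a b)
    (m : ℕ) (H : f^[m] '' Set.Icc c d ⊆ Set.Icc c d) :
    f^[m] '' Set.Icc c d = Set.Icc c d := by
  refine Set.Subset.antisymm H ?_
  have hScpt : IsCompact (f^[m] '' Set.Icc c d) :=
    isCompact_Icc.image_of_continuousOn ((iterContOn hf hmaps m).mono hKsub)
  have hScl : IsClosed (f^[m] '' Set.Icc c d) := hScpt.isClosed
  -- invariance of K under repeated f^[m]
  have hIter : ∀ k : ℕ, ∀ x ∈ Set.Icc c d, f^[m * k] x ∈ Set.Icc c d := by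
    intro k
    induction k with
    | zero => intro x hx; simpa using hx
    | succ k ih =>
      intro x hx
      have : m * (k + 1) = m + m * k := by ring
      rw [this, Function.iterate_add_apply]
      exact H ⟨_, ih x hx, rfl⟩
  intro x hx
  rw [← hScl.closure_eq]
  rw [mem_closure_iff_nhds]
  intro U hU
  -- find a periodic point in U ∩ (c,d)
  have hxcl : x ∈ closure (Set.Ioo c d) := by
    rw [closure_Ioo hcd.ne]; exact hx
  have hne : (interior U ∩ Set.Ioo c d).Nonempty := by
    have := mem_closure_iff_nhds.1 hxcl (interior U) (interior_mem_nhds.2 hU)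
    exact this.imp fun y hy => ⟨hy.1, hy.2⟩
  have hopen : IsOpen (interior U ∩ Set.Ioo c d) := isOpen_interior.inter isOpen_Ioo
  have hne2 : ((interior U ∩ Set.Ioo c d) ∩ Set.Icc a b).Nonempty := by
    obtain ⟨y, hy⟩ := hne
    exact ⟨y, hy, hKsub (Set.Ioo_subset_Icc_self hy.2)⟩
  obtain ⟨p, ⟨hpU, hpK⟩, n, hn1, hpn⟩ := hdense _ hopen hne2
  have hpK' : p ∈ Set.Icc c d := Set.Ioo_subset_Icc_self hpU.2
  -- p is in the image
  have hq : f^[m] (f^[m * (n - 1)] p) = p := by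
    rw [← Function.iterate_add_apply]
    have : m + m * (n - 1) = n * m := by
      cases n with
      | zero => omega
      | succ k => simp [Nat.succ_sub_one]; ring
    rw [this, Function.iterate_mul]
    exact Function.iterate_fixed hpn m
  exact ⟨p, ⟨interior_subset hpU.1, ⟨_, hIter (n-1) p hpK', hq⟩⟩⟩

/-- Purely combinatorial: an injective labelling of `ZMod t` (`t ≥ 3`) whose
adjacency structure is preserved by `+1` is impossible. -/
private lemma comb (t : ℕ) (ht : 3 ≤ t) (cc : ZMod t → ℝ)
    (hinj : Function.Injective cc)
    (hpres : ∀ u v : ZMod t, NxtP cc u v → NxtP cc (u+1) (v+1) ∨ NxtP cc (v+1) (u+1)) :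
    False := by
  classical
  haveI : NeZero t := ⟨by omega⟩
  -- the rank of an element: how many elements lie below it
  set rank : ZMod t → ℕ := fun u => (Finset.univ.filter fun k => cc k < cc u).card
    with hrankdef
  have hcard : Fintype.card (ZMod t) = t := ZMod.card t
  have rank_lt : ∀ u v, cc u < cc v → rank u < rank v := by
    intro u v huv
    apply Finset.card_lt_card
    constructor
    · intro k hk
      rw [Finset.mem_filter] at hk ⊢
      exact ⟨hk.1, hk.2.trans huv⟩
    · intro hsub
      have : u ∈ Finset.univ.filter fun k => cc k < cc u := by
        apply hsub
        rw [Finset.mem_filter]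
        exact ⟨Finset.mem_univ u, huv⟩
      rw [Finset.mem_filter] at this
      exact lt_irrefl _ this.2
  have rank_inj : ∀ u v, rank u = rank v → u = v := by
    intro u v huv
    rcases lt_trichotomy (cc u) (cc v) with h | h | h
    · exact absurd huv (rank_lt u v h).ne
    · exact hinj h
    · exact absurd huv.symm (rank_lt v u h).ne
  have rank_le : ∀ u, rank u ≤ t - 1 := by
    intro u
    have h1 : (Finset.univ.filter fun k => cc k < cc u) ⊆ Finset.univ.erase u := by
      intro k hk
      rw [Finset.mem_filter] at hk
      refine Finset.mem_erase.2 ⟨fun he => ?_, Finset.mem_univ k⟩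
      rw [he] at hk
      exact lt_irrefl _ hk.2
    calc rank u ≤ (Finset.univ.erase u).card := Finset.card_le_card h1
      _ = t - 1 := by rw [Finset.card_erase_of_mem (Finset.mem_univ u),
            Finset.card_univ, hcard]
  have rank_succ : ∀ u v, NxtP cc u v → rank v = rank u + 1 := by
    intro u v ⟨huv, hbtw⟩
    have hins : (Finset.univ.filter fun k => cc k < cc v)
        = insert u (Finset.univ.filter fun k => cc k < cc u) := by
      ext k
      simp only [Finset.mem_filter, Finset.mem_insert, Finset.mem_univ, true_and]
      constructor
      · intro hk
        rcases lt_trichotomy (cc k) (cc u) with h | h | h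
        · exact Or.inr h
        · exact Or.inl (hinj h)
        · exact absurd ⟨h, hk⟩ (hbtw k)
      · rintro (rfl | h)
        · exact huv
        · exact h.trans huv
    show (Finset.univ.filter fun k => cc k < cc v).card = _
    rw [hins, Finset.card_insert_of_notMem]
    intro hmem
    rw [Finset.mem_filter] at hmem
    exact lt_irrefl _ hmem.2
  have rank_zero_eq : ∀ u v, rank u = 0 → rank v = 0 → u = v :=
    fun u v h1 h2 => rank_inj u v (h1.trans h2.symm)
  -- chains increase rank linearly
  have chainRank : ∀ (y : ℕ → ZMod t), (∀ r, r + 1 < t → NxtP cc (y r) (y (r + 1))) →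
      ∀ r, r < t → rank (y r) = rank (y 0) + r := by
    intro y hy r
    induction r with
    | zero => intro _; rfl
    | succ r ih =>
      intro h
      rw [rank_succ _ _ (hy r h), ih (by omega)]
      omega
  have chainZero : ∀ (y : ℕ → ZMod t), (∀ r, r + 1 < t → NxtP cc (y r) (y (r + 1))) →
      rank (y 0) = 0 := by
    intro y hy
    have h1 := chainRank y hy (t - 1) (by omega)
    have h2 := rank_le (y (t - 1))
    omega
  -- existence of a next element
  have exists_above : ∀ u, rank u < t - 1 → ∃ w, cc u < cc w := by
    intro u hu
    by_contra hno
    push_neg at hno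
    have : Finset.univ.erase u ⊆ (Finset.univ.filter fun k => cc k < cc u) := by
      intro k hk
      rw [Finset.mem_erase] at hk
      rw [Finset.mem_filter]
      refine ⟨Finset.mem_univ k, ?_⟩
      rcases (hno k).lt_or_eq with h | h
      · exact h
      · exact absurd (hinj h.symm).symm hk.1
    have h2 := Finset.card_le_card this
    rw [Finset.card_erase_of_mem (Finset.mem_univ u), Finset.card_univ, hcard] at h2
    have h3 : (Finset.univ.filter fun k => cc k < cc u).card < t - 1 := hu
    omega
  have exists_nxt : ∀ u, (∃ w, cc u < cc w) → ∃ v, NxtP cc u v := by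
    intro u ⟨w, hw⟩
    have hne : (Finset.univ.filter fun k => cc u < cc k).Nonempty :=
      ⟨w, Finset.mem_filter.2 ⟨Finset.mem_univ w, hw⟩⟩
    obtain ⟨v, hv, hvmin⟩ := Finset.exists_min_image _ cc hne
    rw [Finset.mem_filter] at hv
    refine ⟨v, hv.2, fun k ⟨h1, h2⟩ => ?_⟩
    have := hvmin k (Finset.mem_filter.2 ⟨Finset.mem_univ k, h1⟩)
    exact absurd h2 (not_lt.2 this)
  -- the walk along the order
  set nxtF : ZMod t → ZMod t := fun u =>
    if h : ∃ v, NxtP cc u v then h.choose else u with hnxtFdef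
  have nxtF_spec : ∀ u, (∃ w, cc u < cc w) → NxtP cc u (nxtF u) := by
    intro u hu
    have h := exists_nxt u hu
    show NxtP cc u (if h' : ∃ v, NxtP cc u v then h'.choose else u)
    rw [dif_pos h]
    exact h.choose_spec
  obtain ⟨m₀, _, hm₀⟩ := Finset.exists_min_image Finset.univ cc
    (Finset.univ_nonempty_iff.2 ⟨(0 : ZMod t)⟩)
  set x : ℕ → ZMod t := fun r => nxtF^[r] m₀ with hxdef
  have hx0 : rank (x 0) = 0 := by
    show (Finset.univ.filter fun k => cc k < cc (nxtF^[0] m₀)).card = 0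
    rw [Finset.card_eq_zero, Finset.filter_eq_empty_iff]
    intro k _
    simp only [Function.iterate_zero, id_eq]
    exact not_lt.2 (hm₀ k (Finset.mem_univ k))
  have key : ∀ r, r < t → rank (x r) = r ∧ (r + 1 < t → NxtP cc (x r) (x (r + 1))) := by
    intro r
    induction r with
    | zero =>
      intro _
      refine ⟨hx0, fun h1 => ?_⟩
      have hab : ∃ w, cc (x 0) < cc w := exists_above _ (by rw [hx0]; omega)
      have := nxtF_spec _ hab
      rwa [show x 1 = nxtF (x 0) from Function.iterate_succ_apply' nxtF 0 m₀]
    | succ r ih =>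
      intro h
      obtain ⟨hr, hnxt⟩ := ih (by omega)
      have hN := hnxt h
      have hr1 : rank (x (r + 1)) = r + 1 := by rw [rank_succ _ _ hN, hr]
      refine ⟨hr1, fun h2 => ?_⟩
      have hab : ∃ w, cc (x (r + 1)) < cc w := exists_above _ (by rw [hr1]; omega)
      have := nxtF_spec _ hab
      rwa [show x (r + 2) = nxtF (x (r + 1)) from Function.iterate_succ_apply' nxtF (r + 1) m₀]
  have hxrank : ∀ r, r < t → rank (x r) = r := fun r hr => (key r hr).1
  have hxchain : ∀ r, r + 1 < t → NxtP cc (x r) (x (r + 1)) :=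
    fun r hr => (key r (by omega)).2 hr
  have hxinj : ∀ r r', r < t → r' < t → x r = x r' → r = r' := by
    intro r r' hr hr' he
    have := hxrank r hr
    rw [he, hxrank r' hr'] at this
    omega
  -- uniqueness of successor and predecessor
  have nxt_unique : ∀ u v v', NxtP cc u v → NxtP cc u v' → v = v' := by
    intro u v v' h1 h2
    exact rank_inj _ _ (by rw [rank_succ _ _ h1, rank_succ _ _ h2])
  have pred_unique : ∀ u u' v, NxtP cc u v → NxtP cc u' v → u = u' := by
    intro u u' v h1 h2
    rcases lt_trichotomy (cc u) (cc u') with h | h | h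
    · exact absurd ⟨h, h2.1⟩ (h1.2 u')
    · exact hinj h
    · exact absurd ⟨h, h1.1⟩ (h2.2 u)
  -- the sign dichotomy
  have hsigns : (∀ r, r + 1 < t → NxtP cc (x r + 1) (x (r + 1) + 1))
      ∨ (∀ r, r + 1 < t → NxtP cc (x (r + 1) + 1) (x r + 1)) := by
    rcases hpres _ _ (hxchain 0 (by omega)) with hf0 | hb0
    · left
      intro r
      induction r with
      | zero => intro _; exact hf0
      | succ r ih =>
        intro h
        have hfr := ih (by omega)
        rcases hpres _ _ (hxchain (r + 1) h) with hf | hb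
        · exact hf
        · exfalso
          have he : x r + 1 = x (r + 2) + 1 := pred_unique _ _ _ hfr hb
          have : x r = x (r + 2) := by
            have := add_right_cancel he
            exact this
          have := hxinj r (r + 2) (by omega) (by omega) this
          omega
    · right
      intro r
      induction r with
      | zero => intro _; exact hb0
      | succ r ih =>
        intro h
        have hbr := ih (by omega)
        rcases hpres _ _ (hxchain (r + 1) h) with hf | hb
        · exfalso
          have he : x r + 1 = x (r + 2) + 1 := nxt_unique _ _ _ hbr hf
          have : x r = x (r + 2) := add_right_cancel he
          have := hxinj r (r + 2) (by omega) (by omega) this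
          omega
        · exact hb
  rcases hsigns with hfwd | hbwd
  · -- all forward: the shift is order preserving, hence the identity
    have hz := chainZero (fun r => x r + 1) hfwd
    have : x 0 + 1 = x 0 := rank_zero_eq _ _ hz hx0
    have h1 : (1 : ZMod t) = 0 := by
      have := add_eq_left.1 this
      exact this
    have h2 : ((1 : ℕ) : ZMod t) = 0 := by exact_mod_cast h1
    rw [ZMod.natCast_eq_zero_iff] at h2
    have := Nat.le_of_dvd one_pos h2
    omega
  · -- all backward: the shift is order reversing, hence an involution
    set z : ℕ → ZMod t := fun r => x (t - 1 - r) + 1 with hzdef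
    have hzchain : ∀ r, r + 1 < t → NxtP cc (z r) (z (r + 1)) := by
      intro r hr
      have h1 : t - 1 - r = (t - 2 - r) + 1 := by omega
      have h2 : t - 1 - (r + 1) = t - 2 - r := by omega
      have := hbwd (t - 2 - r) (by omega)
      show NxtP cc (x (t - 1 - r) + 1) (x (t - 1 - (r + 1)) + 1)
      rw [h1, h2]
      exact this
    have hz0 := chainZero z hzchain
    have hzrank : ∀ r, r < t → rank (z r) = r := by
      intro r hr
      rw [chainRank z hzchain r hr, hz0]
      omega
    have hzx : ∀ r, r < t → z r = x r := by
      intro r hr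
      exact rank_inj _ _ ((hzrank r hr).trans (hxrank r hr).symm)
    have e1 : x (t - 1) + 1 = x 0 := hzx 0 (by omega)
    have e2 : x 0 + 1 = x (t - 1) := by
      have := hzx (t - 1) (by omega)
      have h3 : t - 1 - (t - 1) = 0 := by omega
      show x 0 + 1 = x (t - 1)
      rw [← h3]
      exact this
    have : x 0 + 1 + 1 = x 0 := by rw [e2]; exact e1
    have h1 : (2 : ZMod t) = 0 := by
      have h := add_eq_left.1 (by rw [add_assoc] at this; exact this)
      have : (1 : ZMod t) + 1 = 2 := by ring
      rw [this] at h
      exact h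
    have h2 : ((2 : ℕ) : ZMod t) = 0 := by exact_mod_cast h1
    rw [ZMod.natCast_eq_zero_iff] at h2
    have := Nat.le_of_dvd two_pos h2
    omega

/-- Key analytic lemma: the image of the closure of a gap of a closed invariant set
avoids the interior of that set, thanks to dense periodic points. -/
private lemma gapAvoid {f : ℝ → ℝ} {a b : ℝ} (hf : ContinuousOn f (Set.Icc a b))
    (hmaps : Set.MapsTo f (Set.Icc a b) (Set.Icc a b))
    (hdense : ∀ O : Set ℝ, IsOpen O → (O ∩ Set.Icc a b).Nonempty →
      ∃ p ∈ O ∩ Set.Icc a b, ∃ n : ℕ, 1 ≤ n ∧ f^[n] p = p)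
    (Y : Set ℝ) (hYc : IsClosed Y) (hYinv : f '' Y ⊆ Y) (hYsub : Y ⊆ Set.Icc a b)
    {u v : ℝ} (huv : u < v) (hu : u ∈ Set.Icc a b) (hv : v ∈ Set.Icc a b)
    (hgap : Set.Ioo u v ∩ Y = ∅) :
    ∀ z ∈ f '' Set.Icc u v, z ∉ interior Y := by
  have hIccab : Set.Icc u v ⊆ Set.Icc a b := Set.Icc_subset_Icc hu.1 hv.2
  set S₀ : Set ℝ := Set.Ioo u v ∩ PerPts f a b with hS₀
  -- periodic points in the gap have images outside Y
  have hYiter : ∀ k : ℕ, ∀ y ∈ Y, f^[k] y ∈ Y := by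
    intro k
    induction k with
    | zero => intro y hy; simpa using hy
    | succ k ih =>
      intro y hy
      rw [Function.iterate_succ_apply]
      exact ih _ (hYinv ⟨y, hy, rfl⟩)
  have havoid : f '' S₀ ⊆ Set.Icc a b \ Y := by
    rintro z ⟨p, ⟨hpIoo, hpab, n, hn1, hpn⟩, rfl⟩
    refine ⟨hmaps hpab, fun hfpY => ?_⟩
    have hpY : p ∈ Y := by
      have : f^[n - 1 + 1] p = p := by rwa [Nat.sub_add_cancel hn1]
      rw [Function.iterate_add_apply] at this
      simp only [Function.iterate_one] at this
      rw [← this]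
      exact hYiter (n - 1) _ hfpY
    have : p ∈ Set.Ioo u v ∩ Y := ⟨hpIoo, hpY⟩
    rw [hgap] at this
    exact this
  -- density of gap periodic points in the closed gap
  have hdens : Set.Icc u v ⊆ closure S₀ := by
    intro x hx
    have hxcl : x ∈ closure (Set.Ioo u v) := by rw [closure_Ioo huv.ne]; exact hx
    rw [mem_closure_iff_nhds]
    intro U hU
    have hne : (interior U ∩ Set.Ioo u v).Nonempty := by
      have := mem_closure_iff_nhds.1 hxcl (interior U) (interior_mem_nhds.2 hU)
      exact this.imp fun y hy => ⟨hy.1, hy.2⟩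
    obtain ⟨p, ⟨hpU, hpab⟩, n, hn1, hpn⟩ := hdense _ (isOpen_interior.inter isOpen_Ioo)
      (hne.imp fun y hy => ⟨hy, hIccab (Set.Ioo_subset_Icc_self hy.2)⟩)
    exact ⟨p, interior_subset hpU.1, hpU.2, hpab, n, hn1, hpn⟩
  -- conclude via continuity
  have hclS₀ : closure S₀ ⊆ Set.Icc a b := by
    have : closure S₀ ⊆ closure (Set.Ioo u v) := closure_mono Set.inter_subset_left
    rw [closure_Ioo huv.ne] at this
    exact this.trans hIccab
  have himg : f '' Set.Icc u v ⊆ closure (f '' S₀) := by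
    have h1 : f '' Set.Icc u v ⊆ f '' closure S₀ := Set.image_mono hdens
    exact h1.trans ((hf.mono hclS₀).image_closure)
  intro z hz hzint
  have h2 : closure (f '' S₀) ⊆ (interior Y)ᶜ := by
    refine closure_minimal ?_ (isOpen_interior.isClosed_compl)
    exact fun w hw => fun hwi => (havoid hw).2 (interior_subset hwi)
  exact h2 (himg hz) hzint

/-- The main cycle lemma: there is no cycle of intervals of length `t ≥ 3`
(with no containments) for a map with dense periodic points. -/
private lemma cycleLemma {f : ℝ → ℝ} {a b : ℝ} (hf : ContinuousOn f (Set.Icc a b))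
    (hmaps : Set.MapsTo f (Set.Icc a b) (Set.Icc a b))
    (hdense : ∀ O : Set ℝ, IsOpen O → (O ∩ Set.Icc a b).Nonempty →
      ∃ p ∈ O ∩ Set.Icc a b, ∃ n : ℕ, 1 ≤ n ∧ f^[n] p = p)
    (t : ℕ) (ht : 3 ≤ t) (cc dd : ZMod t → ℝ) (hlt : ∀ j, cc j < dd j)
    (hsub : ∀ j, Set.Icc (cc j) (dd j) ⊆ Set.Icc a b)
    (hshift : ∀ j, f '' Set.Icc (cc j) (dd j) = Set.Icc (cc (j+1)) (dd (j+1)))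
    (hnc : ∀ i j : ZMod t, Set.Icc (cc i) (dd i) ⊆ Set.Icc (cc j) (dd j) → i = j) :
    False := by
  classical
  haveI : NeZero t := ⟨by omega⟩
  -- staircase ordering of the intervals
  have stair : ∀ i j, cc i < cc j → dd i < dd j := by
    intro i j hij
    by_contra h
    push_neg at h
    have := hnc j i (Set.Icc_subset_Icc hij.le h)
    rw [this] at hij
    exact lt_irrefl _ hij
  have hinj_c : Function.Injective cc := by
    intro i j hij
    rcases le_total (dd i) (dd j) with h | h
    · exact hnc i j (Set.Icc_subset_Icc hij.ge h)
    · exact (hnc j i (Set.Icc_subset_Icc hij.le h)).symm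
  have hinj_d : Function.Injective dd := by
    intro i j hij
    rcases le_total (cc i) (cc j) with h | h
    · exact (hnc j i (Set.Icc_subset_Icc h hij.ge)).symm
    · exact hnc i j (Set.Icc_subset_Icc h hij.le)
  have stair' : ∀ i j, dd i < dd j → cc i < cc j := by
    intro i j hij
    rcases lt_trichotomy (cc i) (cc j) with h | h | h
    · exact h
    · rw [hinj_c h] at hij; exact absurd hij (lt_irrefl _)
    · exact absurd hij (not_lt.2 (stair j i h).le)
  -- the invariant union
  set Y : Set ℝ := ⋃ j : ZMod t, Set.Icc (cc j) (dd j) with hYdef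
  have hYc : IsClosed Y := isClosed_iUnion_of_finite fun j => isClosed_Icc
  have hYsub : Y ⊆ Set.Icc a b := Set.iUnion_subset hsub
  have hYinv : f '' Y ⊆ Y := by
    rw [hYdef, Set.image_iUnion]
    intro z hz
    rw [Set.mem_iUnion] at hz
    obtain ⟨j, hj⟩ := hz
    rw [hshift j] at hj
    exact Set.mem_iUnion.2 ⟨j + 1, hj⟩
  have hmemY : ∀ j, Set.Icc (cc j) (dd j) ⊆ Y := fun j => by
    rw [hYdef]
    exact Set.subset_iUnion (fun i : ZMod t => Set.Icc (cc i) (dd i)) j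
  have hIooInt : ∀ j, Set.Ioo (cc j) (dd j) ⊆ interior Y := fun j =>
    interior_maximal ((Set.Ioo_subset_Icc_self).trans (hmemY j)) isOpen_Ioo
  -- every interval in the cycle has an exclusive point
  have hshift' : ∀ j : ZMod t, Set.Icc (cc (j + 1)) (dd (j + 1)) =
      f '' Set.Icc (cc j) (dd j) := fun j => (hshift j).symm
  obtain ⟨M, _, hM⟩ := Finset.exists_max_image Finset.univ dd
    (Finset.univ_nonempty_iff.2 ⟨(0 : ZMod t)⟩)
  have exclStep : ∀ k : ℕ, ∃ x, x ∈ Set.Icc (cc (M - k)) (dd (M - k)) ∧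
      ∀ i, i ≠ M - (k : ZMod t) → x ∉ Set.Icc (cc i) (dd i) := by
    intro k
    induction k with
    | zero =>
      refine ⟨dd M, by simpa using Set.right_mem_Icc.2 (hlt M).le, fun i hi hmem => ?_⟩
      have h1 : dd M ≤ dd i := hmem.2
      have h2 : dd i ≤ dd M := hM i (Finset.mem_univ i)
      exact hi (by simpa using hinj_d (le_antisymm h2 h1))
    | succ k ih =>
      obtain ⟨x, hx, hexcl⟩ := ih
      have hMk : (M - (k + 1 : ℕ)) + 1 = M - k := by push_cast; ring
      have himg : Set.Icc (cc (M - k)) (dd (M - k)) =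
          f '' Set.Icc (cc (M - (k + 1 : ℕ))) (dd (M - (k + 1 : ℕ))) := by
        rw [← hMk]
        exact hshift' _
      rw [himg] at hx
      obtain ⟨w, hw, hfw⟩ := hx
      refine ⟨w, hw, fun i hi hmem => ?_⟩
      have : f w ∈ Set.Icc (cc (i + 1)) (dd (i + 1)) := by
        rw [← hshift i]
        exact ⟨w, hmem, rfl⟩
      rw [hfw] at this
      refine hexcl (i + 1) ?_ this
      intro he
      apply hi
      have : i + 1 - 1 = M - (k : ZMod t) - 1 := by rw [he]
      simpa [sub_eq_add_neg, add_assoc, add_comm, add_left_comm] using this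
  have excl : ∀ j : ZMod t, ∃ x, x ∈ Set.Icc (cc j) (dd j) ∧
      ∀ i, i ≠ j → x ∉ Set.Icc (cc i) (dd i) := by
    intro j
    obtain ⟨x, hx, hexcl⟩ := exclStep (M - j).val
    have : M - ((M - j).val : ZMod t) = j := by
      rw [ZMod.natCast_rightInverse (M - j)]
      ring
    rw [this] at hx hexcl
    exact ⟨x, hx, hexcl⟩
  -- intervals separated by a third are disjoint
  have btwn_disj : ∀ i j k : ZMod t, cc i < cc k → cc k < cc j →
      Set.Icc (cc i) (dd i) ∩ Set.Icc (cc j) (dd j) = ∅ := by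
    intro i j k h1 h2
    obtain ⟨x, hx, hexcl⟩ := excl k
    have hxi : x ∉ Set.Icc (cc i) (dd i) := hexcl i (fun h => by rw [h] at h1; exact lt_irrefl _ h1)
    have hxj : x ∉ Set.Icc (cc j) (dd j) := hexcl j (fun h => by rw [h] at h2; exact lt_irrefl _ h2)
    have hgt : dd i < x := by
      rcases lt_or_ge (dd i) x with h | h
      · exact h
      · exact absurd ⟨(h1.le.trans hx.1 : cc i ≤ x), h⟩ hxi
    have hlt2 : x < cc j := by
      rcases lt_or_ge x (cc j) with h | h
      · exact h
      · exact absurd ⟨h, hx.2.trans (stair k j h2).le⟩ hxj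
    ext z
    simp only [Set.mem_inter_iff, Set.mem_Icc, Set.mem_empty_iff_false, iff_false]
    rintro ⟨⟨_, hz1⟩, hz2, _⟩
    linarith
  -- two intersecting intervals are adjacent
  have mkNxt : ∀ p q : ZMod t, p ≠ q →
      (Set.Icc (cc p) (dd p) ∩ Set.Icc (cc q) (dd q)).Nonempty →
      NxtP cc p q ∨ NxtP cc q p := by
    intro p q hne hcap
    rcases lt_trichotomy (cc p) (cc q) with h | h | h
    · left
      refine ⟨h, fun k ⟨hk1, hk2⟩ => ?_⟩
      rw [btwn_disj p q k hk1 hk2] at hcap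
      exact Set.not_nonempty_empty hcap
    · exact absurd (hinj_c h) hne
    · right
      refine ⟨h, fun k ⟨hk1, hk2⟩ => ?_⟩
      rw [Set.inter_comm, btwn_disj q p k hk1 hk2] at hcap
      exact Set.not_nonempty_empty hcap
  -- the faces of a gap are adjacent intervals
  have faces : ∀ (w1 w2 : ZMod t) (p1 p2 : ℝ), p1 ∈ Set.Icc (cc w1) (dd w1) →
      p2 ∈ Set.Icc (cc w2) (dd w2) → p1 < p2 → Set.Ioo p1 p2 ∩ Y = ∅ → NxtP cc w1 w2 := by
    intro w1 w2 p1 p2 hp1 hp2 hplt hgap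
    have hBgap : ∀ w : ZMod t, ∀ z, z ∈ Set.Icc (cc w) (dd w) → z ∉ Set.Ioo p1 p2 := by
      intro w z hz hzIoo
      have : z ∈ Set.Ioo p1 p2 ∩ Y := ⟨hzIoo, hmemY w hz⟩
      rw [hgap] at this
      exact this
    have hd1 : dd w1 = p1 := by
      rcases lt_or_ge p1 (dd w1) with h | h
      · exfalso
        obtain ⟨z, hz1, hz2⟩ := exists_between (lt_min h hplt)
        exact hBgap w1 z ⟨hp1.1.trans hz1.le, (hz2.trans_le (min_le_left _ _)).le⟩
          ⟨hz1, hz2.trans_le (min_le_right _ _)⟩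
      · exact le_antisymm h hp1.2
    have hc2 : cc w2 = p2 := by
      rcases lt_or_ge (cc w2) p2 with h | h
      · exfalso
        obtain ⟨z, hz1, hz2⟩ := exists_between (max_lt h hplt)
        exact hBgap w2 z ⟨(le_max_left _ _).trans hz1.le, hz2.le.trans hp2.2⟩
          ⟨(le_max_right _ _).trans_lt hz1, hz2⟩
      · exact le_antisymm hp2.1 h
    have hccs : cc w1 < cc w2 := by
      rw [hc2]
      exact lt_of_le_of_lt (hp1.1.trans (hd1 ▸ le_refl (dd w1)) : cc w1 ≤ p1) hplt
    refine ⟨hccs, fun k ⟨hk1, hk2⟩ => ?_⟩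
    have hddk : p1 < dd k := by
      rw [← hd1]
      exact stair w1 k hk1
    have hck2 : cc k < p2 := by rw [← hc2]; exact hk2
    rcases lt_or_ge p1 (cc k) with h | h
    · exact hBgap k (cc k) ⟨le_refl _, (hlt k).le⟩ ⟨h, hck2⟩
    · obtain ⟨z, hz1, hz2⟩ := exists_between (lt_min hddk hplt)
      exact hBgap k z ⟨h.trans hz1.le, (hz2.trans_le (min_le_left _ _)).le⟩
        ⟨hz1, hz2.trans_le (min_le_right _ _)⟩
  -- adjacency is preserved by the shift
  have hpres : ∀ u v : ZMod t, NxtP cc u v → NxtP cc (u + 1) (v + 1) ∨ NxtP cc (v + 1) (u + 1) := by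
    rintro u v ⟨huv, hbtw⟩
    have hne : u ≠ v := fun h => by rw [h] at huv; exact lt_irrefl _ huv
    have hne1 : u + 1 ≠ v + 1 := fun h => hne (add_right_cancel h)
    rcases Set.eq_empty_or_nonempty
      (Set.Icc (cc u) (dd u) ∩ Set.Icc (cc v) (dd v)) with hcap | hcap
    · -- disjoint intervals: there is a genuine gap between them
      have hdc : dd u < cc v := by
        rcases lt_or_ge (dd u) (cc v) with h | h
        · exact h
        · exfalso
          have : cc v ∈ Set.Icc (cc u) (dd u) ∩ Set.Icc (cc v) (dd v) :=
            ⟨⟨huv.le, h⟩, ⟨le_refl _, (hlt v).le⟩⟩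
          rw [hcap] at this
          exact this
      have hgap : Set.Ioo (dd u) (cc v) ∩ Y = ∅ := by
        ext z
        simp only [Set.mem_inter_iff, Set.mem_Ioo, Set.mem_empty_iff_false, iff_false, not_and]
        rintro ⟨hz1, hz2⟩ hzY
        rw [hYdef, Set.mem_iUnion] at hzY
        obtain ⟨w, hw⟩ := hzY
        have hdw : dd u < dd w := lt_of_lt_of_le hz1 hw.2
        exact hbtw w ⟨stair' u w hdw, lt_of_le_of_lt hw.1 hz2⟩
      have hduab : dd u ∈ Set.Icc a b := hsub u (Set.right_mem_Icc.2 (hlt u).le)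
      have hcvab : cc v ∈ Set.Icc a b := hsub v (Set.left_mem_Icc.2 (hlt v).le)
      have havoid := gapAvoid hf hmaps hdense Y hYc hYinv hYsub hdc hduab hcvab hgap
      set S : Set ℝ := f '' Set.Icc (dd u) (cc v) with hSdef
      have hSconn : IsPreconnected S :=
        isPreconnected_Icc.image f (hf.mono (Set.Icc_subset_Icc hduab.1 hcvab.2))
      have hpS : f (dd u) ∈ S := ⟨dd u, Set.left_mem_Icc.2 hdc.le, rfl⟩
      have hqS : f (cc v) ∈ S := ⟨cc v, Set.right_mem_Icc.2 hdc.le, rfl⟩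
      have hpB : f (dd u) ∈ Set.Icc (cc (u + 1)) (dd (u + 1)) := by
        rw [← hshift u]
        exact ⟨dd u, Set.right_mem_Icc.2 (hlt u).le, rfl⟩
      have hqB : f (cc v) ∈ Set.Icc (cc (v + 1)) (dd (v + 1)) := by
        rw [← hshift v]
        exact ⟨cc v, Set.left_mem_Icc.2 (hlt v).le, rfl⟩
      -- any interval spanned inside S is disjoint from Y
      have hSgap : ∀ z1 z2 : ℝ, z1 ∈ S → z2 ∈ S → Set.Ioo z1 z2 ∩ Y = ∅ := by
        intro z1 z2 hz1 hz2
        have hzS : Set.Icc z1 z2 ⊆ S := hSconn.Icc_subset hz1 hz2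
        ext z
        simp only [Set.mem_inter_iff, Set.mem_Ioo, Set.mem_empty_iff_false, iff_false, not_and]
        rintro ⟨h1, h2⟩ hzY
        rw [hYdef, Set.mem_iUnion] at hzY
        obtain ⟨w, hw⟩ := hzY
        have hzint : z ∉ interior Y := havoid z (hzS ⟨h1.le, h2.le⟩)
        rcases hw.1.lt_or_eq with hcw | hcw
        · rcases hw.2.lt_or_eq with hdw | hdw
          · exact hzint (hIooInt w ⟨hcw, hdw⟩)
          · -- z = dd w : take a point slightly below z
            obtain ⟨z', hz'1, hz'2⟩ := exists_between (max_lt hcw h1)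
            have hz'int : z' ∈ interior Y :=
              hIooInt w ⟨(le_max_left _ _).trans_lt hz'1, hz'2.trans_le hdw.le⟩
            exact havoid z' (hzS ⟨((le_max_right _ _).trans_lt hz'1).le,
              (hz'2.trans h2).le⟩) hz'int
        · -- z = cc w : take a point slightly above z
          obtain ⟨z', hz'1, hz'2⟩ := exists_between (lt_min (hcw ▸ hlt w) h2)
          have hz'int : z' ∈ interior Y :=
            hIooInt w ⟨hcw ▸ hz'1, hz'2.trans_le (min_le_left _ _)⟩
          exact havoid z' (hzS ⟨(h1.trans hz'1).le,
            (hz'2.trans_le (min_le_right _ _)).le⟩) hz'int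
      rcases lt_trichotomy (f (dd u)) (f (cc v)) with hpq | hpq | hpq
      · exact Or.inl (faces (u + 1) (v + 1) _ _ hpB hqB hpq (hSgap _ _ hpS hqS))
      · exact mkNxt _ _ hne1 ⟨f (dd u), hpB, hpq ▸ hqB⟩
      · exact Or.inr (faces (v + 1) (u + 1) _ _ hqB hpB hpq (hSgap _ _ hqS hpS))
    · -- intersecting intervals stay intersecting
      obtain ⟨z, hz⟩ := hcap
      have hz1 : f z ∈ Set.Icc (cc (u + 1)) (dd (u + 1)) := by
        rw [← hshift u]
        exact ⟨z, hz.1, rfl⟩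
      have hz2 : f z ∈ Set.Icc (cc (v + 1)) (dd (v + 1)) := by
        rw [← hshift v]
        exact ⟨z, hz.2, rfl⟩
      exact mkNxt _ _ hne1 ⟨f z, hz1, hz2⟩
  exact comb t ht cc hinj_c hpres

/-- If a continuous map on `[a,b]` has dense periodic points and `K = [c,d]` is a
proper closed subinterval with `f^[s] '' K ⊆ K` for some `s ≥ 1`,
then `f^[2] '' K = K`. -/
theorem invariant_subinterval_f_sq_eq
    (a b : ℝ) (hab : a < b) (f : ℝ → ℝ)
    (hf : ContinuousOn f (Set.Icc a b)) (hmaps : Set.MapsTo f (Set.Icc a b) (Set.Icc a b))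
    (hdense : ∀ O : Set ℝ, IsOpen O → (O ∩ Set.Icc a b).Nonempty →
      ∃ p ∈ O ∩ Set.Icc a b, ∃ n : ℕ, 1 ≤ n ∧ f^[n] p = p)
    (c d : ℝ) (hcd : c < d)
    (hKsub : Set.Icc c d ⊆ Set.Icc a b) (hKproper : Set.Icc c d ≠ Set.Icc a b)
    (s : ℕ) (hs : 1 ≤ s) (hinv : f^[s] '' Set.Icc c d ⊆ Set.Icc c d) :
    f^[2] '' Set.Icc c d = Set.Icc c d := by
  classical
  have hex : ∃ m : ℕ, 1 ≤ m ∧ f^[m] '' Set.Icc c d = Set.Icc c d :=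
    ⟨s, hs, claimC hf hmaps hdense hcd hKsub s hinv⟩
  set t := Nat.find hex with htdef
  obtain ⟨ht1, htK⟩ := Nat.find_spec hex
  rw [← htdef] at ht1 htK
  rcases Nat.lt_or_ge t 3 with ht3 | ht3
  · -- t = 1 or t = 2 : conclude directly
    rcases (by omega : t = 1 ∨ t = 2) with h | h
    · rw [h] at htK
      show f^[1 + 1] '' Set.Icc c d = Set.Icc c d
      rw [Function.iterate_add, Set.image_comp, htK, htK]
    · rw [h] at htK; exact htK
  · -- t ≥ 3 : derive a contradiction
    exfalso
    haveI : NeZero t := ⟨by omega⟩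
    haveI : Fact (1 < t) := ⟨by omega⟩
    set A : ℕ → Set ℝ := fun n => f^[n] '' Set.Icc c d with hAdef
    have hA0 : A 0 = Set.Icc c d := by simp [hAdef]
    have hAt : A t = Set.Icc c d := htK
    have hAsucc : ∀ n, A (n + 1) = f '' A n := by
      intro n
      show f^[n + 1] '' Set.Icc c d = f '' (f^[n] '' Set.Icc c d)
      rw [Function.iterate_succ' f n, Set.image_comp]
    have hAsub : ∀ n, A n ⊆ Set.Icc a b := by
      intro n
      exact (Set.image_mono hKsub).trans ((hmaps.iterate n).image_subset)
    have hAne : ∀ n, (A n).Nonempty := fun n => (Set.nonempty_Icc.2 hcd.le).image _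
    have hAcpt : ∀ n, IsCompact (A n) :=
      fun n => isCompact_Icc.image_of_continuousOn ((iterContOn hf hmaps n).mono hKsub)
    have hAIcc : ∀ n, A n = Set.Icc (sInf (A n)) (sSup (A n)) := by
      intro n
      exact eq_Icc_of_connected_compact
        ⟨hAne n, isPreconnected_Icc.image _ ((iterContOn hf hmaps n).mono hKsub)⟩
        (hAcpt n)
    set B : ZMod t → Set ℝ := fun j => A j.val with hBdef
    set cz : ZMod t → ℝ := fun j => sInf (A j.val) with hczdef
    set dz : ZMod t → ℝ := fun j => sSup (A j.val) with hdzdef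
    have hBIcc : ∀ j, B j = Set.Icc (cz j) (dz j) := fun j => hAIcc j.val
    have hBshift : ∀ j : ZMod t, f '' B j = B (j + 1) := by
      intro j
      have hval : (j + 1).val = (j.val + 1) % t := by
        rw [ZMod.val_add, ZMod.val_one]
      rcases Nat.lt_or_ge (j.val + 1) t with h | h
      · have : (j + 1).val = j.val + 1 := by rw [hval, Nat.mod_eq_of_lt h]
        show f '' A j.val = A (j + 1).val
        rw [this, hAsucc]
      · have hjv : j.val + 1 = t := by have := ZMod.val_lt j; omega
        have : (j + 1).val = 0 := by rw [hval, hjv, Nat.mod_self]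
        have h2 : A (j.val + 1) = f '' A j.val := hAsucc j.val
        rw [hjv] at h2
        show f '' A j.val = A (j + 1).val
        rw [this, hA0, ← hAt]
        exact h2.symm
    have hshift : ∀ j : ZMod t,
        f '' Set.Icc (cz j) (dz j) = Set.Icc (cz (j + 1)) (dz (j + 1)) := by
      intro j; rw [← hBIcc, ← hBIcc, hBshift]
    have hiter : ∀ (m : ℕ) (j : ZMod t), f^[m] '' B j = B (j + (m : ZMod t)) := by
      intro m
      induction m with
      | zero => intro j; simp
      | succ m ih =>
        intro j
        have : f^[m + 1] '' B j = f '' (f^[m] '' B j) := by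
          rw [Function.iterate_succ' f m, Set.image_comp]
        rw [this, ih, hBshift]
        push_cast
        ring_nf
    have hnc : ∀ i j : ZMod t,
        Set.Icc (cz i) (dz i) ⊆ Set.Icc (cz j) (dz j) → i = j := by
      intro i j hsub'
      by_contra hne
      have hBsub : B i ⊆ B j := by rw [hBIcc i, hBIcc j]; exact hsub'
      set e : ZMod t := j - i with hedef
      have he : e ≠ 0 := sub_ne_zero.2 (Ne.symm hne)
      have h0e : B 0 ⊆ B e := by
        have := Set.image_mono (f := f^[(-i).val]) hBsub
        rw [hiter, hiter, ZMod.natCast_rightInverse (-i)] at this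
        simpa [hedef, add_comm, sub_eq_add_neg] using this
      have hstep : ∀ k : ℕ, B (k • e) ⊆ B ((k + 1) • e) := by
        intro k
        induction k with
        | zero => simpa using h0e
        | succ k ih =>
          have := Set.image_mono (f := f^[e.val]) ih
          rw [hiter, hiter, ZMod.natCast_rightInverse e] at this
          have h1 : (k : ℕ) • e + e = (k + 1) • e := (succ_nsmul e k).symm
          have h2 : ((k : ℕ) + 1) • e + e = ((k + 1) + 1) • e := (succ_nsmul e (k + 1)).symm
          rwa [h1, h2] at this
      have hchain : ∀ k : ℕ, B (1 • e) ⊆ B ((k + 1) • e) := by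
        intro k
        induction k with
        | zero => exact subset_rfl
        | succ k ih => exact ih.trans (hstep (k + 1))
      have hte : B e ⊆ B 0 := by
        have := hchain (t - 1)
        have ht' : (t - 1) + 1 = t := by omega
        rw [ht', one_nsmul] at this
        have htz : (t : ℕ) • e = 0 := by
          rw [nsmul_eq_mul]
          simp [ZMod.natCast_self]
        rwa [htz] at this
      have hBe : B e = B 0 := Set.Subset.antisymm hte h0e
      have he1 : 1 ≤ e.val := by
        rcases Nat.eq_zero_or_pos e.val with h | h
        · exact absurd ((ZMod.val_eq_zero e).1 h) he
        · exact h
      have helt : e.val < t := ZMod.val_lt e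
      have hBe' : A e.val = A (0 : ZMod t).val := hBe
      rw [ZMod.val_zero, hA0] at hBe'
      exact Nat.find_min hex helt ⟨he1, hBe'⟩
    have hlt : ∀ j : ZMod t, cz j < dz j := by
      intro j
      have hle : cz j ≤ dz j := by
        have := hAne j.val
        rw [hAIcc j.val] at this
        exact Set.nonempty_Icc.1 this
      rcases hle.lt_or_eq with h | h
      · exact h
      · exfalso
        have hsingle : B j = {cz j} := by rw [hBIcc j, h, Set.Icc_self]
        have himg : f^[(-j).val] '' B j = B 0 := by
          rw [hiter, ZMod.natCast_rightInverse (-j)]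
          simp
        rw [hsingle, Set.image_singleton] at himg
        have hK0 : B 0 = Set.Icc c d := by
          show A (0 : ZMod t).val = _
          rw [ZMod.val_zero, hA0]
        rw [hK0] at himg
        have hc : c ∈ ({f^[(-j).val] (cz j)} : Set ℝ) := by
          rw [himg]; exact Set.left_mem_Icc.2 hcd.le
        have hd : d ∈ ({f^[(-j).val] (cz j)} : Set ℝ) := by
          rw [himg]; exact Set.right_mem_Icc.2 hcd.le
        rw [Set.mem_singleton_iff] at hc hd
        exact hcd.ne (hc.trans hd.symm)
    have hsub2 : ∀ j : ZMod t, Set.Icc (cz j) (dz j) ⊆ Set.Icc a b := by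
      intro j; rw [← hBIcc]; exact hAsub j.val
    exact cycleLemma hf hmaps hdense t ht3 cz dz hlt hsub2 hshift hnc
end

section
/- Let f : [a,b] → [a,b] be continuous. If f is transitive and has a fixed point z and a point c ≠ z with both c and f(c) strictly on the same side of z, then for any compact subinterval K of [a,b] and any compact subinterval L of (a,b), there exists N such that f^n(K) ⊇ L for all n ≥ N. -/
open Set Function

namespace EIC

variable {a b z c : ℝ} {f : ℝ → ℝ} {S : Set ℝ}

def Tr (a b : ℝ) (f : ℝ → ℝ) : Prop := ∀ U V : Set ℝ, IsOpen U → IsOpen V →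
  (U ∩ Set.Icc a b).Nonempty → (V ∩ Set.Icc a b).Nonempty →
  ∃ k : ℕ, 1 ≤ k ∧ ((f^[k] '' (U ∩ Set.Icc a b)) ∩ (V ∩ Set.Icc a b)).Nonempty

def Good (a b : ℝ) (S : Set ℝ) : Prop :=
  IsCompact S ∧ IsPreconnected S ∧ S ⊆ Icc a b ∧ ¬ S.Subsingleton

lemma Good.nonempty (h : Good a b S) : S.Nonempty := by
  rcases S.eq_empty_or_nonempty with rfl | h' 
  · exact absurd subsingleton_empty h.2.2.2
  · exact h'

lemma Good.rep (h : Good a b S) : S = Icc (sInf S) (sSup S) :=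
  eq_Icc_of_connected_compact ⟨h.nonempty, h.2.1⟩ h.1

lemma Good.lt (h : Good a b S) : sInf S < sSup S := by
  rcases lt_or_ge (sInf S) (sSup S) with h' | h'
  · exact h'
  · exfalso
    apply h.2.2.2
    intro x hx y hy
    have hx' := h.rep ▸ hx
    have hy' := h.rep ▸ hy
    have : x = sInf S := le_antisymm (le_trans hx'.2 h') hx'.1
    have h2 : y = sInf S := le_antisymm (le_trans hy'.2 h') hy'.1
    rw [this, h2]

lemma Good.interior_nonempty (h : Good a b S) : (interior S).Nonempty := by
  refine ⟨(sInf S + sSup S)/2, ?_⟩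
  have : Ioo (sInf S) (sSup S) ⊆ interior S := by
    rw [← interior_Icc]; exact interior_mono (le_of_eq h.rep.symm)
  exact this ⟨by linarith [h.lt], by linarith [h.lt]⟩


lemma invariant_eq (htr : Tr a b f)
    (C : Set ℝ) (hcl : IsClosed C) (hCI : C ⊆ Icc a b)
    (hinv : MapsTo f C C) (hint : (interior C).Nonempty) : C = Icc a b := by
  refine subset_antisymm hCI fun x hx => ?_
  by_contra hxC
  obtain ⟨ε, hε, hball⟩ := Metric.isOpen_iff.1 hcl.isOpen_compl x hxC
  obtain ⟨y0, hy0⟩ := hint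
  obtain ⟨k, hk1, ⟨y, hy1, hy2⟩⟩ := htr (interior C) (Metric.ball x ε) isOpen_interior
    Metric.isOpen_ball ⟨y0, hy0, hCI (interior_subset hy0)⟩ ⟨x, Metric.mem_ball_self hε, hx⟩
  obtain ⟨w, hw, rfl⟩ := hy1
  exact hball hy2.1 ((hinv.iterate k) (interior_subset hw.1))

lemma no_collapse (hab : a < b) (htr : Tr a b f)
    {s t : ℝ} (hst : s < t) (hsub : Icc s t ⊆ Icc a b) :
    ¬ (f '' Icc s t).Subsingleton := by
  intro hss
  set y₀ := f s with hy₀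
  have hval : ∀ x ∈ Icc s t, f x = y₀ := fun x hx =>
    hss ⟨x, hx, rfl⟩ ⟨s, left_mem_Icc.2 hst.le, rfl⟩
  have hioo : Ioo s t ∩ Icc a b ⊆ Icc s t := fun x hx => Ioo_subset_Icc_self hx.1
  have hiter : ∀ k x, x ∈ Icc s t → f^[k+1] x = f^[k] y₀ := by
    intro k x hx
    rw [Function.iterate_succ_apply, hval x hx]
  have hne : (Ioo s t ∩ Icc a b).Nonempty :=
    ⟨(s+t)/2, ⟨by linarith, by linarith⟩, hsub ⟨by linarith, by linarith⟩⟩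
  obtain ⟨k, hk1, ⟨y, hy1, hy2⟩⟩ := htr (Ioo s t) (Ioo s t) isOpen_Ioo isOpen_Ioo hne hne
  obtain ⟨w, hw, rfl⟩ := hy1
  obtain ⟨k', rfl⟩ := Nat.exists_eq_add_of_le hk1
  rw [add_comm] at hy2
  rw [hiter k' w (hioo hw)] at hy2
  have hper : f^[k'+1] y₀ = y₀ := by
    rw [Function.iterate_succ_apply', hval _ (Ioo_subset_Icc_self hy2.1)]
  set K := k' + 1 with hK
  have hKpos : 0 < K := Nat.succ_pos _
  have htot : ∀ n, f^[n] y₀ = f^[n % K] y₀ := by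
    intro n
    induction n using Nat.strong_induction_on with
    | _ n ih =>
      rcases lt_or_ge n K with h | h
      · rw [Nat.mod_eq_of_lt h]
      · obtain ⟨m, rfl⟩ := Nat.exists_eq_add_of_le h
        rw [add_comm K m, Function.iterate_add_apply, hper, ih m (by omega),
          Nat.add_mod_right m K]
  set O : Set ℝ := (fun j => f^[j] y₀) '' (Iio K) with hO
  have hOfin : O.Finite := (Set.finite_Iio K).image _
  obtain ⟨ξ, hξ⟩ : ((Ioo a b) \ O).Nonempty := ((Set.Ioo_infinite hab).diff hOfin).nonempty
  obtain ⟨k2, hk21, ⟨y, hy1, hy2⟩⟩ := htr (Ioo s t) ((Ioo a b) \ O) isOpen_Ioo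
    (isOpen_Ioo.sdiff hOfin.isClosed) hne ⟨ξ, hξ, Ioo_subset_Icc_self hξ.1⟩
  obtain ⟨w, hw, rfl⟩ := hy1
  obtain ⟨k2', rfl⟩ := Nat.exists_eq_add_of_le hk21
  rw [add_comm] at hy2
  rw [hiter k2' w (hioo hw)] at hy2
  exact hy2.1.2 ⟨k2' % K, Nat.mod_lt _ hKpos, (htot k2').symm⟩


lemma periodic_mod {m : ℕ} (B : ℕ → Set ℝ) (hper : ∀ i, B (i + m) = B i) :
    ∀ i, B i = B (i % m) := by
  intro i
  rcases Nat.eq_zero_or_pos m with rfl | hm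
  · rw [Nat.mod_zero]
  induction i using Nat.strong_induction_on with
  | _ i ih =>
    rcases lt_or_ge i m with h | h
    · rw [Nat.mod_eq_of_lt h]
    · obtain ⟨j, rfl⟩ := Nat.exists_eq_add_of_le h
      rw [add_comm m j, hper j, ih j (by omega), Nat.add_mod_right]

lemma all_of_succ_closed {m : ℕ} (hm : 0 < m) (P : ℕ → Prop) (hmod : ∀ i, P i ↔ P (i % m))
    (hsucc : ∀ i, P i → P (i + 1)) (hex : ∃ i, P i) : ∀ i, P i := by
  obtain ⟨i₀, h₀⟩ := hex
  have ht : ∀ t, P (i₀ + t) := by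
    intro t
    induction t with
    | zero => simpa using h₀
    | succ t ih => rw [← Nat.add_assoc]; exact hsucc _ ih
  have hge : ∀ j, i₀ ≤ j → P j := by
    intro j hj
    obtain ⟨t, rfl⟩ := Nat.exists_eq_add_of_le hj
    exact ht t
  intro i
  have hj : i₀ ≤ i % m + (i₀ + 1) * m :=
    le_trans (le_trans (Nat.le_succ i₀) (Nat.le_mul_of_pos_right _ hm)) (Nat.le_add_left _ _)
  have h1 : P (i % m + (i₀ + 1) * m) := hge _ hj
  have h2 : (i % m + (i₀ + 1) * m) % m = i % m := by
    rw [Nat.add_mul_mod_self_right, Nat.mod_mod_of_dvd _ dvd_rfl]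
  rw [hmod, ← h2, ← hmod]
  exact h1

lemma subset_of_dense_preconn (hab : a < b) (hsub : S ⊆ Icc a b)
    (hpc : IsPreconnected S) (hdense : closure S = Icc a b) : Ioo a b ⊆ S := by
  intro x hx
  have hmeet : ∀ O : Set ℝ, IsOpen O → (O ∩ Icc a b).Nonempty → (S ∩ O).Nonempty := by
    intro O hO ⟨y, hy1, hy2⟩
    by_contra hcon
    have h1 : S ⊆ Oᶜ := fun w hw => fun hwO => hcon ⟨w, hw, hwO⟩
    have h2 : closure S ⊆ Oᶜ := closure_minimal h1 hO.isClosed_compl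
    exact (h2 (hdense ▸ hy2)) hy1
  obtain ⟨y1, hy1S, hy1⟩ := hmeet (Ioo a x) isOpen_Ioo
    ⟨(a+x)/2, ⟨by linarith [hx.1], by linarith [hx.1]⟩,
      ⟨by linarith [hx.1], by linarith [hx.1, hx.2]⟩⟩
  obtain ⟨y2, hy2S, hy2⟩ := hmeet (Ioo x b) isOpen_Ioo
    ⟨(x+b)/2, ⟨by linarith [hx.2], by linarith [hx.2]⟩,
      ⟨by linarith [hx.1, hx.2], by linarith [hx.2]⟩⟩
  exact hpc.ordConnected.out hy1S hy2S ⟨hy1.2.le, hy2.1.le⟩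

lemma exists_fixed_interior (hab : a < b) (hf : ContinuousOn f (Icc a b))
    (hm : MapsTo f (Icc a b) (Icc a b)) (htr : Tr a b f) :
    ∃ w ∈ Ioo a b, f w = w := by
  by_contra hcon
  push_neg at hcon
  have ivt : ∀ x ∈ Ioo a b, ∀ y ∈ Ioo a b, x ≤ y → x < f x → f y < y → False := by
    intro x hx y hy hxy h1 h2
    have hcont : ContinuousOn (fun w => f w - w) (Icc x y) :=
      (hf.mono (Icc_subset_Icc hx.1.le hy.2.le)).sub continuousOn_id
    obtain ⟨ζ, hζ, hgζ⟩ := intermediate_value_Icc' hxy hcont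
      (show (0:ℝ) ∈ Icc (f y - y) (f x - x) from ⟨by linarith, by linarith⟩)
    simp only at hgζ
    exact hcon ζ ⟨lt_of_lt_of_le hx.1 hζ.1, lt_of_le_of_lt hζ.2 hy.2⟩ (by linarith)
  have ivt2 : ∀ x ∈ Ioo a b, ∀ y ∈ Ioo a b, x ≤ y → f x < x → y < f y → False := by
    intro x hx y hy hxy h1 h2
    have hcont : ContinuousOn (fun w => f w - w) (Icc x y) :=
      (hf.mono (Icc_subset_Icc hx.1.le hy.2.le)).sub continuousOn_id
    obtain ⟨ζ, hζ, hgζ⟩ := intermediate_value_Icc hxy hcont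
      (show (0:ℝ) ∈ Icc (f x - x) (f y - y) from ⟨by linarith, by linarith⟩)
    simp only at hgζ
    exact hcon ζ ⟨lt_of_lt_of_le hx.1 hζ.1, lt_of_le_of_lt hζ.2 hy.2⟩ (by linarith)
  set w₀ := (a+b)/2 with hw₀d
  have hw₀ : w₀ ∈ Ioo a b := ⟨by simp only [hw₀d]; linarith, by simp only [hw₀d]; linarith⟩
  rcases (hcon w₀ hw₀).lt_or_gt with hneg | hpos
  · -- f w₀ < w₀ : downward everywhere
    have hdown : ∀ w ∈ Ioo a b, f w < w := by
      intro w hw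
      rcases (hcon w hw).lt_or_gt with h | h
      · exact h
      · exfalso
        rcases le_total w w₀ with hle | hle
        · exact ivt w hw w₀ hw₀ hle h hneg
        · exact ivt2 w₀ hw₀ w hw hle hneg h
    have hfa : f a = a := by
      have h0 : a ≤ f a := (hm (left_mem_Icc.2 hab.le)).1
      rcases h0.lt_or_eq with hlt | heq
      · exfalso
        set θ := (a + f a)/2 with hθd
        have hθ1 : a < θ := by simp only [hθd]; linarith
        have hθ2 : θ < f a := by simp only [hθd]; linarith
        have hca : ContinuousWithinAt f (Icc a b) a := hf a (left_mem_Icc.2 hab.le)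
        have hev : f ⁻¹' (Ioi θ) ∈ nhdsWithin a (Icc a b) := hca (Ioi_mem_nhds hθ2)
        obtain ⟨U, hUo, haU, hUsub⟩ := mem_nhdsWithin.1 hev
        obtain ⟨ε, hε, hball⟩ := Metric.isOpen_iff.1 hUo a haU
        set w := min (a + ε/2) (min θ w₀) with hwd
        have hwθ : w ≤ θ := le_trans (min_le_right _ _) (min_le_left _ _)
        have hwa : a < w := lt_min (by linarith) (lt_min hθ1 hw₀.1)
        have hwb : w < b := lt_of_le_of_lt (min_le_right _ _)
          (lt_of_le_of_lt (min_le_left _ _) (lt_of_lt_of_le hθ2 (hm (left_mem_Icc.2 hab.le)).2))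
        have hwball : w ∈ Metric.ball a ε := by
          rw [Metric.mem_ball, Real.dist_eq, abs_of_pos (by linarith)]
          have := min_le_left (a + ε/2) (min θ w₀)
          linarith
        have hfw : f w ∈ Ioi θ := hUsub ⟨hball hwball, ⟨hwa.le, hwb.le⟩⟩
        have hdw : f w < w := hdown w ⟨hwa, hwb⟩
        have := mem_Ioi.1 hfw
        linarith
      · exact heq.symm
    have hCeq : Icc a w₀ = Icc a b := by
      apply invariant_eq htr (Icc a w₀) isClosed_Icc (Icc_subset_Icc le_rfl hw₀.2.le)
      · intro x hx
        rcases hx.1.lt_or_eq with hax | hax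
        · have hxb : x < b := lt_of_le_of_lt hx.2 hw₀.2
          have hfx : f x < x := hdown x ⟨hax, hxb⟩
          exact ⟨(hm ⟨hx.1, hxb.le⟩).1, le_trans hfx.le hx.2⟩
        · rw [← hax, hfa]; exact ⟨le_rfl, hw₀.1.le⟩
      · rw [interior_Icc]
        exact ⟨(a + w₀)/2, by constructor <;> [linarith [hw₀.1]; linarith [hw₀.1]]⟩
    have hb : b ∈ Icc a w₀ := by rw [hCeq]; exact right_mem_Icc.2 hab.le
    have := hb.2
    simp only [hw₀d] at this
    linarith
  · -- w₀ < f w₀ : upward everywhere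
    have hup : ∀ w ∈ Ioo a b, w < f w := by
      intro w hw
      rcases (hcon w hw).lt_or_gt with h | h
      · exfalso
        rcases le_total w w₀ with hle | hle
        · exact ivt2 w hw w₀ hw₀ hle h hpos
        · exact ivt w₀ hw₀ w hw hle hpos h
      · exact h
    have hfb : f b = b := by
      have h0 : f b ≤ b := (hm (right_mem_Icc.2 hab.le)).2
      rcases h0.lt_or_eq with hlt | heq
      · exfalso
        set θ := (f b + b)/2 with hθd
        have hθ1 : θ < b := by simp only [hθd]; linarith
        have hθ2 : f b < θ := by simp only [hθd]; linarith
        have hca : ContinuousWithinAt f (Icc a b) b := hf b (right_mem_Icc.2 hab.le)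
        have hev : f ⁻¹' (Iio θ) ∈ nhdsWithin b (Icc a b) := hca (Iio_mem_nhds hθ2)
        obtain ⟨U, hUo, hbU, hUsub⟩ := mem_nhdsWithin.1 hev
        obtain ⟨ε, hε, hball⟩ := Metric.isOpen_iff.1 hUo b hbU
        set w := max (b - ε/2) (max θ w₀) with hwd
        have hwθ : θ ≤ w := le_trans (le_max_left _ _) (le_max_right _ _)
        have hwb : w < b := max_lt (by linarith) (max_lt hθ1 hw₀.2)
        have hwa : a < w := lt_of_lt_of_le hw₀.1 (le_trans (le_max_right _ _) (le_max_right _ _))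
        have hwball : w ∈ Metric.ball b ε := by
          rw [Metric.mem_ball, Real.dist_eq, abs_of_neg (by linarith)]
          have := le_max_left (b - ε/2) (max θ w₀)
          linarith
        have hfw : f w ∈ Iio θ := hUsub ⟨hball hwball, ⟨hwa.le, hwb.le⟩⟩
        have hdw : w < f w := hup w ⟨hwa, hwb⟩
        have := mem_Iio.1 hfw
        linarith
      · exact heq
    have hCeq : Icc w₀ b = Icc a b := by
      apply invariant_eq htr (Icc w₀ b) isClosed_Icc (Icc_subset_Icc hw₀.1.le le_rfl)
      · intro x hx
        rcases hx.2.lt_or_eq with hxb | hxb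
        · have hax : a < x := lt_of_lt_of_le hw₀.1 hx.1
          have hfx : x < f x := hup x ⟨hax, hxb⟩
          exact ⟨le_trans hx.1 hfx.le, (hm ⟨hax.le, hx.2⟩).2⟩
        · rw [hxb, hfb]; exact ⟨hw₀.2.le, le_rfl⟩
      · rw [interior_Icc]
        exact ⟨(w₀ + b)/2, by constructor <;> [linarith [hw₀.2]; linarith [hw₀.2]]⟩
    have ha : a ∈ Icc w₀ b := by rw [hCeq]; exact left_mem_Icc.2 hab.le
    have := ha.1
    simp only [hw₀d] at this
    linarith


lemma Icc_not_subsingleton {x y : ℝ} (hxy : x < y) : ¬ (Icc x y).Subsingleton :=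
  fun hss => hxy.ne (hss (left_mem_Icc.2 hxy.le) (right_mem_Icc.2 hxy.le))

lemma Good.image (hab : a < b) (htr : Tr a b f) (hf : ContinuousOn f (Icc a b))
    (hm : MapsTo f (Icc a b) (Icc a b)) {S : Set ℝ} (h : Good a b S) : Good a b (f '' S) := by
  refine ⟨h.1.image_of_continuousOn (hf.mono h.2.2.1), h.2.1.image f (hf.mono h.2.2.1),
    ?_, ?_⟩
  · rintro y ⟨x, hx, rfl⟩; exact hm (h.2.2.1 hx)
  · have h2 : f '' S = f '' Icc (sInf S) (sSup S) := by rw [← h.rep]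
    rw [h2]
    exact no_collapse hab htr h.lt (h.rep ▸ h.2.2.1)

lemma beta_kill (hab : a < b) (hf : ContinuousOn f (Icc a b))
    (hm : MapsTo f (Icc a b) (Icc a b)) (htr : Tr a b f)
    (hz : z ∈ Icc a b) (hfz : f z = z)
    (hc : c ∈ Icc a b) (hside : (z < c ∧ z < f c) ∨ (c < z ∧ f c < z))
    {m : ℕ} (hmpos : 0 < m) (B : ℕ → Set ℝ)
    (hper : ∀ i, B (i + m) = B i)
    (hgood : ∀ i, Good a b (B i))
    (hzin : ∀ i, z ∈ B i)
    (hmap : ∀ i, f '' B i ⊆ B (i + 1))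
    (hcover : (⋃ i, B i) = Icc a b)
    (hM : (⋂ i, B i) ⊆ {z}) : False := by
  have hBmod := periodic_mod B hper
  set αf : ℕ → ℝ := fun i => sInf (B i) with hαd
  set βf : ℕ → ℝ := fun i => sSup (B i) with hβd
  have hrep : ∀ i, B i = Icc (αf i) (βf i) := fun i => (hgood i).rep
  have hαβ : ∀ i, αf i < βf i := fun i => (hgood i).lt
  have hαz : ∀ i, αf i ≤ z := fun i => ((hrep i) ▸ hzin i).1
  have hzβ : ∀ i, z ≤ βf i := fun i => ((hrep i) ▸ hzin i).2
  have hmodα : ∀ i, αf i = αf (i % m) := fun i => by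
    simp only [hαd]; rw [hBmod i]
  have hmodβ : ∀ i, βf i = βf (i % m) := fun i => by
    simp only [hβd]; rw [hBmod i]
  set Q : ℕ → Prop := fun i => z < βf i with hQd
  set P : ℕ → Prop := fun i => αf i < z with hPd
  have hQmod : ∀ i, Q i ↔ Q (i % m) := fun i => by simp only [hQd]; rw [hmodβ i]
  have hPmod : ∀ i, P i ↔ P (i % m) := fun i => by simp only [hPd]; rw [hmodα i]
  set F := Finset.range m with hFd
  have hFne : F.Nonempty := ⟨0, Finset.mem_range.2 hmpos⟩
  -- some index has βf = z
  have hiL : ∃ iL, βf iL = z := by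
    by_contra hno
    push_neg at hno
    have hallQ : ∀ i, Q i := fun i => (hzβ i).lt_of_ne' (hno i)
    set y := F.inf' hFne βf with hyd
    obtain ⟨ist, histF, hist⟩ := Finset.exists_mem_eq_inf' hFne βf
    have hzy : z < y := by rw [hyd, hist]; exact hallQ ist
    have hsubM : Icc z y ⊆ ⋂ i, B i := by
      intro x hx
      rw [mem_iInter]
      intro i
      rw [hrep i]
      refine ⟨le_trans (hαz i) hx.1, le_trans hx.2 ?_⟩
      rw [hmodβ i]
      exact Finset.inf'_le βf (Finset.mem_range.2 (Nat.mod_lt _ hmpos))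
    have := hM (hsubM ⟨hzy.le, le_rfl⟩)
    rw [mem_singleton_iff] at this
    exact hzy.ne' this
  have hiR : ∃ iR, αf iR = z := by
    by_contra hno
    push_neg at hno
    have hallP : ∀ i, P i := fun i => (hαz i).lt_of_ne (hno i)
    set y := F.sup' hFne αf with hyd
    obtain ⟨ist, histF, hist⟩ := Finset.exists_mem_eq_sup' hFne αf
    have hzy : y < z := by rw [hyd, hist]; exact hallP ist
    have hsubM : Icc y z ⊆ ⋂ i, B i := by
      intro x hx
      rw [mem_iInter]
      intro i
      rw [hrep i]
      refine ⟨le_trans ?_ hx.1, le_trans hx.2 (hzβ i)⟩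
      rw [hmodα i]
      exact Finset.le_sup' αf (Finset.mem_range.2 (Nat.mod_lt _ hmpos))
    have := hM (hsubM ⟨le_rfl, hzy.le⟩)
    rw [mem_singleton_iff] at this
    exact hzy.ne this
  obtain ⟨iL, hiL⟩ := hiL
  obtain ⟨iR, hiR⟩ := hiR
  have hQiR : Q iR := by rw [hQd]; simp only; rw [← hiR]; exact hαβ iR
  have hPiL : P iL := by rw [hPd]; simp only; rw [← hiL]; exact hαβ iL
  have hnQiL : ¬ Q iL := by rw [hQd]; simp only; rw [hiL]; exact lt_irrefl z
  have hnPiR : ¬ P iR := by rw [hPd]; simp only; rw [hiR]; exact lt_irrefl z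
  -- right-side minimal interval
  set QF := F.filter (fun i => z < βf i) with hQFd
  have hQFne : QF.Nonempty := by
    refine ⟨iR % m, Finset.mem_filter.2 ⟨Finset.mem_range.2 (Nat.mod_lt _ hmpos), ?_⟩⟩
    have := (hQmod iR).1 hQiR
    exact this
  set yst := QF.inf' hQFne βf with hystd
  have hzyst : z < yst := by
    obtain ⟨ist, histF, hist⟩ := Finset.exists_mem_eq_inf' hQFne βf
    rw [hystd, hist]
    exact (Finset.mem_filter.1 histF).2
  have hMRsub : ∀ i, Q i → Icc z yst ⊆ B i := by
    intro i hQi x hx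
    rw [hrep i]
    refine ⟨le_trans (hαz i) hx.1, le_trans hx.2 ?_⟩
    rw [hmodβ i]
    refine Finset.inf'_le βf (Finset.mem_filter.2 ⟨Finset.mem_range.2 (Nat.mod_lt _ hmpos), ?_⟩)
    exact (hQmod i).1 hQi
  have hMRI : Icc z yst ⊆ Icc a b := (hMRsub iR hQiR).trans (hgood iR).2.2.1
  have hGoodMR : Good a b (Icc z yst) :=
    ⟨isCompact_Icc, isPreconnected_Icc, hMRI, Icc_not_subsingleton hzyst⟩
  have hGoodImgR : Good a b (f '' Icc z yst) := hGoodMR.image hab htr hf hm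
  set α' := sInf (f '' Icc z yst) with hα'd
  set β' := sSup (f '' Icc z yst) with hβ'd
  have hzImgR : z ∈ f '' Icc z yst := ⟨z, ⟨le_rfl, hzyst.le⟩, hfz⟩
  have hzβ' : z ≤ β' := ((hGoodImgR.rep) ▸ hzImgR).2
  have hα'z : α' ≤ z := ((hGoodImgR.rep) ▸ hzImgR).1
  have hImgRsub : ∀ i, Q i → f '' Icc z yst ⊆ B (i+1) :=
    fun i hQi => (image_mono (hMRsub i hQi)).trans (hmap i)
  have hQP : ∀ i, Q i → P (i + 1) := by
    rcases hzβ'.lt_or_eq with hβ' | hβ'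
    · -- z < β' : Q is successor-closed, contradiction
      exfalso
      have hstep : ∀ i, Q i → Q (i + 1) := by
        intro i hQi
        have : β' ≤ βf (i+1) :=
          csSup_le_csSup (hgood (i+1)).1.bddAbove hGoodImgR.nonempty (hImgRsub i hQi)
        exact lt_of_lt_of_le hβ' this
      exact hnQiL (all_of_succ_closed hmpos Q hQmod hstep ⟨iR, hQiR⟩ iL)
    · -- β' = z, so α' < z
      intro i hQi
      have hα' : α' < z := by
        have h := hGoodImgR.lt
        rw [← hα'd, ← hβ'd] at h
        rwa [← hβ'] at h
      have : αf (i+1) ≤ α' :=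
        csInf_le_csInf (hgood (i+1)).1.bddBelow hGoodImgR.nonempty (hImgRsub i hQi)
      exact lt_of_le_of_lt this hα'
  -- left-side minimal interval (mirror)
  set PF := F.filter (fun i => αf i < z) with hPFd
  have hPFne : PF.Nonempty := by
    refine ⟨iL % m, Finset.mem_filter.2 ⟨Finset.mem_range.2 (Nat.mod_lt _ hmpos), ?_⟩⟩
    exact (hPmod iL).1 hPiL
  set xst := PF.sup' hPFne αf with hxstd
  have hxstz : xst < z := by
    obtain ⟨ist, histF, hist⟩ := Finset.exists_mem_eq_sup' hPFne αf
    rw [hxstd, hist]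
    exact (Finset.mem_filter.1 histF).2
  have hMLsub : ∀ i, P i → Icc xst z ⊆ B i := by
    intro i hPi x hx
    rw [hrep i]
    refine ⟨le_trans ?_ hx.1, le_trans hx.2 (hzβ i)⟩
    rw [hmodα i]
    refine Finset.le_sup' αf (Finset.mem_filter.2 ⟨Finset.mem_range.2 (Nat.mod_lt _ hmpos), ?_⟩)
    exact (hPmod i).1 hPi
  have hMLI : Icc xst z ⊆ Icc a b := (hMLsub iL hPiL).trans (hgood iL).2.2.1
  have hGoodML : Good a b (Icc xst z) :=
    ⟨isCompact_Icc, isPreconnected_Icc, hMLI, Icc_not_subsingleton hxstz⟩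
  have hGoodImgL : Good a b (f '' Icc xst z) := hGoodML.image hab htr hf hm
  set α'' := sInf (f '' Icc xst z) with hα''d
  set β'' := sSup (f '' Icc xst z) with hβ''d
  have hzImgL : z ∈ f '' Icc xst z := ⟨z, ⟨hxstz.le, le_rfl⟩, hfz⟩
  have hzβ'' : z ≤ β'' := ((hGoodImgL.rep) ▸ hzImgL).2
  have hα''z : α'' ≤ z := ((hGoodImgL.rep) ▸ hzImgL).1
  have hImgLsub : ∀ i, P i → f '' Icc xst z ⊆ B (i+1) :=
    fun i hPi => (image_mono (hMLsub i hPi)).trans (hmap i)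
  have hPQ : ∀ i, P i → Q (i + 1) := by
    rcases hα''z.lt_or_eq with hα'' | hα''
    · -- α'' < z : P is successor-closed, contradiction
      exfalso
      have hstep : ∀ i, P i → P (i + 1) := by
        intro i hPi
        have : αf (i+1) ≤ α'' :=
          csInf_le_csInf (hgood (i+1)).1.bddBelow hGoodImgL.nonempty (hImgLsub i hPi)
        exact lt_of_le_of_lt this hα''
      exact hnPiR (all_of_succ_closed hmpos P hPmod hstep ⟨iL, hPiL⟩ iR)
    · -- α'' = z, so z < β''
      intro i hPi
      have hβ'' : z < β'' := by
        have h := hGoodImgL.lt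
        rw [← hα''d, ← hβ''d] at h
        rwa [hα''] at h
      have : β'' ≤ βf (i+1) :=
        csSup_le_csSup (hgood (i+1)).1.bddAbove hGoodImgL.nonempty (hImgLsub i hPi)
      exact lt_of_lt_of_le hβ'' this
  -- no index straddles
  have hnoS : ∀ i, ¬ (P i ∧ Q i) := by
    intro i hSi
    have hSstep : ∀ j, (P j ∧ Q j) → (P (j+1) ∧ Q (j+1)) :=
      fun j hSj => ⟨hQP j hSj.2, hPQ j hSj.1⟩
    have hSmod : ∀ j, (P j ∧ Q j) ↔ (P (j % m) ∧ Q (j % m)) :=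
      fun j => and_congr (hPmod j) (hQmod j)
    exact hnQiL (all_of_succ_closed hmpos _ hSmod hSstep ⟨i, hSi⟩ iL).2
  -- finish with c
  rcases hside with ⟨h1, h2⟩ | ⟨h1, h2⟩
  · -- z < c and z < f c
    have hcU : c ∈ ⋃ i, B i := hcover ▸ hc
    obtain ⟨i, hciB⟩ := mem_iUnion.1 hcU
    have hQi : Q i := lt_of_lt_of_le h1 ((hrep i ▸ hciB).2)
    have hPsucc : P (i+1) := hQP i hQi
    have hnQsucc : ¬ Q (i+1) := fun hQs => hnoS (i+1) ⟨hPsucc, hQs⟩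
    have hβs : βf (i+1) = z := le_antisymm (not_lt.1 hnQsucc) (hzβ (i+1))
    have hfc : f c ∈ B (i+1) := hmap i ⟨c, hciB, rfl⟩
    have : f c ≤ z := hβs ▸ (hrep (i+1) ▸ hfc).2
    linarith
  · -- c < z and f c < z
    have hcU : c ∈ ⋃ i, B i := hcover ▸ hc
    obtain ⟨i, hciB⟩ := mem_iUnion.1 hcU
    have hPi : P i := lt_of_le_of_lt ((hrep i ▸ hciB).1) h1
    have hQsucc : Q (i+1) := hPQ i hPi
    have hnPsucc : ¬ P (i+1) := fun hPs => hnoS (i+1) ⟨hPs, hQsucc⟩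
    have hαs : αf (i+1) = z := le_antisymm (hαz (i+1)) (not_lt.1 hnPsucc)
    have hfc : f c ∈ B (i+1) := hmap i ⟨c, hciB, rfl⟩
    have : z ≤ f c := hαs ▸ (hrep (i+1) ▸ hfc).1
    linarith


lemma cycle_eq (hab : a < b) (hf : ContinuousOn f (Icc a b))
    (hm : MapsTo f (Icc a b) (Icc a b)) (htr : Tr a b f)
    (hz : z ∈ Icc a b) (hfz : f z = z)
    (hc : c ∈ Icc a b) (hside : (z < c ∧ z < f c) ∨ (c < z ∧ f c < z))
    {m : ℕ} (hmpos : 0 < m) (B : ℕ → Set ℝ)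
    (hper : ∀ i, B (i + m) = B i)
    (hgood : ∀ i, Good a b (B i))
    (hmap : ∀ i, f '' B i ⊆ B (i + 1)) :
    ∀ i, B i = Icc a b := by
  have hBmod := periodic_mod B hper
  have hstepmem : ∀ x, (∀ i, x ∈ B i → f x ∈ B (i+1)) := fun x i hx => hmap i ⟨x, hx, rfl⟩
  -- the union of the cycle is everything
  haveI : NeZero m := ⟨hmpos.ne'⟩
  set C : Set ℝ := ⋃ (i : Fin m), B i.val with hCd
  have hCeq : (⋃ i, B i) = C := by
    apply subset_antisymm
    · intro x hx
      obtain ⟨i, hi⟩ := mem_iUnion.1 hx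
      exact mem_iUnion.2 ⟨⟨i % m, Nat.mod_lt _ hmpos⟩, (hBmod i) ▸ hi⟩
    · intro x hx
      obtain ⟨i, hi⟩ := mem_iUnion.1 hx
      exact mem_iUnion.2 ⟨i.val, hi⟩
  have hCI : C = Icc a b := by
    apply invariant_eq htr C (isClosed_iUnion_of_finite fun i => (hgood i.val).1.isClosed)
    · exact iUnion_subset fun i => (hgood i.val).2.2.1
    · intro x hx
      obtain ⟨i, hi⟩ := mem_iUnion.1 hx
      refine mem_iUnion.2 ⟨⟨(i.val + 1) % m, Nat.mod_lt _ hmpos⟩, ?_⟩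
      exact (hBmod (i.val+1)) ▸ (hstepmem x i.val hi)
    · refine (Good.interior_nonempty (hgood 0)).mono (interior_mono ?_)
      intro x hx
      exact mem_iUnion.2 ⟨⟨0, hmpos⟩, hx⟩
  have hcoverN : (⋃ i, B i) = Icc a b := hCeq.trans hCI
  -- z belongs to every member of the cycle
  have hzin : ∀ i, z ∈ B i := by
    have hzC : z ∈ ⋃ i, B i := hcoverN ▸ hz
    obtain ⟨i0, hi0⟩ := mem_iUnion.1 hzC
    refine all_of_succ_closed hmpos (fun i => z ∈ B i)
      (fun i => by show z ∈ B i ↔ z ∈ B (i % m); rw [hBmod i]) (fun i hi => hfz ▸ hstepmem z i hi) ⟨i0, hi0⟩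
  -- the intersection
  set αf : ℕ → ℝ := fun i => sInf (B i) with hαd
  set βf : ℕ → ℝ := fun i => sSup (B i) with hβd
  have hrep : ∀ i, B i = Icc (αf i) (βf i) := fun i => (hgood i).rep
  have hmodα : ∀ i, αf i = αf (i % m) := fun i => congrArg sInf (hBmod i)
  have hmodβ : ∀ i, βf i = βf (i % m) := fun i => congrArg sSup (hBmod i)
  set F := Finset.range m with hFd
  have hFne : F.Nonempty := ⟨0, Finset.mem_range.2 hmpos⟩
  set A : ℝ := F.sup' hFne αf with hAd
  set D : ℝ := F.inf' hFne βf with hDd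
  have hMrep : (⋂ i, B i) = Icc A D := by
    ext x
    rw [mem_iInter]
    constructor
    · intro hx
      constructor
      · refine Finset.sup'_le hFne αf fun i hi => ?_
        exact ((hrep i) ▸ hx i).1
      · refine Finset.le_inf' hFne βf fun i hi => ?_
        exact ((hrep i) ▸ hx i).2
    · intro hx i
      rw [hrep i]
      constructor
      · refine le_trans ?_ hx.1
        rw [hmodα i]
        exact Finset.le_sup' αf (Finset.mem_range.2 (Nat.mod_lt _ hmpos))
      · refine le_trans hx.2 ?_
        rw [hmodβ i]
        exact Finset.inf'_le βf (Finset.mem_range.2 (Nat.mod_lt _ hmpos))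
  have hzM : z ∈ ⋂ i, B i := mem_iInter.2 hzin
  have hMinv : MapsTo f (⋂ i, B i) (⋂ i, B i) := by
    intro x hx
    rw [mem_iInter] at hx ⊢
    intro j
    cases j with
    | zero =>
      have h1 : f x ∈ B ((m-1) + 1) := hstepmem x (m-1) (hx (m-1))
      have h2 : (m-1) + 1 = 0 + m := by omega
      rwa [h2, hper 0] at h1
    | succ j => exact hstepmem x j (hx j)
  rcases lt_or_ge A D with hAD | hAD
  · -- nondegenerate intersection: everything is Icc a b
    have hMeq : (⋂ i, B i) = Icc a b := by
      apply invariant_eq htr _ (isClosed_iInter fun i => (hgood i).1.isClosed)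
        ((iInter_subset B 0).trans (hgood 0).2.2.1) hMinv
      rw [hMrep, interior_Icc]
      exact ⟨(A + D)/2, by constructor <;> linarith⟩
    intro i
    exact subset_antisymm (hgood i).2.2.1 (hMeq ▸ iInter_subset B i)
  · -- degenerate intersection: contradiction via beta_kill
    exfalso
    have hzAD : A ≤ z ∧ z ≤ D := by
      have := hMrep ▸ hzM
      exact ⟨this.1, this.2⟩
    have hMsub : (⋂ i, B i) ⊆ {z} := by
      intro x hx
      have hx' := hMrep ▸ hx
      have : x = z := le_antisymm (le_trans hx'.2 (le_trans hAD hzAD.1))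
        (le_trans hzAD.2 (le_trans hAD hx'.1))
      simp [this]
    exact beta_kill hab hf hm htr hz hfz hc hside hmpos B hper hgood hzin hmap hcoverN hMsub


lemma Good.iter (hab : a < b) (htr : Tr a b f) (hf : ContinuousOn f (Icc a b))
    (hm : MapsTo f (Icc a b) (Icc a b)) {S : Set ℝ} (h : Good a b S) :
    ∀ n, Good a b (f^[n] '' S) := by
  intro n
  induction n with
  | zero => simpa using h
  | succ n ih =>
    rw [Function.iterate_succ', Set.image_comp]
    exact ih.image hab htr hf hm

lemma Good.Icc_subset {S : Set ℝ} (h : Good a b S) {x y : ℝ}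
    (hx : x ∈ S) (hy : y ∈ S) : Icc x y ⊆ S := by
  intro w hw
  rw [h.rep] at hx hy ⊢
  exact ⟨le_trans hx.1 hw.1, le_trans hw.2 hy.2⟩

lemma image_iter_succ (f : ℝ → ℝ) (n : ℕ) (S : Set ℝ) :
    f^[n+1] '' S = f '' (f^[n] '' S) := by
  rw [Function.iterate_succ', Set.image_comp]

lemma image_iter_add (f : ℝ → ℝ) (m n : ℕ) (S : Set ℝ) :
    f^[m + n] '' S = f^[m] '' (f^[n] '' S) := by
  rw [Function.iterate_add, Set.image_comp]

theorem main (hab : a < b)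
    (hf : ContinuousOn f (Set.Icc a b)) (hmaps : Set.MapsTo f (Set.Icc a b) (Set.Icc a b))
    (htr : Tr a b f)
    (hz : z ∈ Set.Icc a b) (hfz : f z = z)
    (hc : c ∈ Set.Icc a b) (hcz : c ≠ z)
    (hside : (z < c ∧ z < f c) ∨ (c < z ∧ f c < z)) :
    ∀ p q u v : ℝ, p < q → u < v → Set.Icc p q ⊆ Set.Icc a b → Set.Icc u v ⊆ Set.Ioo a b →
      ∃ N : ℕ, ∀ n : ℕ, N ≤ n → Set.Icc u v ⊆ f^[n] '' Set.Icc p q := by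
  intro p q u v hpq huv hK hL
  set J := Icc p q with hJd
  have hJgood : Good a b J := ⟨isCompact_Icc, isPreconnected_Icc, hK, Icc_not_subsingleton hpq⟩
  set Pc : ℕ → Set ℝ := fun n => f^[n] '' J with hPcd
  have hPgood : ∀ n, Good a b (Pc n) := hJgood.iter hab htr hf hmaps
  have hPsucc : ∀ n, f '' Pc n = Pc (n+1) := fun n => (image_iter_succ f n J).symm
  -- a return time k
  have hIoopq : (Ioo p q ∩ Icc a b).Nonempty :=
    ⟨(p+q)/2, ⟨by linarith, by linarith⟩, hK ⟨by linarith, by linarith⟩⟩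
  obtain ⟨k, hk1, hkmeet⟩ := htr (Ioo p q) (Ioo p q) isOpen_Ioo isOpen_Ioo hIoopq hIoopq
  have hmeet : (f^[k] '' J ∩ J).Nonempty := by
    obtain ⟨y, hy1, hy2⟩ := hkmeet
    refine ⟨y, ?_, Ioo_subset_Icc_self hy2.1⟩
    exact image_mono (fun x hx => Ioo_subset_Icc_self hx.1) hy1
  have hkpos : 0 < k := hk1
  -- chained pieces
  have hchain : ∀ i s, (Pc (i + k*s) ∩ Pc (i + k*(s+1))).Nonempty := by
    intro i s
    obtain ⟨y, hy1, hy2⟩ := hmeet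
    refine ⟨f^[i + k*s] y, ⟨y, hy2, rfl⟩, ?_⟩
    have h1 : Pc (i + k*(s+1)) = f^[i + k*s] '' (f^[k] '' J) := by
      simp only [hPcd]
      rw [← image_iter_add, show (i + k*s) + k = i + k*(s+1) by ring]
    rw [h1]
    exact ⟨y, hy1, rfl⟩
  set Uc : ℕ → Set ℝ := fun i => ⋃ s, Pc (i + k*s) with hUcd
  set Vc : ℕ → Set ℝ := fun i => closure (Uc i) with hVcd
  have hUcsub : ∀ i, Uc i ⊆ Icc a b := fun i => iUnion_subset fun s => (hPgood _).2.2.1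
  have hUcpc : ∀ i, IsPreconnected (Uc i) := by
    intro i
    apply IsPreconnected.iUnion_of_chain (fun s => (hPgood (i + k*s)).2.1)
    intro s
    simpa using hchain i s
  have hVcsub : ∀ i, Vc i ⊆ Icc a b := fun i => closure_minimal (hUcsub i) isClosed_Icc
  have hVcgood : ∀ i, Good a b (Vc i) := by
    intro i
    refine ⟨isCompact_Icc.of_isClosed_subset isClosed_closure (hVcsub i),
      (hUcpc i).closure, hVcsub i, ?_⟩
    have hPsub : Pc i ⊆ Vc i := by
      refine subset_trans ?_ subset_closure
      have := subset_iUnion (fun s => Pc (i + k*s)) 0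
      simpa using this
    exact fun hss => (hPgood i).2.2.2 (hss.anti hPsub)
  have hVmap : ∀ i, f '' Vc i ⊆ Vc (i+1) := by
    intro i
    have h1 : f '' Vc i ⊆ closure (f '' Uc i) :=
      ContinuousOn.image_closure (hf.mono (hVcsub i))
    have h2 : f '' Uc i = Uc (i+1) := by
      rw [hUcd]
      simp only [image_iUnion]
      refine iUnion_congr fun s => ?_
      rw [hPsucc, show i + k*s + 1 = i + 1 + k*s by ring]
    rw [h2] at h1
    exact h1
  have hVtail : Vc k ⊆ Vc 0 := by
    apply closure_mono
    intro x hx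
    obtain ⟨s, hs⟩ := mem_iUnion.1 hx
    refine mem_iUnion.2 ⟨s+1, ?_⟩
    rwa [show 0 + k*(s+1) = k + k*s by ring]
  set Bv : ℕ → Set ℝ := fun i => Vc (i % k) with hBvd
  have hBvper : ∀ i, Bv (i + k) = Bv i := fun i => by
    simp only [hBvd, Nat.add_mod_right]
  have hBvmap : ∀ i, f '' Bv i ⊆ Bv (i+1) := by
    intro i
    have h1 : f '' Vc (i % k) ⊆ Vc (i % k + 1) := hVmap _
    have h2 : (i % k + 1) % k = (i+1) % k := Nat.mod_add_mod i k 1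
    rcases lt_or_ge (i % k + 1) k with hlt | hle
    · have : Vc (i % k + 1) = Bv (i+1) := by
        simp only [hBvd]
        rw [← h2, Nat.mod_eq_of_lt hlt]
      rwa [this] at h1
    · have hk2 : i % k + 1 = k := by
        have := Nat.mod_lt i hkpos
        omega
      have : Bv (i+1) = Vc 0 := by
        simp only [hBvd]
        rw [← h2, hk2, Nat.mod_self]
      rw [this]
      rw [hk2] at h1
      exact h1.trans hVtail
  have hBveq := cycle_eq hab hf hmaps htr hz hfz hc hside hkpos Bv hBvper
    (fun i => hVcgood _) hBvmap
  have hV0 : closure (Uc 0) = Icc a b := by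
    have := hBveq 0
    simp only [hBvd, Nat.zero_mod] at this
    exact this
  -- capture the interior fixed point
  obtain ⟨w, hwI, hfw⟩ := exists_fixed_interior hab hf hmaps htr
  have hwU : w ∈ Uc 0 := subset_of_dense_preconn hab (hUcsub 0) (hUcpc 0) hV0 hwI
  obtain ⟨s₀, hs₀⟩ := mem_iUnion.1 hwU
  set n₀ := 0 + k * s₀ with hn₀d
  have hanchor : ∀ t, w ∈ Pc (n₀ + t) := by
    intro t
    induction t with
    | zero => simpa using hs₀
    | succ t ih =>
      have h1 : f w ∈ f '' Pc (n₀ + t) := ⟨w, ih, rfl⟩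
      rw [hfw, hPsucc] at h1
      exact h1
  -- the base interval A
  set xb := (w + b)/2 with hxbd
  have hwxb : w < xb := by simp only [hxbd]; linarith [hwI.2]
  have hxbI : xb ∈ Ioo a b := ⟨by simp only [hxbd]; linarith [hwI.1, hwI.2],
    by simp only [hxbd]; linarith [hwI.2]⟩
  set A := Icc w xb with hAd
  have hAI : A ⊆ Icc a b := fun x hx =>
    ⟨le_trans hwI.1.le hx.1, le_trans hx.2 hxbI.2.le⟩
  have hAgood : Good a b A := ⟨isCompact_Icc, isPreconnected_Icc, hAI,
    Icc_not_subsingleton hwxb⟩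
  -- A is covered by some single image of J
  have hA_cov : ∃ s₁, A ⊆ Pc s₁ := by
    set Uw : Set ℝ := ⋃ t, Pc (n₀ + t) with hUwd
    have hUwsub : Uw ⊆ Icc a b := iUnion_subset fun t => (hPgood _).2.2.1
    have hUwpc : IsPreconnected Uw :=
      isPreconnected_iUnion ⟨w, mem_iInter.2 hanchor⟩ (fun t => (hPgood _).2.1)
    have hUwcl : closure Uw = Icc a b := by
      apply invariant_eq htr _ isClosed_closure (closure_minimal hUwsub isClosed_Icc)
      · intro x hx
        have h1 : f x ∈ f '' closure Uw := ⟨x, hx, rfl⟩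
        have h2 : f '' closure Uw ⊆ closure (f '' Uw) :=
          ContinuousOn.image_closure (hf.mono (closure_minimal hUwsub isClosed_Icc))
        have h3 : f '' Uw ⊆ Uw := by
          rw [hUwd]
          simp only [image_iUnion]
          apply iUnion_subset
          intro t
          rw [hPsucc]
          intro y hy
          exact mem_iUnion.2 ⟨t+1, by rwa [Nat.add_succ]⟩
        exact closure_mono h3 (h2 h1)
      · have hPn₀ : Pc n₀ ⊆ closure Uw := by
          refine subset_trans ?_ subset_closure
          have := subset_iUnion (fun t => Pc (n₀ + t)) 0
          simpa using this
        have hGoodcl : Good a b (closure Uw) :=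
          ⟨isCompact_Icc.of_isClosed_subset isClosed_closure
            (closure_minimal hUwsub isClosed_Icc), hUwpc.closure,
            closure_minimal hUwsub isClosed_Icc,
            fun hss => (hPgood n₀).2.2.2 (hss.anti hPn₀)⟩
        exact hGoodcl.interior_nonempty
    have hxbU : xb ∈ Uw := subset_of_dense_preconn hab hUwsub hUwpc hUwcl hxbI
    obtain ⟨t₁, ht₁⟩ := mem_iUnion.1 hxbU
    exact ⟨n₀ + t₁, (hPgood _).Icc_subset (hanchor t₁) ht₁⟩
  obtain ⟨s₁, hs₁⟩ := hA_cov
  -- A covers itself after j ≥ 1 steps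
  have hAanchor : ∀ t, w ∈ f^[t] '' A := fun t =>
    ⟨w, ⟨le_rfl, hwxb.le⟩, Function.iterate_fixed hfw t⟩
  have hQgood : ∀ t, Good a b (f^[t] '' A) := hAgood.iter hab htr hf hmaps
  have hself : ∃ j, 1 ≤ j ∧ A ⊆ f^[j] '' A := by
    set Uw : Set ℝ := ⋃ t, f^[1 + t] '' A with hUwd
    have hUwsub : Uw ⊆ Icc a b := iUnion_subset fun t => (hQgood _).2.2.1
    have hUwpc : IsPreconnected Uw :=
      isPreconnected_iUnion ⟨w, mem_iInter.2 fun t => hAanchor (1+t)⟩ fun t => (hQgood _).2.1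
    have hUwcl : closure Uw = Icc a b := by
      apply invariant_eq htr _ isClosed_closure (closure_minimal hUwsub isClosed_Icc)
      · intro x hx
        have h2 : f '' closure Uw ⊆ closure (f '' Uw) :=
          ContinuousOn.image_closure (hf.mono (closure_minimal hUwsub isClosed_Icc))
        have h3 : f '' Uw ⊆ Uw := by
          rw [hUwd]
          simp only [image_iUnion]
          refine iUnion_subset fun t => ?_
          rw [← image_iter_succ]
          intro y hy
          exact mem_iUnion.2 ⟨t+1, by rw [show 1 + (t+1) = 1 + t + 1 by ring]; exact hy⟩
        exact closure_mono h3 (h2 ⟨x, hx, rfl⟩)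
      · have hPn : f^[1+0] '' A ⊆ closure Uw :=
          (subset_iUnion (fun t => f^[1+t] '' A) 0).trans subset_closure
        have hGoodcl : Good a b (closure Uw) :=
          ⟨isCompact_Icc.of_isClosed_subset isClosed_closure
            (closure_minimal hUwsub isClosed_Icc), hUwpc.closure,
            closure_minimal hUwsub isClosed_Icc,
            fun hss => (hQgood (1+0)).2.2.2 (hss.anti hPn)⟩
        exact hGoodcl.interior_nonempty
    have hxbU : xb ∈ Uw := subset_of_dense_preconn hab hUwsub hUwpc hUwcl hxbI
    obtain ⟨t₂, ht₂⟩ := mem_iUnion.1 hxbU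
    exact ⟨1 + t₂, by omega, (hQgood _).Icc_subset (hAanchor _) ht₂⟩
  obtain ⟨j, hj1, hAj⟩ := hself
  have hjpos : 0 < j := hj1
  -- growth cycle
  set E : ℕ → ℕ → Set ℝ := fun r t => f^[r + j*t] '' A with hEd
  have hEgood : ∀ r t, Good a b (E r t) := fun r t => hAgood.iter hab htr hf hmaps _
  have hEanchor : ∀ r t, w ∈ E r t := fun r t => hAanchor _
  have hEmono : ∀ r t, E r t ⊆ E r (t+1) := by
    intro r t
    have h1 : E r (t+1) = f^[r + j*t] '' (f^[j] '' A) := by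
      simp only [hEd]
      rw [← image_iter_add, show (r + j*t) + j = r + j*(t+1) by ring]
    rw [h1]
    exact image_mono hAj
  have hEmono' : ∀ r t t', t ≤ t' → E r t ⊆ E r t' := by
    intro r t t' h
    obtain ⟨d, rfl⟩ := Nat.exists_eq_add_of_le h
    induction d with
    | zero => exact subset_rfl
    | succ d ih =>
      refine (ih (Nat.le_add_right _ _)).trans ?_
      exact hEmono r (t + d)
  set Bg : ℕ → Set ℝ := fun r => closure (⋃ t, E r t) with hBgd
  have hBgUsub : ∀ r, (⋃ t, E r t) ⊆ Icc a b := fun r =>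
    iUnion_subset fun t => (hEgood r t).2.2.1
  have hBgpcU : ∀ r, IsPreconnected (⋃ t, E r t) := fun r =>
    isPreconnected_iUnion ⟨w, mem_iInter.2 (hEanchor r)⟩ fun t => (hEgood r t).2.1
  have hBgsub : ∀ r, Bg r ⊆ Icc a b := fun r => closure_minimal (hBgUsub r) isClosed_Icc
  have hBggood : ∀ r, Good a b (Bg r) := fun r =>
    ⟨isCompact_Icc.of_isClosed_subset isClosed_closure (hBgsub r), (hBgpcU r).closure, hBgsub r,
      fun hss => (hEgood r 0).2.2.2 (hss.anti ((subset_iUnion (E r) 0).trans subset_closure))⟩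
  have hBgper : ∀ r, Bg (r + j) = Bg r := by
    intro r
    have hUeq : (⋃ t, E (r+j) t) = ⋃ t, E r t := by
      apply subset_antisymm
      · refine iUnion_subset fun t => ?_
        have h1 : E (r+j) t = E r (t+1) := by
          simp only [hEd]; rw [show r + j + j*t = r + j*(t+1) by ring]
        rw [h1]; exact subset_iUnion (E r) (t+1)
      · refine iUnion_subset fun t => ?_
        refine (hEmono r t).trans ?_
        have h1 : E r (t+1) = E (r+j) t := by
          simp only [hEd]; rw [show r + j*(t+1) = r + j + j*t by ring]
        rw [h1]; exact subset_iUnion (E (r+j)) t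
    simp only [hBgd]; rw [hUeq]
  have hBgmap : ∀ r, f '' Bg r ⊆ Bg (r+1) := by
    intro r
    have h2 : f '' closure (⋃ t, E r t) ⊆ closure (f '' ⋃ t, E r t) :=
      ContinuousOn.image_closure (hf.mono (hBgsub r))
    have h3 : f '' (⋃ t, E r t) = ⋃ t, E (r+1) t := by
      simp only [image_iUnion]
      refine iUnion_congr fun t => ?_
      simp only [hEd]
      rw [← image_iter_succ, show r + j*t + 1 = r + 1 + j*t by ring]
    rw [h3] at h2
    exact h2
  have hBgeq := cycle_eq hab hf hmaps htr hz hfz hc hside hjpos Bg hBgper hBggood hBgmap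
  -- extraction of covering times
  have huI : u ∈ Ioo a b := hL (left_mem_Icc.2 huv.le)
  have hvI : v ∈ Ioo a b := hL (right_mem_Icc.2 huv.le)
  have hcov : ∀ r, ∃ T, ∀ t, T ≤ t → Icc u v ⊆ E r t := by
    intro r
    have hcl : closure (⋃ t, E r t) = Icc a b := by
      have h1 := hBgeq r
      simp only [hBgd] at h1
      exact h1
    have hU : Ioo a b ⊆ ⋃ t, E r t :=
      subset_of_dense_preconn hab (hBgUsub r) (hBgpcU r) hcl
    obtain ⟨tu, htu⟩ := mem_iUnion.1 (hU huI)
    obtain ⟨tv, htv⟩ := mem_iUnion.1 (hU hvI)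
    refine ⟨max tu tv, fun t ht => ?_⟩
    have h1 : u ∈ E r t := hEmono' r tu t (le_trans (le_max_left _ _) ht) htu
    have h2 : v ∈ E r t := hEmono' r tv t (le_trans (le_max_right _ _) ht) htv
    exact (hEgood r t).Icc_subset h1 h2
  choose T hT using hcov
  set TT := (Finset.range j).sup T with hTTd
  refine ⟨s₁ + j*(TT+1), fun n hn => ?_⟩
  have hs₁n : s₁ ≤ n := le_trans (Nat.le_add_right _ _) hn
  set d := n - s₁ with hdd
  have hnd : n = s₁ + d := by omega
  have hdge : j*(TT+1) ≤ d := by omega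
  set r := d % j with hrd
  set t := d / j with htd
  have hrj : r < j := Nat.mod_lt _ hjpos
  have hdrt : d = r + j*t := by rw [hrd, htd]; exact (Nat.mod_add_div d j).symm
  have hTt : T r ≤ t := by
    have h1 : T r ≤ TT := Finset.le_sup (Finset.mem_range.2 hrj)
    have h2 : j*(TT+1) ≤ r + j*t := hdrt ▸ hdge
    have h3 : TT < t := by
      by_contra hcon
      push_neg at hcon
      have h4 : r + j*t < j*(TT+1) := by
        calc r + j*t < j + j*t := by omega
        _ = j*(t+1) := by ring
        _ ≤ j*(TT+1) := Nat.mul_le_mul_left j (by omega)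
      omega
    omega
  have hfin : Icc u v ⊆ E r t := hT r t hTt
  refine hfin.trans ?_
  have hE1 : E r t = f^[d] '' A := by simp only [hEd]; rw [← hdrt]
  rw [hE1]
  have h2 : f^[d] '' A ⊆ f^[d] '' (Pc s₁) := image_mono hs₁
  refine h2.trans ?_
  have h3 : f^[d] '' (Pc s₁) = f^[n] '' (Icc p q) := by
    simp only [hPcd, hJd]
    rw [← image_iter_add, show d + s₁ = n by omega]
  rw [h3]



end EIC

/-- For a continuous transitive map on `[a,b]` with a fixed point `z` and a point
`c ≠ z` with both `c` and `f c` strictly on the same side of `z`: for any compact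
subinterval `K` of `[a,b]` and any compact subinterval `L` of `(a,b)`, the images
`f^[n] '' K` contain `L` for all sufficiently large `n`. -/
theorem eventually_image_covers
    (a b : ℝ) (hab : a < b) (f : ℝ → ℝ)
    (hf : ContinuousOn f (Set.Icc a b)) (hmaps : Set.MapsTo f (Set.Icc a b) (Set.Icc a b))
    (htrans : ∀ U V : Set ℝ, IsOpen U → IsOpen V →
      (U ∩ Set.Icc a b).Nonempty → (V ∩ Set.Icc a b).Nonempty →
      ∃ k : ℕ, 1 ≤ k ∧ ((f^[k] '' (U ∩ Set.Icc a b)) ∩ (V ∩ Set.Icc a b)).Nonempty)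
    (z : ℝ) (hz : z ∈ Set.Icc a b) (hfz : f z = z)
    (c : ℝ) (hc : c ∈ Set.Icc a b) (hcz : c ≠ z)
    (hside : (z < c ∧ z < f c) ∨ (c < z ∧ f c < z)) :
    ∀ p q u v : ℝ, p < q → u < v → Set.Icc p q ⊆ Set.Icc a b → Set.Icc u v ⊆ Set.Ioo a b →
      ∃ N : ℕ, ∀ n : ℕ, N ≤ n → Set.Icc u v ⊆ f^[n] '' Set.Icc p q :=
  EIC.main hab hf hmaps htrans hz hfz hc hcz hside
end
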